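/- arXiv:0803.1041 — 6 statements merged into one kernel-verified Lean document; each statement's English description precedes it below -/
import Mathlib

section
/- Let G be a disjoint union of oriented edges, H a sewing graph, and f : G → H a sewing morphism. Then the f-preimage of every degree-2 vertex of H is either a pair consisting of a head vertex and a tail vertex lying in two distinct connected components of G, or a single interior point of an edge of G; and the f-preimage of every degree-3 vertex of H consists of exactly two points, namely an interior point of one edge of G and an end vertex of a different edge of G. -/
/-!  A combinatorial model for the sewing-graph calculus of
Tamanoi, "Open-closed TQFT string operations for disc cobordisms".

A `Digraph'` is a finite directed multigraph.  Points of its geometric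
realization are either vertices or interior points of edges; a map of
realizations which is injective on edge interiors is encoded
combinatorially by a `PreMor`: a map on vertices together with, for each
edge of the source, the directed edge path of the target that the edge
traverses.  The multiset `intOcc F` records, with multiplicity, the
vertices of the target which are images of interior points of edges of
the source (the "type (II)" points). -/

/-- A finite directed multigraph. -/
structure Digraph' where
  V : Type
  E : Type
  [fintV : Fintype V]
  [fintE : Fintype E]
  [decV : DecidableEq V]
  [decE : DecidableEq E]
  src : E → V
  tgt : E → V

attribute [instance] Digraph'.fintV Digraph'.fintE Digraph'.decV Digraph'.decE

namespace Digraph'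

/-- Out-degree of a vertex. -/
def outdeg (G : Digraph') (v : G.V) : ℕ :=
  (Finset.univ.filter fun e : G.E => G.src e = v).card

/-- In-degree of a vertex. -/
def indeg (G : Digraph') (v : G.V) : ℕ :=
  (Finset.univ.filter fun e : G.E => G.tgt e = v).card

/-- Total degree of a vertex. -/
def deg (G : Digraph') (v : G.V) : ℕ := G.outdeg v + G.indeg v

/-- Incidence of a vertex and an edge. -/
def Incid (G : Digraph') (v : G.V) (e : G.E) : Prop := G.src e = v ∨ G.tgt e = v

/-- The underlying (simple) adjacency graph. -/
def toSimple (G : Digraph') : SimpleGraph G.V where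
  Adj u v := u ≠ v ∧ ∃ e : G.E, (G.src e = u ∧ G.tgt e = v) ∨ (G.src e = v ∧ G.tgt e = u)
  symm := by
    constructor
    rintro u v ⟨hne, e, he⟩
    exact ⟨hne.symm, e, he.symm⟩
  loopless := by constructor; rintro v ⟨hne, -⟩; exact hne rfl

/-- The underlying undirected multigraph is a forest: no loops, no parallel
edges and the underlying simple graph is acyclic. -/
def IsForest (G : Digraph') : Prop :=
  (∀ e : G.E, G.src e ≠ G.tgt e) ∧
  (∀ e₁ e₂ : G.E, ({G.src e₁, G.tgt e₁} : Finset G.V) = {G.src e₂, G.tgt e₂} → e₁ = e₂) ∧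
  G.toSimple.IsAcyclic

/-- A sewing graph: a finite directed forest where every vertex has degree at
most `3`, and every vertex of degree `2` or `3` has at least one incoming and
one outgoing edge. -/
def IsSewingGraph (G : Digraph') : Prop :=
  G.IsForest ∧ (∀ v : G.V, G.deg v ≤ 3) ∧
  ∀ v : G.V, 2 ≤ G.deg v → 1 ≤ G.indeg v ∧ 1 ≤ G.outdeg v

/-- A disjoint union of oriented edges: every component is a single oriented
edge with two distinct end vertices (no loops and every vertex is incident to
exactly one edge). -/
def IsEdgeUnion (G : Digraph') : Prop :=
  (∀ e : G.E, G.src e ≠ G.tgt e) ∧ ∀ v : G.V, ∃! e : G.E, G.Incid v e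

/-- An end vertex (a vertex of degree `1`). -/
def IsEndVert (G : Digraph') (v : G.V) : Prop := G.deg v = 1

/-- A head (terminal) vertex: degree `1` and target of an edge. -/
def IsHeadVert (G : Digraph') (v : G.V) : Prop := G.deg v = 1 ∧ ∃ e : G.E, G.tgt e = v

/-- A tail (initial) vertex: degree `1` and source of an edge. -/
def IsTailVert (G : Digraph') (v : G.V) : Prop := G.deg v = 1 ∧ ∃ e : G.E, G.src e = v

/-- Union of directed path graphs. -/
def IsPathUnion (G : Digraph') : Prop :=
  G.IsForest ∧ (∀ v : G.V, G.deg v ≤ 2) ∧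
  ∀ v : G.V, G.deg v = 2 → G.indeg v = 1 ∧ G.outdeg v = 1

end Digraph'

/-- Combinatorial data of a map of graphs: a map on vertices, and for every
edge of the source the directed edge path of the target it traverses. -/
structure PreMor (G H : Digraph') where
  vmap : G.V → H.V
  epath : G.E → List H.E

namespace PreMor

/-- The identity morphism. -/
def idm (G : Digraph') : PreMor G G := ⟨fun v => v, fun e => [e]⟩

/-- Composition of combinatorial graph maps. -/
def comp {G H K : Digraph'} (F : PreMor G H) (F' : PreMor H K) : PreMor G K :=
  ⟨fun v => F'.vmap (F.vmap v), fun e => (F.epath e).flatMap F'.epath⟩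

end PreMor

/-- The multiset of occurrences of vertices of `H` as images of *interior*
points of edges of `G` (internal vertices of the edge paths). -/
def intOcc {G H : Digraph'} (F : PreMor G H) : Multiset H.V :=
  Finset.univ.val.bind fun e : G.E => ((F.epath e).tail.map H.src : Multiset H.V)

/-- The multiset of occurrences of edges of `H` in the edge paths. -/
def edgeOcc {G H : Digraph'} (F : PreMor G H) : Multiset H.E :=
  Finset.univ.val.bind fun e : G.E => (F.epath e : Multiset H.E)

/-- `F` is a (surjective, orientation preserving, interior-injective) map of
graphs: every edge traverses a nonempty directed edge path joining the images
of its end points, every edge of `H` is traversed exactly once, and every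
vertex of `H` is an image. -/
structure IsGraphMor {G H : Digraph'} (F : PreMor G H) : Prop where
  nonempty : ∀ e : G.E, F.epath e ≠ []
  chain : ∀ e : G.E, (F.epath e).Chain' fun a b => H.tgt a = H.src b
  head_src : ∀ (e : G.E) (a : H.E), (F.epath e).head? = some a → H.src a = F.vmap (G.src e)
  last_tgt : ∀ (e : G.E) (a : H.E), (F.epath e).getLast? = some a → H.tgt a = F.vmap (G.tgt e)
  cover : edgeOcc F = (Finset.univ : Finset H.E).val
  vsurj : ∀ w : H.V, (∃ v : G.V, F.vmap v = w) ∨ 0 < Multiset.count w (intOcc F)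

/-- The quotient map identifying exactly the two vertices `a` and `b`
(used for moves of type (I) and (III)). -/
def IsIdentMove {G H : Digraph'} (F : PreMor G H) (a b : G.V) : Prop :=
  IsGraphMor F ∧ a ≠ b ∧ F.vmap a = F.vmap b ∧
  (∀ u v : G.V, F.vmap u = F.vmap v → u = v ∨ ({u, v} : Set G.V) = {a, b}) ∧
  (∀ w : H.V, ∃ v : G.V, F.vmap v = w) ∧
  ∀ e : G.E, ∃ a' : H.E, F.epath e = [a']

/-- The map inserting one new vertex at an interior point of the edge `e₀`
(a move of type (II)). -/
def IsInsertMove {G H : Digraph'} (F : PreMor G H) (e₀ : G.E) : Prop :=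
  IsGraphMor F ∧ Function.Injective F.vmap ∧
  (F.epath e₀).length = 2 ∧
  (∀ e : G.E, e ≠ e₀ → ∃ a : H.E, F.epath e = [a]) ∧
  (∀ w : H.V, (∃ v : G.V, F.vmap v = w) ∨ w ∈ (F.epath e₀).tail.map H.src) ∧
  ∀ v : G.V, F.vmap v ∉ (F.epath e₀).tail.map H.src

/-- A sewing morphism: a map which decomposes into a finite sequence of maps
between sewing graphs of the types (I) (identify a head vertex of one
component with a tail vertex of a different component), (II) (insert a vertex
at an interior point of an edge), and (III) (identify an end vertex of one
component with a degree-2 vertex, arising from a previous type (II) map, of a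
different component). -/
inductive IsSewingMor : ∀ (G H : Digraph'), PreMor G H → Prop
  | refl (G : Digraph') : IsSewingMor G G (PreMor.idm G)
  | stepI {G H K : Digraph'} {F : PreMor G H} {F' : PreMor H K}
      (hF : IsSewingMor G H F) (hH : H.IsSewingGraph) (a b : H.V)
      (hmove : IsIdentMove F' a b) (ha : H.IsHeadVert a) (hb : H.IsTailVert b)
      (hsep : ¬ H.toSimple.Reachable a b) (hK : K.IsSewingGraph) :
      IsSewingMor G K (F.comp F')
  | stepII {G H K : Digraph'} {F : PreMor G H} {F' : PreMor H K}
      (hF : IsSewingMor G H F) (hH : H.IsSewingGraph) (e₀ : H.E)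
      (hmove : IsInsertMove F' e₀) (hK : K.IsSewingGraph) :
      IsSewingMor G K (F.comp F')
  | stepIII {G H K : Digraph'} {F : PreMor G H} {F' : PreMor H K}
      (hF : IsSewingMor G H F) (hH : H.IsSewingGraph) (a b : H.V)
      (hmove : IsIdentMove F' a b) (ha : H.IsEndVert a) (hb : H.deg b = 2)
      (hbII : (∀ v : G.V, F.vmap v ≠ b) ∧ Multiset.count b (intOcc F) = 1)
      (hsep : ¬ H.toSimple.Reachable a b) (hK : K.IsSewingGraph) :
      IsSewingMor G K (F.comp F')

/-- A sewing morphism between a disjoint union of oriented edges and a sewing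
graph. -/
def IsSewingMorphism (G H : Digraph') (F : PreMor G H) : Prop :=
  G.IsEdgeUnion ∧ H.IsSewingGraph ∧ IsSewingMor G H F

/-- The edges `x` and `y` are traversed consecutively (in this order) by some
edge of the source. -/
def consecIn {G H : Digraph'} (F : PreMor G H) (x y : H.E) : Prop :=
  ∃ (e : G.E) (l₁ l₂ : List H.E), F.epath e = l₁ ++ x :: y :: l₂

/-- A degree-2 vertex of type (II) with respect to `F`: its preimage is a
single interior point of an edge. -/
def IsTypeIIVert {G H : Digraph'} (F : PreMor G H) (w : H.V) : Prop :=
  H.deg w = 2 ∧ (∀ v : G.V, F.vmap v ≠ w) ∧ Multiset.count w (intOcc F) = 1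

/-- `G' , F'` is the canonical extension `G →(F) H ←(F') G'` of the sewing
morphism `F : G → H`:  over vertices of `H` of degree at most one, `F'` has a
single end-vertex preimage; over type (I) degree-2 vertices (two vertices of
`G` identified by `F`), `F'` has a single interior-point preimage; over
type (II) degree-2 vertices (interior points of edges of `G`), `F'` has
exactly two end-vertex preimages; and over every degree-3 vertex, `F'` has
exactly one interior point and one end vertex as preimages, where the edge
pairings through the vertex are rearranged according to the orientation of
the third edge `e₁`. -/
def IsCanonicalExt (G H G' : Digraph') (F : PreMor G H) (F' : PreMor G' H) : Prop :=
  IsGraphMor F' ∧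
  (∀ w : H.V, H.deg w ≤ 1 →
    (∃! v : G'.V, F'.vmap v = w) ∧ Multiset.count w (intOcc F') = 0) ∧
  (∀ w : H.V, H.deg w = 2 → (∃ v : G.V, F.vmap v = w) →
    (∀ v : G'.V, F'.vmap v ≠ w) ∧ Multiset.count w (intOcc F') = 1) ∧
  (∀ w : H.V, H.deg w = 2 → (∀ v : G.V, F.vmap v ≠ w) →
    Multiset.count w (intOcc F') = 0 ∧
    ∃ a b : G'.V, a ≠ b ∧ F'.vmap a = w ∧ F'.vmap b = w ∧
      ∀ v : G'.V, F'.vmap v = w → v = a ∨ v = b) ∧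
  ∀ w : H.V, H.deg w = 3 →
    (∃! v : G'.V, F'.vmap v = w) ∧ Multiset.count w (intOcc F') = 1 ∧
    ∀ e₁ e₂ e₃ : H.E, e₁ ≠ e₂ → e₁ ≠ e₃ → H.Incid w e₁ →
      H.tgt e₂ = w → H.src e₃ = w → consecIn F e₂ e₃ →
      (H.tgt e₁ = w → consecIn F' e₁ e₃) ∧ (H.src e₁ = w → consecIn F' e₂ e₁)

/-! ### Auxiliary lemmas -/

section MultisetAux

open Multiset

lemma aux_countP_or {α : Type} (p q : α → Prop) [DecidablePred p] [DecidablePred q]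
    (s : Multiset α) (hd : ∀ x ∈ s, ¬ (p x ∧ q x)) :
    s.countP (fun x => p x ∨ q x) = s.countP p + s.countP q := by
  induction s using Multiset.induction with
  | empty => simp
  | cons x s ih =>
    have hx := hd x (Multiset.mem_cons_self x s)
    rw [Multiset.countP_cons, Multiset.countP_cons, Multiset.countP_cons,
      ih (fun y hy => hd y (Multiset.mem_cons_of_mem hy))]
    by_cases hp : p x
    · by_cases hq : q x
      · exact absurd ⟨hp, hq⟩ hx
      · simp [hp, hq]; omega
    · by_cases hq : q x
      · simp [hp, hq]; omega
      · simp [hp, hq]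

lemma aux_count_map_fiber {α β : Type} [DecidableEq α] [DecidableEq β]
    (f : α → β) (s : Multiset α) (w : α) (w' : β) (h : ∀ u, f u = w' ↔ u = w) :
    (s.map f).count w' = s.count w := by
  rw [Multiset.count_map, ← Multiset.countP_eq_card_filter,
    Multiset.count, Multiset.countP_congr rfl (p' := fun u => w = u)]
  intro x _
  simp only [eq_iff_iff]
  constructor
  · intro hx; exact ((h x).mp hx.symm).symm
  · intro hx; exact ((h x).mpr hx.symm).symm

lemma aux_count_map_pair {α β : Type} [DecidableEq α] [DecidableEq β]
    (f : α → β) (s : Multiset α) (a b : α) (hab : a ≠ b) (w' : β)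
    (h : ∀ u, f u = w' ↔ (u = a ∨ u = b)) :
    (s.map f).count w' = s.count a + s.count b := by
  rw [Multiset.count_map, ← Multiset.countP_eq_card_filter,
    Multiset.countP_congr rfl (p' := fun u => u = a ∨ u = b),
    aux_countP_or _ _ s (fun x _ hx => hab (hx.1.symm.trans hx.2))]
  · have ha : s.count a = s.countP (fun u => u = a) :=
      Multiset.countP_congr rfl (fun x _ => by simp [eq_comm])
    have hb : s.count b = s.countP (fun u => u = b) :=
      Multiset.countP_congr rfl (fun x _ => by simp [eq_comm])
    rw [ha, hb]
  · intro x _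
    simp only [eq_iff_iff]
    constructor
    · intro hx; exact (h x).mp hx.symm
    · intro hx; exact ((h x).mpr hx).symm

lemma aux_countP_bind {α β : Type} (p : β → Prop) [DecidablePred p]
    (s : Multiset α) (f : α → Multiset β) :
    (s.bind f).countP p = (s.map fun a => (f a).countP p).sum := by
  induction s using Multiset.induction with
  | empty => simp
  | cons x s ih => rw [Multiset.cons_bind, Multiset.countP_add, Multiset.map_cons,
      Multiset.sum_cons, ih]

lemma aux_sum_ite_countP {α : Type} (q : α → Prop) [DecidablePred q] (s : Multiset α) :
    (s.map fun a => if q a then 1 else 0).sum = s.countP q := by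
  induction s using Multiset.induction with
  | empty => simp
  | cons x s ih => rw [Multiset.map_cons, Multiset.sum_cons, ih, Multiset.countP_cons]; omega

end MultisetAux

section ReachAux

lemma aux_reach_src_tgt (H : Digraph') (hloop : ∀ x : H.E, H.src x ≠ H.tgt x) (x : H.E) :
    H.toSimple.Reachable (H.src x) (H.tgt x) :=
  SimpleGraph.Adj.reachable ⟨hloop x, x, Or.inl ⟨rfl, rfl⟩⟩

lemma aux_chain_reach (H : Digraph') (hloop : ∀ x : H.E, H.src x ≠ H.tgt x) :
    ∀ l : List H.E, l.Chain' (fun a b => H.tgt a = H.src b) →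
      ∀ h, l.head? = some h →
        (∀ x ∈ l, H.toSimple.Reachable (H.src h) (H.src x)) ∧
        (∀ a, l.getLast? = some a → H.toSimple.Reachable (H.src h) (H.tgt a))
  | [], _, h, hh => by simp at hh
  | [x], _, h, hh => by
    simp only [List.head?_cons, Option.some.injEq] at hh
    subst hh
    constructor
    · intro y hy
      simp only [List.mem_singleton] at hy
      subst hy
      exact SimpleGraph.Reachable.refl _
    · intro a ha
      simp only [List.getLast?_singleton, Option.some.injEq] at ha
      subst ha
      exact aux_reach_src_tgt H hloop _
  | x :: y :: t, hch, h, hh => by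
    simp only [List.head?_cons, Option.some.injEq] at hh
    subst hh
    unfold List.Chain' at hch; rw [List.isChain_cons_cons] at hch
    obtain ⟨hxy, hch'⟩ := hch
    have ih := aux_chain_reach H hloop (y :: t) hch' y rfl
    have step : H.toSimple.Reachable (H.src x) (H.src y) := by
      rw [← hxy]; exact aux_reach_src_tgt H hloop x
    refine ⟨?_, ?_⟩
    · intro z hz
      rcases List.mem_cons.mp hz with rfl | hz
      · exact SimpleGraph.Reachable.refl _
      · exact step.trans (ih.1 z hz)
    · intro a ha
      rw [List.getLast?_cons_cons] at ha
      exact step.trans (ih.2 a ha)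

lemma aux_mor_head_last {G H : Digraph'} {F : PreMor G H} (hm : IsGraphMor F) (e : G.E) :
    ∃ h a, (F.epath e).head? = some h ∧ (F.epath e).getLast? = some a := by
  rcases hl : F.epath e with _ | ⟨x, t⟩
  · exact absurd hl (hm.nonempty e)
  · exact ⟨x, (x :: t).getLast (by simp), rfl, List.getLast?_eq_getLast (l := x :: t) (by simp)⟩

lemma aux_mor_reach_endpoints {G H : Digraph'} {F : PreMor G H} (hm : IsGraphMor F)
    (hloop : ∀ x : H.E, H.src x ≠ H.tgt x) (e : G.E) :
    H.toSimple.Reachable (F.vmap (G.src e)) (F.vmap (G.tgt e)) := by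
  obtain ⟨h, a, hh, ha⟩ := aux_mor_head_last hm e
  rw [← hm.head_src e h hh, ← hm.last_tgt e a ha]
  exact (aux_chain_reach H hloop _ (hm.chain e) h hh).2 a ha

lemma aux_mor_reach_interior {G H : Digraph'} {F : PreMor G H} (hm : IsGraphMor F)
    (hloop : ∀ x : H.E, H.src x ≠ H.tgt x) (e : G.E) {w : H.V}
    (hw : w ∈ (F.epath e).tail.map H.src) :
    H.toSimple.Reachable (F.vmap (G.src e)) w := by
  obtain ⟨x, hx, rfl⟩ := List.mem_map.mp hw
  obtain ⟨h, a, hh, ha⟩ := aux_mor_head_last hm e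
  rw [← hm.head_src e h hh]
  exact (aux_chain_reach H hloop _ (hm.chain e) h hh).1 x (List.mem_of_mem_tail hx)

lemma aux_vmap_reach {G H : Digraph'} {F : PreMor G H} (hm : IsGraphMor F)
    (hloop : ∀ x : H.E, H.src x ≠ H.tgt x) {u v : G.V} (h : G.toSimple.Reachable u v) :
    H.toSimple.Reachable (F.vmap u) (F.vmap v) := by
  obtain ⟨p⟩ := h
  induction p with
  | nil => exact SimpleGraph.Reachable.refl _
  | @cons u' v' w' adj p ih =>
    obtain ⟨hne, e, he⟩ := adj
    refine SimpleGraph.Reachable.trans ?_ ih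
    rcases he with ⟨h1, h2⟩ | ⟨h1, h2⟩
    · rw [← h1, ← h2]; exact aux_mor_reach_endpoints hm hloop e
    · rw [← h1, ← h2]; exact (aux_mor_reach_endpoints hm hloop e).symm

end ReachAux

section CompAux

lemma aux_flatMap_ne_nil {α β : Type} (f : α → List β) (hne : ∀ x, f x ≠ [])
    (l : List α) (hl : l ≠ []) : l.flatMap f ≠ [] := by
  cases l with
  | nil => exact absurd rfl hl
  | cons x t =>
    rw [List.flatMap_cons]
    intro h
    rcases List.append_eq_nil_iff.mp h with ⟨h1, -⟩
    exact hne x h1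

lemma aux_head?_flatMap {α β : Type} (f : α → List β) (hne : ∀ x, f x ≠ [])
    (x : α) (t : List α) : ((x :: t).flatMap f).head? = (f x).head? := by
  rw [List.flatMap_cons, List.head?_append_of_ne_nil _ (hne x)]

lemma aux_getLast?_flatMap {α β : Type} (f : α → List β) (hne : ∀ x, f x ≠ []) :
    ∀ (l : List α) (x : α), l.getLast? = some x → (l.flatMap f).getLast? = (f x).getLast?
  | [], x, hx => by simp at hx
  | [y], x, hx => by
    simp only [List.getLast?_singleton, Option.some.injEq] at hx
    subst hx
    rw [List.flatMap_cons, List.flatMap_nil, List.append_nil]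
  | y :: z :: t, x, hx => by
    rw [List.getLast?_cons_cons] at hx
    rw [List.flatMap_cons,
      List.getLast?_append_of_ne_nil _ (aux_flatMap_ne_nil f hne (z :: t) (by simp))]
    exact aux_getLast?_flatMap f hne (z :: t) x hx

lemma aux_chain'_flatMap {α β : Type} {R : α → α → Prop} {R' : β → β → Prop} (f : α → List β)
    (hne : ∀ x, f x ≠ []) (hch : ∀ x, (f x).Chain' R')
    (hjoin : ∀ x y, R x y → ∀ a b, (f x).getLast? = some a → (f y).head? = some b → R' a b) :
    ∀ l : List α, l.Chain' R → (l.flatMap f).Chain' R'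
  | [], _ => by unfold List.Chain'; simp
  | x :: t, hc => by
    rw [List.flatMap_cons]; unfold List.Chain'; rw [List.isChain_append]
    refine ⟨hch x, aux_chain'_flatMap f hne hch hjoin t (List.IsChain.tail hc), ?_⟩
    intro a ha b hb
    cases t with
    | nil => simp at hb
    | cons y t' =>
      rw [aux_head?_flatMap f hne y t'] at hb
      exact hjoin x y (List.isChain_cons_cons.mp hc).1 a b (Option.mem_def.mp ha) (Option.mem_def.mp hb)

lemma aux_map_src_cons (K : Digraph') (m : List K.E) (h : K.E) (hh : m.head? = some h) :
    ((m.map K.src : List K.V) : Multiset K.V) = K.src h ::ₘ ((m.tail.map K.src : List K.V) : Multiset K.V) := by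
  cases m with
  | nil => simp at hh
  | cons a t =>
    simp only [List.head?_cons, Option.some.injEq] at hh
    subst hh
    rfl

lemma aux_interior_flatMap {H K : Digraph'} (F' : PreMor H K)
    (hne : ∀ x, F'.epath x ≠ [])
    (hhd : ∀ x a, (F'.epath x).head? = some a → K.src a = F'.vmap (H.src x)) :
    ∀ l : List H.E,
      (((l.flatMap F'.epath).tail.map K.src : List K.V) : Multiset K.V) =
        ((l : Multiset H.E).bind fun x =>
            (((F'.epath x).tail.map K.src : List K.V) : Multiset K.V))
          + (((l.tail.map H.src).map F'.vmap : List K.V) : Multiset K.V)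
  | [] => by simp
  | [x] => by
    rw [List.flatMap_cons, List.flatMap_nil, List.append_nil]
    simp
  | x :: y :: t => by
    have ih := aux_interior_flatMap F' hne hhd (y :: t)
    have hflat_ne : (y :: t).flatMap F'.epath ≠ [] :=
      aux_flatMap_ne_nil F'.epath hne (y :: t) (by simp)
    obtain ⟨h1, hh1⟩ : ∃ h1, (F'.epath y).head? = some h1 := by
      rcases hq : F'.epath y with _ | ⟨h1, q⟩
      · exact absurd hq (hne y)
      · exact ⟨h1, rfl⟩
    have hh1' : ((y :: t).flatMap F'.epath).head? = some h1 := by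
      rw [aux_head?_flatMap F'.epath hne y t]; exact hh1
    rcases hp : F'.epath x with _ | ⟨h0, p'⟩
    · exact absurd hp (hne x)
    · have lhs1 : (x :: y :: t).flatMap F'.epath = (h0 :: p') ++ (y :: t).flatMap F'.epath := by
        rw [List.flatMap_cons, hp]
      rw [lhs1]
      have lhs2 : (((h0 :: p') ++ (y :: t).flatMap F'.epath).tail) =
          p' ++ (y :: t).flatMap F'.epath := rfl
      rw [lhs2, List.map_append]
      have coeadd : ((p'.map K.src ++ ((y :: t).flatMap F'.epath).map K.src : List K.V) : Multiset K.V)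
          = ((p'.map K.src : List K.V) : Multiset K.V)
            + ((((y :: t).flatMap F'.epath).map K.src : List K.V) : Multiset K.V) := by
        exact_mod_cast rfl
      rw [coeadd, aux_map_src_cons K _ h1 hh1', ih]
      have rhs1 : ((x :: y :: t : List H.E) : Multiset H.E).bind
          (fun x => (((F'.epath x).tail.map K.src : List K.V) : Multiset K.V))
          = (((F'.epath x).tail.map K.src : List K.V) : Multiset K.V)
            + ((y :: t : List H.E) : Multiset H.E).bind
              (fun x => (((F'.epath x).tail.map K.src : List K.V) : Multiset K.V)) := by
        rw [← Multiset.cons_coe, Multiset.cons_bind]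
      rw [rhs1, hp]
      have rhs2 : ((((x :: y :: t).tail.map H.src).map F'.vmap : List K.V) : Multiset K.V)
          = F'.vmap (H.src y) ::ₘ (((t.map H.src).map F'.vmap : List K.V) : Multiset K.V) := by
        simp only [List.tail_cons, List.map_cons]
        rw [← Multiset.cons_coe]
      have ihr : (((((y :: t)).tail.map H.src).map F'.vmap : List K.V) : Multiset K.V)
          = (((t.map H.src).map F'.vmap : List K.V) : Multiset K.V) := rfl
      rw [rhs2, hhd y h1 hh1]
      rw [ihr]
      simp only [List.tail_cons]
      simp only [← Multiset.singleton_add]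
      abel

end CompAux

section CompMor

variable {G H K : Digraph'} {F : PreMor G H} {F' : PreMor H K}

lemma aux_comp_epath (e : G.E) : (F.comp F').epath e = (F.epath e).flatMap F'.epath := rfl

lemma aux_comp_vmap (v : G.V) : (F.comp F').vmap v = F'.vmap (F.vmap v) := rfl

lemma aux_edgeOcc_eq : edgeOcc F = Finset.univ.val.bind (fun e : G.E => (F.epath e : Multiset H.E)) := rfl

lemma aux_intOcc_eq : intOcc F =
    Finset.univ.val.bind (fun e : G.E => (((F.epath e).tail.map H.src : List H.V) : Multiset H.V)) := rfl

lemma aux_intOcc_comp (hcov : edgeOcc F = (Finset.univ : Finset H.E).val)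
    (hne : ∀ x, F'.epath x ≠ [])
    (hhd : ∀ x a, (F'.epath x).head? = some a → K.src a = F'.vmap (H.src x)) :
    intOcc (F.comp F') = intOcc F' + (intOcc F).map F'.vmap := by
  have step1 : intOcc (F.comp F') =
      Finset.univ.val.bind (fun e : G.E =>
        ((F.epath e : Multiset H.E).bind fun x =>
          (((F'.epath x).tail.map K.src : List K.V) : Multiset K.V))
        + ((((F.epath e).tail.map H.src).map F'.vmap : List K.V) : Multiset K.V)) := by
    rw [aux_intOcc_eq]
    congr 1
    funext e
    exact aux_interior_flatMap F' hne hhd (F.epath e)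
  rw [step1, Multiset.bind_add]
  congr 1
  · rw [← Multiset.bind_assoc, ← aux_edgeOcc_eq, hcov, ← aux_intOcc_eq]
  · have : ∀ e : G.E, ((((F.epath e).tail.map H.src).map F'.vmap : List K.V) : Multiset K.V)
        = (((F.epath e).tail.map H.src : List H.V) : Multiset H.V).map F'.vmap := by
      intro e; exact_mod_cast rfl
    rw [show (fun e : G.E => ((((F.epath e).tail.map H.src).map F'.vmap : List K.V) : Multiset K.V))
        = fun e : G.E => (((F.epath e).tail.map H.src : List H.V) : Multiset H.V).map F'.vmap
      from funext this]
    rw [← Multiset.map_bind, ← aux_intOcc_eq]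

lemma aux_mem_interior_comp (hne : ∀ x, F'.epath x ≠ [])
    (hhd : ∀ x a, (F'.epath x).head? = some a → K.src a = F'.vmap (H.src x))
    {e : G.E} {w : H.V} (hw : w ∈ (F.epath e).tail.map H.src) :
    F'.vmap w ∈ ((F.comp F').epath e).tail.map K.src := by
  have h := aux_interior_flatMap F' hne hhd (F.epath e)
  have h1 : F'.vmap w ∈ (((F.epath e).tail.map H.src).map F'.vmap : List K.V) :=
    List.mem_map_of_mem hw
  have h2 : F'.vmap w ∈ ((((F.epath e).flatMap F'.epath).tail.map K.src : List K.V) : Multiset K.V) := by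
    rw [h]
    exact Multiset.mem_add.mpr (Or.inr (Multiset.mem_coe.mpr h1))
  rw [aux_comp_epath]
  exact Multiset.mem_coe.mp h2

lemma aux_comp_mor (hF : IsGraphMor F) (hF' : IsGraphMor F') : IsGraphMor (F.comp F') := by
  constructor
  · intro e
    exact aux_flatMap_ne_nil F'.epath hF'.nonempty (F.epath e) (hF.nonempty e)
  · intro e
    refine aux_chain'_flatMap F'.epath hF'.nonempty hF'.chain ?_ (F.epath e) (hF.chain e)
    intro x y hxy a b ha hb
    rw [hF'.last_tgt x a ha, hF'.head_src y b hb, hxy]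
  · intro e a ha
    rcases hl : F.epath e with _ | ⟨x, t⟩
    · exact absurd hl (hF.nonempty e)
    · rw [aux_comp_epath, hl, aux_head?_flatMap F'.epath hF'.nonempty x t] at ha
      rw [hF'.head_src x a ha, hF.head_src e x (by rw [hl]; rfl), aux_comp_vmap]
  · intro e a ha
    obtain ⟨h, x, hh, hx⟩ := aux_mor_head_last hF e
    rw [aux_comp_epath, aux_getLast?_flatMap F'.epath hF'.nonempty (F.epath e) x hx] at ha
    rw [hF'.last_tgt x a ha, hF.last_tgt e x hx, aux_comp_vmap]
  · have : edgeOcc (F.comp F') =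
        Finset.univ.val.bind (fun e : G.E =>
          (F.epath e : Multiset H.E).bind fun x => (F'.epath x : Multiset K.E)) := by
      rw [aux_edgeOcc_eq]
      congr 1
      funext e
      rw [aux_comp_epath]
      exact (Multiset.coe_bind _ _).symm
    rw [this, ← Multiset.bind_assoc, ← aux_edgeOcc_eq, hF.cover, ← aux_edgeOcc_eq, hF'.cover]
  · intro w
    rcases hF'.vsurj w with ⟨v, hv⟩ | hpos
    · rcases hF.vsurj v with ⟨u, hu⟩ | hpos
      · exact Or.inl ⟨u, by rw [aux_comp_vmap, hu, hv]⟩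
      · refine Or.inr ?_
        rw [aux_intOcc_comp hF.cover hF'.nonempty hF'.head_src, Multiset.count_add]
        have : 0 < Multiset.count w ((intOcc F).map F'.vmap) := by
          rw [Multiset.count_pos]
          exact Multiset.mem_map.mpr ⟨v, Multiset.count_pos.mp hpos, hv⟩
        omega
    · refine Or.inr ?_
      rw [aux_intOcc_comp hF.cover hF'.nonempty hF'.head_src, Multiset.count_add]
      omega

end CompMor

section DegAux

lemma aux_outdeg_countP (K : Digraph') (w : K.V) :
    K.outdeg w = Multiset.countP (fun x => K.src x = w) (Finset.univ : Finset K.E).val := by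
  rw [Digraph'.outdeg, Multiset.countP_eq_card_filter]; rfl

lemma aux_indeg_countP (K : Digraph') (w : K.V) :
    K.indeg w = Multiset.countP (fun x => K.tgt x = w) (Finset.univ : Finset K.E).val := by
  rw [Digraph'.indeg, Multiset.countP_eq_card_filter]; rfl

lemma aux_bind_eq_sum {α β : Type} [DecidableEq α] (s : Finset α) (f : α → Multiset β) :
    s.val.bind f = ∑ x ∈ s, f x := rfl

lemma aux_deg_sum {H K : Digraph'} {F' : PreMor H K}
    (hcov : edgeOcc F' = (Finset.univ : Finset K.E).val)
    (p : K.E → Prop) [DecidablePred p] :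
    Multiset.countP p (Finset.univ : Finset K.E).val
      = ∑ x : H.E, Multiset.countP p (F'.epath x : Multiset K.E) := by
  rw [← hcov, aux_edgeOcc_eq, aux_countP_bind]; rfl

end DegAux

section IdentAux

variable {H K : Digraph'} {F' : PreMor H K} {a b : H.V}

lemma aux_ident_fiber_ne (hmv : IsIdentMove F' a b) {w u : H.V} (hwa : w ≠ a) (hwb : w ≠ b) :
    F'.vmap u = F'.vmap w ↔ u = w := by
  constructor
  · intro h
    rcases hmv.2.2.2.1 u w h with h' | h'
    · exact h'
    · exfalso
      have hw : w ∈ ({a, b} : Set H.V) := by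
        rw [← h']; exact Set.mem_insert_iff.mpr (Or.inr rfl)
      have : w = a ∨ w = b := by simpa using hw
      tauto
  · rintro rfl; rfl

lemma aux_ident_fiber_ab (hmv : IsIdentMove F' a b) (u : H.V) :
    F'.vmap u = F'.vmap a ↔ (u = a ∨ u = b) := by
  constructor
  · intro h
    rcases hmv.2.2.2.1 u a h with h' | h'
    · exact Or.inl h'
    · have : u ∈ ({a, b} : Set H.V) := by rw [← h']; exact Set.mem_insert u _
      simpa using this
  · rintro (rfl | rfl)
    · rfl
    · exact hmv.2.2.1.symm

lemma aux_ident_edge (hmv : IsIdentMove F' a b) (x : H.E) : ∃ x' : K.E, F'.epath x = [x'] ∧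
    K.src x' = F'.vmap (H.src x) ∧ K.tgt x' = F'.vmap (H.tgt x) := by
  obtain ⟨x', hx'⟩ := hmv.2.2.2.2.2 x
  exact ⟨x', hx', hmv.1.head_src x x' (by rw [hx']; rfl),
    hmv.1.last_tgt x x' (by rw [hx']; rfl)⟩

lemma aux_ident_intOcc (hmv : IsIdentMove F' a b) : intOcc F' = 0 := by
  rw [aux_intOcc_eq]
  have h0 : ∀ x : H.E, (((F'.epath x).tail.map K.src : List K.V) : Multiset K.V) = 0 := by
    intro x
    obtain ⟨x', hx', -, -⟩ := aux_ident_edge hmv x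
    rw [hx']; rfl
  rw [show (fun x : H.E => (((F'.epath x).tail.map K.src : List K.V) : Multiset K.V))
      = fun _ : H.E => (0 : Multiset K.V) from funext h0]
  simp

lemma aux_ident_outdeg (hmv : IsIdentMove F' a b) (w' : K.V) :
    K.outdeg w' = Multiset.countP (fun x : H.E => F'.vmap (H.src x) = w')
      (Finset.univ : Finset H.E).val := by
  rw [aux_outdeg_countP, aux_deg_sum hmv.1.cover]
  have hterm : ∀ x : H.E, Multiset.countP (fun y => K.src y = w') (F'.epath x : Multiset K.E)
      = if F'.vmap (H.src x) = w' then 1 else 0 := by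
    intro x
    obtain ⟨x', hx', hs, -⟩ := aux_ident_edge hmv x
    rw [hx', show (([x'] : List K.E) : Multiset K.E) = x' ::ₘ 0 from rfl,
      Multiset.countP_cons, Multiset.countP_zero, hs, Nat.zero_add]
  rw [Finset.sum_congr rfl (fun x _ => hterm x)]
  exact aux_sum_ite_countP _ _

lemma aux_ident_indeg (hmv : IsIdentMove F' a b) (w' : K.V) :
    K.indeg w' = Multiset.countP (fun x : H.E => F'.vmap (H.tgt x) = w')
      (Finset.univ : Finset H.E).val := by
  rw [aux_indeg_countP, aux_deg_sum hmv.1.cover]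
  have hterm : ∀ x : H.E, Multiset.countP (fun y => K.tgt y = w') (F'.epath x : Multiset K.E)
      = if F'.vmap (H.tgt x) = w' then 1 else 0 := by
    intro x
    obtain ⟨x', hx', -, ht⟩ := aux_ident_edge hmv x
    rw [hx', show (([x'] : List K.E) : Multiset K.E) = x' ::ₘ 0 from rfl,
      Multiset.countP_cons, Multiset.countP_zero, ht, Nat.zero_add]
  rw [Finset.sum_congr rfl (fun x _ => hterm x)]
  exact aux_sum_ite_countP _ _

lemma aux_ident_deg_ne (hmv : IsIdentMove F' a b) {w : H.V} (hwa : w ≠ a) (hwb : w ≠ b) :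
    K.deg (F'.vmap w) = H.deg w := by
  rw [Digraph'.deg, Digraph'.deg, aux_ident_outdeg hmv, aux_ident_indeg hmv,
    aux_outdeg_countP, aux_indeg_countP]
  congr 1
  · exact Multiset.countP_congr rfl
      (fun x _ => propext (aux_ident_fiber_ne hmv hwa hwb))
  · exact Multiset.countP_congr rfl
      (fun x _ => propext (aux_ident_fiber_ne hmv hwa hwb))

lemma aux_ident_deg_ab (hmv : IsIdentMove F' a b) :
    K.deg (F'.vmap a) = H.deg a + H.deg b := by
  have hab := hmv.2.1
  have hout : Multiset.countP (fun x : H.E => F'.vmap (H.src x) = F'.vmap a)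
      (Finset.univ : Finset H.E).val
      = Multiset.countP (fun x : H.E => H.src x = a) (Finset.univ : Finset H.E).val
        + Multiset.countP (fun x : H.E => H.src x = b) (Finset.univ : Finset H.E).val := by
    rw [Multiset.countP_congr rfl (p' := fun x : H.E => H.src x = a ∨ H.src x = b)
      (fun x _ => propext (aux_ident_fiber_ab hmv (H.src x)))]
    exact aux_countP_or _ _ _ (fun x _ hx => hab (hx.1.symm.trans hx.2))
  have hin : Multiset.countP (fun x : H.E => F'.vmap (H.tgt x) = F'.vmap a)
      (Finset.univ : Finset H.E).val
      = Multiset.countP (fun x : H.E => H.tgt x = a) (Finset.univ : Finset H.E).val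
        + Multiset.countP (fun x : H.E => H.tgt x = b) (Finset.univ : Finset H.E).val := by
    rw [Multiset.countP_congr rfl (p' := fun x : H.E => H.tgt x = a ∨ H.tgt x = b)
      (fun x _ => propext (aux_ident_fiber_ab hmv (H.tgt x)))]
    exact aux_countP_or _ _ _ (fun x _ hx => hab (hx.1.symm.trans hx.2))
  rw [Digraph'.deg, Digraph'.deg, Digraph'.deg, aux_ident_outdeg hmv, aux_ident_indeg hmv,
    hout, hin, aux_outdeg_countP, aux_indeg_countP, aux_outdeg_countP, aux_indeg_countP]
  omega

end IdentAux

section InsertAux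

variable {H K : Digraph'} {F' : PreMor H K} {e₀ : H.E}

lemma aux_insert_pq (hmv : IsInsertMove F' e₀) : ∃ p q : K.E, F'.epath e₀ = [p, q] ∧
    K.src p = F'.vmap (H.src e₀) ∧ K.tgt q = F'.vmap (H.tgt e₀) ∧ K.tgt p = K.src q := by
  obtain ⟨p, q, hpq⟩ := List.length_eq_two.mp hmv.2.2.1
  refine ⟨p, q, hpq, hmv.1.head_src e₀ p (by rw [hpq]; rfl),
    hmv.1.last_tgt e₀ q (by simp [hpq]), ?_⟩
  have hch := hmv.1.chain e₀
  rw [hpq] at hch; unfold List.Chain' at hch; rw [List.isChain_cons_cons] at hch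
  exact hch.1

lemma aux_insert_facts (hmv : IsInsertMove F' e₀) {p q : K.E} (hpq : F'.epath e₀ = [p, q]) :
    K.src p = F'.vmap (H.src e₀) ∧ K.tgt q = F'.vmap (H.tgt e₀) ∧ K.tgt p = K.src q := by
  refine ⟨hmv.1.head_src e₀ p (by rw [hpq]; rfl), hmv.1.last_tgt e₀ q (by simp [hpq]), ?_⟩
  have hch := hmv.1.chain e₀
  rw [hpq] at hch; unfold List.Chain' at hch; rw [List.isChain_cons_cons] at hch
  exact hch.1

lemma aux_insert_notin (hmv : IsInsertMove F' e₀) {p q : K.E} (hpq : F'.epath e₀ = [p, q])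
    (v : H.V) : F'.vmap v ≠ K.src q := by
  have := hmv.2.2.2.2.2 v
  rw [hpq] at this
  simpa using this

lemma aux_insert_intOcc (hmv : IsInsertMove F' e₀) {p q : K.E} (hpq : F'.epath e₀ = [p, q]) :
    intOcc F' = {K.src q} := by
  rw [aux_intOcc_eq, aux_bind_eq_sum]
  have h0 : ∀ x ∈ (Finset.univ : Finset H.E),
      (((F'.epath x).tail.map K.src : List K.V) : Multiset K.V)
        = if x = e₀ then ({K.src q} : Multiset K.V) else 0 := by
    intro x _
    by_cases hx : x = e₀
    · subst hx; rw [hpq]; simp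
    · obtain ⟨x', hx'⟩ := hmv.2.2.2.1 x hx
      rw [hx']; simp [hx]
  rw [Finset.sum_congr rfl h0, Finset.sum_ite_eq' Finset.univ e₀]
  simp

lemma aux_insert_outdeg (hmv : IsInsertMove F' e₀) {p q : K.E} (hpq : F'.epath e₀ = [p, q])
    (w' : K.V) :
    K.outdeg w' = Multiset.countP (fun x : H.E => F'.vmap (H.src x) = w')
      (Finset.univ : Finset H.E).val + (if K.src q = w' then 1 else 0) := by
  obtain ⟨hsp, -, -⟩ := aux_insert_facts hmv hpq
  rw [aux_outdeg_countP, aux_deg_sum hmv.1.cover]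
  have hterm : ∀ x : H.E, Multiset.countP (fun y => K.src y = w') (F'.epath x : Multiset K.E)
      = (if F'.vmap (H.src x) = w' then 1 else 0)
        + (if x = e₀ then (if K.src q = w' then 1 else 0) else 0) := by
    intro x
    by_cases hx : x = e₀
    · subst hx
      rw [hpq, show (([p, q] : List K.E) : Multiset K.E) = p ::ₘ q ::ₘ 0 from rfl,
        Multiset.countP_cons, Multiset.countP_cons, Multiset.countP_zero]
      rw [hsp] at *
      simp only [eq_self_iff_true, if_true]
      omega
    · obtain ⟨x', hx'⟩ := hmv.2.2.2.1 x hx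
      have hs : K.src x' = F'.vmap (H.src x) := hmv.1.head_src x x' (by rw [hx']; rfl)
      rw [hx', show (([x'] : List K.E) : Multiset K.E) = x' ::ₘ 0 from rfl,
        Multiset.countP_cons, Multiset.countP_zero, hs, if_neg hx]
      omega
  rw [Finset.sum_congr rfl (fun x _ => hterm x), Finset.sum_add_distrib]
  congr 1
  · exact aux_sum_ite_countP _ _
  · rw [Finset.sum_ite_eq' Finset.univ e₀]; simp

lemma aux_insert_indeg (hmv : IsInsertMove F' e₀) {p q : K.E} (hpq : F'.epath e₀ = [p, q])
    (w' : K.V) :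
    K.indeg w' = Multiset.countP (fun x : H.E => F'.vmap (H.tgt x) = w')
      (Finset.univ : Finset H.E).val + (if K.tgt p = w' then 1 else 0) := by
  obtain ⟨-, htq, -⟩ := aux_insert_facts hmv hpq
  rw [aux_indeg_countP, aux_deg_sum hmv.1.cover]
  have hterm : ∀ x : H.E, Multiset.countP (fun y => K.tgt y = w') (F'.epath x : Multiset K.E)
      = (if F'.vmap (H.tgt x) = w' then 1 else 0)
        + (if x = e₀ then (if K.tgt p = w' then 1 else 0) else 0) := by
    intro x
    by_cases hx : x = e₀
    · subst hx
      rw [hpq, show (([p, q] : List K.E) : Multiset K.E) = p ::ₘ q ::ₘ 0 from rfl,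
        Multiset.countP_cons, Multiset.countP_cons, Multiset.countP_zero]
      rw [htq] at *
      simp only [eq_self_iff_true, if_true]
      omega
    · obtain ⟨x', hx'⟩ := hmv.2.2.2.1 x hx
      have ht : K.tgt x' = F'.vmap (H.tgt x) := hmv.1.last_tgt x x' (by simp [hx'])
      rw [hx', show (([x'] : List K.E) : Multiset K.E) = x' ::ₘ 0 from rfl,
        Multiset.countP_cons, Multiset.countP_zero, ht, if_neg hx]
      omega
  rw [Finset.sum_congr rfl (fun x _ => hterm x), Finset.sum_add_distrib]
  congr 1
  · exact aux_sum_ite_countP _ _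
  · rw [Finset.sum_ite_eq' Finset.univ e₀]; simp

lemma aux_insert_deg_vmap (hmv : IsInsertMove F' e₀) {p q : K.E} (hpq : F'.epath e₀ = [p, q])
    (w : H.V) : K.deg (F'.vmap w) = H.deg w := by
  obtain ⟨-, -, htp⟩ := aux_insert_facts hmv hpq
  have hne := aux_insert_notin hmv hpq w
  rw [Digraph'.deg, Digraph'.deg, aux_insert_outdeg hmv hpq, aux_insert_indeg hmv hpq,
    aux_outdeg_countP, aux_indeg_countP]
  have h1 : (if K.src q = F'.vmap w then 1 else 0) = 0 := if_neg (fun h => hne h.symm)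
  have h2 : (if K.tgt p = F'.vmap w then 1 else 0) = 0 := by
    rw [htp]; exact if_neg (fun h => hne h.symm)
  have hinj := hmv.2.1
  have c1 : Multiset.countP (fun x : H.E => F'.vmap (H.src x) = F'.vmap w)
      (Finset.univ : Finset H.E).val
      = Multiset.countP (fun x : H.E => H.src x = w) (Finset.univ : Finset H.E).val :=
    Multiset.countP_congr rfl (fun x _ => propext ⟨fun h => hinj h, fun h => by rw [h]⟩)
  have c2 : Multiset.countP (fun x : H.E => F'.vmap (H.tgt x) = F'.vmap w)
      (Finset.univ : Finset H.E).val
      = Multiset.countP (fun x : H.E => H.tgt x = w) (Finset.univ : Finset H.E).val :=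
    Multiset.countP_congr rfl (fun x _ => propext ⟨fun h => hinj h, fun h => by rw [h]⟩)
  rw [h1, h2, c1, c2]
  omega

lemma aux_insert_deg_new (hmv : IsInsertMove F' e₀) {p q : K.E} (hpq : F'.epath e₀ = [p, q]) :
    K.deg (K.src q) = 2 := by
  obtain ⟨hsp, htq, htp⟩ := aux_insert_facts hmv hpq
  rw [Digraph'.deg, aux_insert_outdeg hmv hpq, aux_insert_indeg hmv hpq]
  have hz1 : Multiset.countP (fun x : H.E => F'.vmap (H.src x) = K.src q)
      (Finset.univ : Finset H.E).val = 0 :=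
    Multiset.countP_eq_zero.mpr (fun x _ => aux_insert_notin hmv hpq (H.src x))
  have hz2 : Multiset.countP (fun x : H.E => F'.vmap (H.tgt x) = K.src q)
      (Finset.univ : Finset H.E).val = 0 :=
    Multiset.countP_eq_zero.mpr (fun x _ => aux_insert_notin hmv hpq (H.tgt x))
  rw [hz1, hz2, htp, if_pos rfl]

end InsertAux

section MoreAux

variable {H K : Digraph'} {F' : PreMor H K}

lemma aux_ident_edge_surj {a b : H.V} (hmv : IsIdentMove F' a b) (x' : K.E) :
    ∃ x : H.E, F'.epath x = [x'] ∧ K.src x' = F'.vmap (H.src x)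
      ∧ K.tgt x' = F'.vmap (H.tgt x) := by
  have hx' : x' ∈ (Finset.univ : Finset K.E).val := Finset.mem_univ_val x'
  rw [← hmv.1.cover, aux_edgeOcc_eq] at hx'
  obtain ⟨x, -, hx⟩ := Multiset.mem_bind.mp hx'
  obtain ⟨x'', hx''⟩ := aux_ident_edge hmv x
  obtain ⟨hx''e, hs, ht⟩ := hx''
  rw [hx''e] at hx
  have : x' = x'' := by simpa using hx
  subst this
  exact ⟨x, hx''e, hs, ht⟩

lemma aux_insert_edge_cases {e₀ : H.E} (hmv : IsInsertMove F' e₀) {p q : K.E}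
    (hpq : F'.epath e₀ = [p, q]) (x' : K.E) :
    (∃ x : H.E, x ≠ e₀ ∧ F'.epath x = [x'] ∧ K.src x' = F'.vmap (H.src x)
      ∧ K.tgt x' = F'.vmap (H.tgt x)) ∨ x' = p ∨ x' = q := by
  have hx' : x' ∈ (Finset.univ : Finset K.E).val := Finset.mem_univ_val x'
  rw [← hmv.1.cover, aux_edgeOcc_eq] at hx'
  obtain ⟨x, -, hx⟩ := Multiset.mem_bind.mp hx'
  by_cases hxe : x = e₀
  · subst hxe
    rw [hpq] at hx
    right
    simpa using hx
  · obtain ⟨x'', hx''⟩ := hmv.2.2.2.1 x hxe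
    rw [hx''] at hx
    have : x' = x'' := by simpa using hx
    subst this
    exact Or.inl ⟨x, hxe, hx'', hmv.1.head_src x x' (by rw [hx'']; rfl),
      hmv.1.last_tgt x x' (by simp [hx''])⟩

lemma aux_edgeUnion_deg {G : Digraph'} (hG : G.IsEdgeUnion) (v : G.V) : G.deg v = 1 := by
  obtain ⟨hl, hu⟩ := hG
  obtain ⟨e, he, hun⟩ := hu v
  have hsingle : Multiset.countP (fun x : G.E => x = e) (Finset.univ : Finset G.E).val = 1 := by
    rw [Multiset.countP_eq_card_filter,
      show (Finset.univ : Finset G.E).val.filter (fun x : G.E => x = e)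
        = (Finset.filter (fun x : G.E => x = e) Finset.univ).val from rfl,
      Finset.filter_eq' Finset.univ e]
    simp
  rw [Digraph'.deg, aux_outdeg_countP, aux_indeg_countP]
  rcases he with hsrc | htgt
  · have h1 : Multiset.countP (fun x : G.E => G.src x = v) (Finset.univ : Finset G.E).val
        = Multiset.countP (fun x : G.E => x = e) (Finset.univ : Finset G.E).val :=
      Multiset.countP_congr rfl (fun x _ => propext
        ⟨fun h => hun x (Or.inl h), fun h => by rw [h, hsrc]⟩)
    have h2 : Multiset.countP (fun x : G.E => G.tgt x = v) (Finset.univ : Finset G.E).val = 0 :=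
      Multiset.countP_eq_zero.mpr (fun x _ hx => by
        have hxe : x = e := hun x (Or.inr hx)
        subst hxe
        exact hl x (hx.trans hsrc.symm).symm)
    rw [h1, h2, hsingle]
  · have h1 : Multiset.countP (fun x : G.E => G.tgt x = v) (Finset.univ : Finset G.E).val
        = Multiset.countP (fun x : G.E => x = e) (Finset.univ : Finset G.E).val :=
      Multiset.countP_congr rfl (fun x _ => propext
        ⟨fun h => hun x (Or.inr h), fun h => by rw [h, htgt]⟩)
    have h2 : Multiset.countP (fun x : G.E => G.src x = v) (Finset.univ : Finset G.E).val = 0 :=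
      Multiset.countP_eq_zero.mpr (fun x _ hx => by
        have hxe : x = e := hun x (Or.inl hx)
        subst hxe
        exact hl x (htgt.symm ▸ hx))
    rw [h1, h2, hsingle]

lemma aux_idm_intOcc (G : Digraph') : intOcc (PreMor.idm G) = 0 := by
  rw [aux_intOcc_eq]
  have h0 : ∀ e : G.E, ((((PreMor.idm G).epath e).tail.map G.src : List G.V) : Multiset G.V) = 0 :=
    fun e => rfl
  rw [show (fun e : G.E => ((((PreMor.idm G).epath e).tail.map G.src : List G.V) : Multiset G.V))
      = fun _ : G.E => (0 : Multiset G.V) from funext h0]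
  simp

lemma aux_idm_mor (G : Digraph') : IsGraphMor (PreMor.idm G) := by
  constructor
  · intro e; simp [PreMor.idm]
  · intro e; exact List.isChain_singleton e
  · intro e a ha
    simp only [PreMor.idm, List.head?_cons, Option.some.injEq] at ha
    subst ha
    rfl
  · intro e a ha
    simp only [PreMor.idm, List.getLast?_singleton, Option.some.injEq] at ha
    subst ha
    rfl
  · rw [aux_edgeOcc_eq]
    have h0 : ∀ e : G.E, (((PreMor.idm G).epath e : List G.E) : Multiset G.E) = {e} :=
      fun e => rfl
    rw [show (fun e : G.E => (((PreMor.idm G).epath e : List G.E) : Multiset G.E))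
        = fun e : G.E => ({e} : Multiset G.E) from funext h0]
    rw [Multiset.bind_singleton]
    simp
  · intro w; exact Or.inl ⟨w, rfl⟩

end MoreAux

/-- The statement of the main induction. -/
structure AuxGood (G H : Digraph') (F : PreMor G H) : Prop where
  mor : IsGraphMor F
  deg1 : ∀ w : H.V, H.deg w ≤ 1 →
    (∃ v : G.V, F.vmap v = w ∧ ∀ v' : G.V, F.vmap v' = w → v' = v) ∧
      Multiset.count w (intOcc F) = 0
  headv : ∀ w : H.V, H.IsHeadVert w → ∀ v : G.V, F.vmap v = w → G.IsHeadVert v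
  tailv : ∀ w : H.V, H.IsTailVert w → ∀ v : G.V, F.vmap v = w → G.IsTailVert v
  deg2 : ∀ w : H.V, H.deg w = 2 →
      (∃ a b : G.V, a ≠ b ∧ G.IsHeadVert a ∧ G.IsTailVert b ∧
        ¬ G.toSimple.Reachable a b ∧
        F.vmap a = w ∧ F.vmap b = w ∧ (∀ v : G.V, F.vmap v = w → v = a ∨ v = b) ∧
        Multiset.count w (intOcc F) = 0) ∨
      ((∀ v : G.V, F.vmap v ≠ w) ∧ Multiset.count w (intOcc F) = 1)
  deg3 : ∀ w : H.V, H.deg w = 3 →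
      ∃ (e : G.E) (a : G.V),
        Multiset.count w (intOcc F) = 1 ∧ w ∈ (F.epath e).tail.map H.src ∧
        F.vmap a = w ∧ (∀ v : G.V, F.vmap v = w → v = a) ∧ ¬ G.Incid a e

lemma aux_main {G H : Digraph'} {F : PreMor G H} (hf : IsSewingMor G H F) :
    G.IsEdgeUnion → AuxGood G H F := by
  induction hf with
  | refl =>
    intro hG
    refine ⟨aux_idm_mor G, ?_, ?_, ?_, ?_, ?_⟩
    · intro w _
      exact ⟨⟨w, rfl, fun v' hv' => hv'⟩, by rw [aux_idm_intOcc]; simp⟩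
    · intro w hw v hv
      have hv' : v = w := hv
      subst hv'
      exact hw
    · intro w hw v hv
      have hv' : v = w := hv
      subst hv'
      exact hw
    · intro w hw
      have := aux_edgeUnion_deg hG w
      omega
    · intro w hw
      have := aux_edgeUnion_deg hG w
      omega
  | stepII hF hH e₀ hmove hK ih =>
    clear F
    clear H
    rename_i H K F F'
    intro hG
    have IH := ih hG
    obtain ⟨p, q, hpq, hsp, htq, htp⟩ := aux_insert_pq hmove
    have hmor' := hmove.1
    have hinj := hmove.2.1
    have hmor := aux_comp_mor IH.mor hmor'
    have hIO : intOcc (F.comp F') = {K.src q} + (intOcc F).map F'.vmap := by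
      rw [aux_intOcc_comp IH.mor.cover hmor'.nonempty hmor'.head_src,
        aux_insert_intOcc hmove hpq]
    have hnotin := aux_insert_notin hmove hpq
    have hcnt_vmap : ∀ w : H.V,
        Multiset.count (F'.vmap w) (intOcc (F.comp F'))
          = Multiset.count w (intOcc F) := by
      intro w
      rw [hIO, Multiset.count_add, Multiset.count_singleton,
        if_neg (fun h => hnotin w h),
        aux_count_map_fiber F'.vmap _ w _ (fun u => ⟨fun h => hinj h, fun h => by rw [h]⟩)]
      omega
    have hdegw0 : K.deg (K.src q) = 2 := aux_insert_deg_new hmove hpq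
    have hdegv : ∀ w : H.V, K.deg (F'.vmap w) = H.deg w :=
      fun w => aux_insert_deg_vmap hmove hpq w
    refine ⟨hmor, ?_, ?_, ?_, ?_, ?_⟩
    · -- deg1
      intro w' hw'
      rcases hmove.2.2.2.2.1 w' with ⟨w, rfl⟩ | hw0
      · rw [hdegv w] at hw'
        obtain ⟨⟨v, hvm, hvu⟩, hcnt⟩ := IH.deg1 w hw'
        refine ⟨⟨v, by rw [aux_comp_vmap, hvm], ?_⟩, by rw [hcnt_vmap w]; exact hcnt⟩
        intro v' hv'
        rw [aux_comp_vmap] at hv'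
        exact hvu v' (hinj hv')
      · rw [hpq] at hw0
        have : w' = K.src q := by simpa using hw0
        rw [this, hdegw0] at hw'
        omega
    · -- headv
      intro w' hw' v hv
      obtain ⟨hw1, x', htx'⟩ := hw'
      have hvw : F'.vmap (F.vmap v) = w' := hv
      have hdw : H.deg (F.vmap v) = 1 := by rw [← hdegv (F.vmap v), hvw]; exact hw1
      have hne0 : w' ≠ K.src q := fun h => hnotin (F.vmap v) (hvw.trans h)
      rcases aux_insert_edge_cases hmove hpq x' with ⟨x, -, -, -, hxt⟩ | rfl | rfl
      · have : H.tgt x = F.vmap v := hinj (by rw [← hxt, htx', ← hvw])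
        exact IH.headv (F.vmap v) ⟨hdw, x, this⟩ v rfl
      · exact absurd (htp ▸ htx' : K.src q = w').symm hne0
      · have : H.tgt e₀ = F.vmap v := hinj (by rw [← htq, htx', ← hvw])
        exact IH.headv (F.vmap v) ⟨hdw, e₀, this⟩ v rfl
    · -- tailv
      intro w' hw' v hv
      obtain ⟨hw1, x', hsx'⟩ := hw'
      have hvw : F'.vmap (F.vmap v) = w' := hv
      have hdw : H.deg (F.vmap v) = 1 := by rw [← hdegv (F.vmap v), hvw]; exact hw1
      have hne0 : w' ≠ K.src q := fun h => hnotin (F.vmap v) (hvw.trans h)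
      rcases aux_insert_edge_cases hmove hpq x' with ⟨x, -, -, hxs, -⟩ | rfl | rfl
      · have : H.src x = F.vmap v := hinj (by rw [← hxs, hsx', ← hvw])
        exact IH.tailv (F.vmap v) ⟨hdw, x, this⟩ v rfl
      · have : H.src e₀ = F.vmap v := hinj (by rw [← hsp, hsx', ← hvw])
        exact IH.tailv (F.vmap v) ⟨hdw, e₀, this⟩ v rfl
      · exact absurd hsx'.symm hne0
    · -- deg2
      intro w' hw'
      rcases hmove.2.2.2.2.1 w' with ⟨w, rfl⟩ | hw0
      · rw [hdegv w] at hw'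
        rcases IH.deg2 w hw' with ⟨x, y, hxy, hhx, hty, hrch, hxm, hym, huniq, hcnt⟩
          | ⟨hnov, hcnt⟩
        · refine Or.inl ⟨x, y, hxy, hhx, hty, hrch, by rw [aux_comp_vmap, hxm],
            by rw [aux_comp_vmap, hym], ?_, by rw [hcnt_vmap w]; exact hcnt⟩
          intro v hv
          rw [aux_comp_vmap] at hv
          exact huniq v (hinj hv)
        · refine Or.inr ⟨?_, by rw [hcnt_vmap w]; exact hcnt⟩
          intro v hv
          rw [aux_comp_vmap] at hv
          exact hnov v (hinj hv)
      · rw [hpq] at hw0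
        have hww : w' = K.src q := by simpa using hw0
        subst hww
        refine Or.inr ⟨fun v => hnotin (F.vmap v), ?_⟩
        rw [hIO, Multiset.count_add, Multiset.count_singleton, if_pos rfl,
          Multiset.count_eq_zero.mpr ?_]
        · intro hmem
          obtain ⟨u, -, hu⟩ := Multiset.mem_map.mp hmem
          exact hnotin u hu
    · -- deg3
      intro w' hw'
      rcases hmove.2.2.2.2.1 w' with ⟨w, rfl⟩ | hw0
      · rw [hdegv w] at hw'
        obtain ⟨e, a₀, hcnt, hmem, ham, hau, hninc⟩ := IH.deg3 w hw'
        refine ⟨e, a₀, by rw [hcnt_vmap w]; exact hcnt,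
          aux_mem_interior_comp hmor'.nonempty hmor'.head_src hmem,
          by rw [aux_comp_vmap, ham], ?_, hninc⟩
        intro v hv
        rw [aux_comp_vmap] at hv
        exact hau v (hinj hv)
      · rw [hpq] at hw0
        have hww : w' = K.src q := by simpa using hw0
        rw [hww, hdegw0] at hw'
        omega
  | stepI hF hH a b hmove ha hb hsep hK ih =>
    clear F
    clear H
    rename_i H K F F'
    intro hG
    have IH := ih hG
    have hmor' := hmove.1
    have hmor := aux_comp_mor IH.mor hmor'
    have hloopH : ∀ x : H.E, H.src x ≠ H.tgt x := hH.1.1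
    have hIO0 : intOcc (F.comp F') = (intOcc F).map F'.vmap := by
      rw [aux_intOcc_comp IH.mor.cover hmor'.nonempty hmor'.head_src,
        aux_ident_intOcc hmove, zero_add]
    have hdega : H.deg a = 1 := ha.1
    have hdegb : H.deg b = 1 := hb.1
    have hab := hmove.2.1
    obtain ⟨⟨a', ha'm, ha'u⟩, hacnt⟩ := IH.deg1 a (by omega)
    obtain ⟨⟨b', hb'm, hb'u⟩, hbcnt⟩ := IH.deg1 b (by omega)
    have ha'b' : a' ≠ b' := by
      intro hcon
      apply hab
      rw [← ha'm, hcon, hb'm]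
    have hreachG : ¬ G.toSimple.Reachable a' b' := by
      intro hr
      apply hsep
      have := aux_vmap_reach IH.mor hloopH hr
      rwa [ha'm, hb'm] at this
    have hsurj := hmove.2.2.2.2.1
    have hdegab : K.deg (F'.vmap a) = 2 := by rw [aux_ident_deg_ab hmove]; omega
    have hvb : F'.vmap b = F'.vmap a := hmove.2.2.1.symm
    have hcnt_ne : ∀ w : H.V, w ≠ a → w ≠ b →
        Multiset.count (F'.vmap w) (intOcc (F.comp F')) = Multiset.count w (intOcc F) := by
      intro w hwa hwb
      rw [hIO0]
      exact aux_count_map_fiber F'.vmap _ w _ (fun u => aux_ident_fiber_ne hmove hwa hwb)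
    have hdeg_ne : ∀ w : H.V, w ≠ a → w ≠ b → K.deg (F'.vmap w) = H.deg w :=
      fun w hwa hwb => aux_ident_deg_ne hmove hwa hwb
    refine ⟨hmor, ?_, ?_, ?_, ?_, ?_⟩
    · -- deg1
      intro w' hw'
      obtain ⟨w, rfl⟩ := hsurj w'
      have hwa : w ≠ a := by rintro rfl; rw [hdegab] at hw'; omega
      have hwb : w ≠ b := by rintro rfl; rw [hvb, hdegab] at hw'; omega
      rw [hdeg_ne w hwa hwb] at hw'
      obtain ⟨⟨v, hvm, hvu⟩, hcnt⟩ := IH.deg1 w hw'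
      refine ⟨⟨v, by rw [aux_comp_vmap, hvm], ?_⟩, by rw [hcnt_ne w hwa hwb]; exact hcnt⟩
      intro v' hv'
      rw [aux_comp_vmap] at hv'
      exact hvu v' ((aux_ident_fiber_ne hmove hwa hwb).mp hv')
    · -- headv
      intro w' hw' v hv
      obtain ⟨hw1, x', htx'⟩ := hw'
      have hvw : F'.vmap (F.vmap v) = w' := hv
      have hwa : F.vmap v ≠ a := by
        intro hcon
        rw [← hvw, hcon, hdegab] at hw1
        omega
      have hwb : F.vmap v ≠ b := by
        intro hcon
        rw [← hvw, hcon, hvb, hdegab] at hw1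
        omega
      have hdw : H.deg (F.vmap v) = 1 := by
        rw [← hdeg_ne (F.vmap v) hwa hwb, hvw]; exact hw1
      obtain ⟨x, -, -, hxt⟩ := aux_ident_edge_surj hmove x'
      have hxv : H.tgt x = F.vmap v :=
        (aux_ident_fiber_ne hmove hwa hwb).mp (by rw [← hxt, htx', ← hvw])
      exact IH.headv (F.vmap v) ⟨hdw, x, hxv⟩ v rfl
    · -- tailv
      intro w' hw' v hv
      obtain ⟨hw1, x', hsx'⟩ := hw'
      have hvw : F'.vmap (F.vmap v) = w' := hv
      have hwa : F.vmap v ≠ a := by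
        intro hcon
        rw [← hvw, hcon, hdegab] at hw1
        omega
      have hwb : F.vmap v ≠ b := by
        intro hcon
        rw [← hvw, hcon, hvb, hdegab] at hw1
        omega
      have hdw : H.deg (F.vmap v) = 1 := by
        rw [← hdeg_ne (F.vmap v) hwa hwb, hvw]; exact hw1
      obtain ⟨x, -, hxs, -⟩ := aux_ident_edge_surj hmove x'
      have hxv : H.src x = F.vmap v :=
        (aux_ident_fiber_ne hmove hwa hwb).mp (by rw [← hxs, hsx', ← hvw])
      exact IH.tailv (F.vmap v) ⟨hdw, x, hxv⟩ v rfl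
    · -- deg2
      intro w' hw'
      obtain ⟨w, rfl⟩ := hsurj w'
      by_cases hwab : w = a ∨ w = b
      · have hww : F'.vmap w = F'.vmap a := (aux_ident_fiber_ab hmove w).mpr hwab
        refine Or.inl ⟨a', b', ha'b', IH.headv a ha a' ha'm, IH.tailv b hb b' hb'm, hreachG,
          ?_, ?_, ?_, ?_⟩
        · rw [aux_comp_vmap, ha'm]; exact hww.symm
        · rw [aux_comp_vmap, hb'm, hvb]; exact hww.symm
        · intro v hv
          rw [aux_comp_vmap] at hv
          rcases (aux_ident_fiber_ab hmove (F.vmap v)).mp (hv.trans hww) with h | h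
          · exact Or.inl (ha'u v h)
          · exact Or.inr (hb'u v h)
        · rw [hIO0, aux_count_map_pair F'.vmap (intOcc F) a b hab (F'.vmap w)
            (fun u => by rw [hww]; exact aux_ident_fiber_ab hmove u), hacnt, hbcnt]
      · push_neg at hwab
        obtain ⟨hwa, hwb⟩ := hwab
        have hdw : H.deg w = 2 := by rw [← hdeg_ne w hwa hwb]; exact hw'
        rcases IH.deg2 w hdw with ⟨x, y, hxy, hhx, hty, hrch, hxm, hym, huniq, hcnt⟩
          | ⟨hnov, hcnt⟩
        · refine Or.inl ⟨x, y, hxy, hhx, hty, hrch, by rw [aux_comp_vmap, hxm],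
            by rw [aux_comp_vmap, hym], ?_, by rw [hcnt_ne w hwa hwb]; exact hcnt⟩
          intro v hv
          rw [aux_comp_vmap] at hv
          exact huniq v ((aux_ident_fiber_ne hmove hwa hwb).mp hv)
        · refine Or.inr ⟨?_, by rw [hcnt_ne w hwa hwb]; exact hcnt⟩
          intro v hv
          rw [aux_comp_vmap] at hv
          exact hnov v ((aux_ident_fiber_ne hmove hwa hwb).mp hv)
    · -- deg3
      intro w' hw'
      obtain ⟨w, rfl⟩ := hsurj w'
      have hwa : w ≠ a := by rintro rfl; rw [hdegab] at hw'; omega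
      have hwb : w ≠ b := by rintro rfl; rw [hvb, hdegab] at hw'; omega
      have hdw : H.deg w = 3 := by rw [← hdeg_ne w hwa hwb]; exact hw'
      obtain ⟨e, a₀, hcnt, hmem, ham, hau, hninc⟩ := IH.deg3 w hdw
      refine ⟨e, a₀, by rw [hcnt_ne w hwa hwb]; exact hcnt,
        aux_mem_interior_comp hmor'.nonempty hmor'.head_src hmem,
        by rw [aux_comp_vmap, ham], ?_, hninc⟩
      intro v hv
      rw [aux_comp_vmap] at hv
      exact hau v ((aux_ident_fiber_ne hmove hwa hwb).mp hv)
  | stepIII hF hH a b hmove ha hb hbII hsep hK ih =>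
    clear F
    clear H
    rename_i H K F F'
    intro hG
    have IH := ih hG
    have hmor' := hmove.1
    have hmor := aux_comp_mor IH.mor hmor'
    have hloopH : ∀ x : H.E, H.src x ≠ H.tgt x := hH.1.1
    have hIO0 : intOcc (F.comp F') = (intOcc F).map F'.vmap := by
      rw [aux_intOcc_comp IH.mor.cover hmor'.nonempty hmor'.head_src,
        aux_ident_intOcc hmove, zero_add]
    have hdega : H.deg a = 1 := ha
    have hdegb : H.deg b = 2 := hb
    obtain ⟨hbno, hbcnt⟩ := hbII
    have hab := hmove.2.1
    obtain ⟨⟨a', ha'm, ha'u⟩, hacnt⟩ := IH.deg1 a (by omega)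
    have hsurj := hmove.2.2.2.2.1
    have hdegab : K.deg (F'.vmap a) = 3 := by rw [aux_ident_deg_ab hmove]; omega
    have hvb : F'.vmap b = F'.vmap a := hmove.2.2.1.symm
    have hcnt_ne : ∀ w : H.V, w ≠ a → w ≠ b →
        Multiset.count (F'.vmap w) (intOcc (F.comp F')) = Multiset.count w (intOcc F) := by
      intro w hwa hwb
      rw [hIO0]
      exact aux_count_map_fiber F'.vmap _ w _ (fun u => aux_ident_fiber_ne hmove hwa hwb)
    have hdeg_ne : ∀ w : H.V, w ≠ a → w ≠ b → K.deg (F'.vmap w) = H.deg w :=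
      fun w hwa hwb => aux_ident_deg_ne hmove hwa hwb
    have hbmem : b ∈ intOcc F := Multiset.count_pos.mp (by omega)
    rw [aux_intOcc_eq] at hbmem
    obtain ⟨e₁, -, hbmem'⟩ := Multiset.mem_bind.mp hbmem
    have hbl : b ∈ (F.epath e₁).tail.map H.src := Multiset.mem_coe.mp hbmem'
    refine ⟨hmor, ?_, ?_, ?_, ?_, ?_⟩
    · -- deg1
      intro w' hw'
      obtain ⟨w, rfl⟩ := hsurj w'
      have hwa : w ≠ a := by rintro rfl; rw [hdegab] at hw'; omega
      have hwb : w ≠ b := by rintro rfl; rw [hvb, hdegab] at hw'; omega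
      rw [hdeg_ne w hwa hwb] at hw'
      obtain ⟨⟨v, hvm, hvu⟩, hcnt⟩ := IH.deg1 w hw'
      refine ⟨⟨v, by rw [aux_comp_vmap, hvm], ?_⟩, by rw [hcnt_ne w hwa hwb]; exact hcnt⟩
      intro v' hv'
      rw [aux_comp_vmap] at hv'
      exact hvu v' ((aux_ident_fiber_ne hmove hwa hwb).mp hv')
    · -- headv
      intro w' hw' v hv
      obtain ⟨hw1, x', htx'⟩ := hw'
      have hvw : F'.vmap (F.vmap v) = w' := hv
      have hwa : F.vmap v ≠ a := by
        intro hcon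
        rw [← hvw, hcon, hdegab] at hw1
        omega
      have hwb : F.vmap v ≠ b := by
        intro hcon
        rw [← hvw, hcon, hvb, hdegab] at hw1
        omega
      have hdw : H.deg (F.vmap v) = 1 := by
        rw [← hdeg_ne (F.vmap v) hwa hwb, hvw]; exact hw1
      obtain ⟨x, -, -, hxt⟩ := aux_ident_edge_surj hmove x'
      have hxv : H.tgt x = F.vmap v :=
        (aux_ident_fiber_ne hmove hwa hwb).mp (by rw [← hxt, htx', ← hvw])
      exact IH.headv (F.vmap v) ⟨hdw, x, hxv⟩ v rfl
    · -- tailv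
      intro w' hw' v hv
      obtain ⟨hw1, x', hsx'⟩ := hw'
      have hvw : F'.vmap (F.vmap v) = w' := hv
      have hwa : F.vmap v ≠ a := by
        intro hcon
        rw [← hvw, hcon, hdegab] at hw1
        omega
      have hwb : F.vmap v ≠ b := by
        intro hcon
        rw [← hvw, hcon, hvb, hdegab] at hw1
        omega
      have hdw : H.deg (F.vmap v) = 1 := by
        rw [← hdeg_ne (F.vmap v) hwa hwb, hvw]; exact hw1
      obtain ⟨x, -, hxs, -⟩ := aux_ident_edge_surj hmove x'
      have hxv : H.src x = F.vmap v :=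
        (aux_ident_fiber_ne hmove hwa hwb).mp (by rw [← hxs, hsx', ← hvw])
      exact IH.tailv (F.vmap v) ⟨hdw, x, hxv⟩ v rfl
    · -- deg2
      intro w' hw'
      obtain ⟨w, rfl⟩ := hsurj w'
      have hwa : w ≠ a := by rintro rfl; rw [hdegab] at hw'; omega
      have hwb : w ≠ b := by rintro rfl; rw [hvb, hdegab] at hw'; omega
      have hdw : H.deg w = 2 := by rw [← hdeg_ne w hwa hwb]; exact hw'
      rcases IH.deg2 w hdw with ⟨x, y, hxy, hhx, hty, hrch, hxm, hym, huniq, hcnt⟩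
        | ⟨hnov, hcnt⟩
      · refine Or.inl ⟨x, y, hxy, hhx, hty, hrch, by rw [aux_comp_vmap, hxm],
          by rw [aux_comp_vmap, hym], ?_, by rw [hcnt_ne w hwa hwb]; exact hcnt⟩
        intro v hv
        rw [aux_comp_vmap] at hv
        exact huniq v ((aux_ident_fiber_ne hmove hwa hwb).mp hv)
      · refine Or.inr ⟨?_, by rw [hcnt_ne w hwa hwb]; exact hcnt⟩
        intro v hv
        rw [aux_comp_vmap] at hv
        exact hnov v ((aux_ident_fiber_ne hmove hwa hwb).mp hv)
    · -- deg3
      intro w' hw'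
      obtain ⟨w, rfl⟩ := hsurj w'
      by_cases hwab : w = a ∨ w = b
      · have hww : F'.vmap w = F'.vmap a := (aux_ident_fiber_ab hmove w).mpr hwab
        refine ⟨e₁, a', ?_, ?_, ?_, ?_, ?_⟩
        · rw [hIO0, aux_count_map_pair F'.vmap (intOcc F) a b hab (F'.vmap w)
            (fun u => by rw [hww]; exact aux_ident_fiber_ab hmove u), hacnt, hbcnt]
        · have hmm := aux_mem_interior_comp hmor'.nonempty hmor'.head_src hbl (F' := F')
          rwa [hvb, ← hww] at hmm
        · rw [aux_comp_vmap, ha'm]; exact hww.symm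
        · intro v hv
          rw [aux_comp_vmap] at hv
          rcases (aux_ident_fiber_ab hmove (F.vmap v)).mp (hv.trans hww) with hc | hc
          · exact ha'u v hc
          · exact absurd hc (hbno v)
        · intro hinc
          apply hsep
          have hrb : H.toSimple.Reachable (F.vmap (G.src e₁)) b :=
            aux_mor_reach_interior IH.mor hloopH e₁ hbl
          rcases hinc with hsrc | htgt
          · rw [← ha'm, ← hsrc]
            exact hrb
          · have hend := aux_mor_reach_endpoints IH.mor hloopH e₁
            rw [← ha'm, ← htgt]
            exact hend.symm.trans hrb
      · push_neg at hwab
        obtain ⟨hwa, hwb⟩ := hwab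
        have hdw : H.deg w = 3 := by rw [← hdeg_ne w hwa hwb]; exact hw'
        obtain ⟨e, a₀, hcnt, hmem, ham, hau, hninc⟩ := IH.deg3 w hdw
        refine ⟨e, a₀, by rw [hcnt_ne w hwa hwb]; exact hcnt,
          aux_mem_interior_comp hmor'.nonempty hmor'.head_src hmem,
          by rw [aux_comp_vmap, ham], ?_, hninc⟩
        intro v hv
        rw [aux_comp_vmap] at hv
        exact hau v ((aux_ident_fiber_ne hmove hwa hwb).mp hv)
/-- Let `G` be a disjoint union of oriented edges, `H` a
sewing graph, and `F : G → H` a sewing morphism.  Then the preimage of every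
degree-2 vertex of `H` is either a pair consisting of a head vertex and a
tail vertex lying in two distinct connected components of `G`, or a single
interior point of an edge of `G`; and the preimage of every degree-3 vertex
of `H` consists of exactly two points: an interior point of one edge of `G`
and an end vertex of a different edge of `G`. -/
theorem statement_0 (G H : Digraph') (F : PreMor G H)
    (hG : G.IsEdgeUnion) (hH : H.IsSewingGraph) (hf : IsSewingMor G H F) :
    (∀ w : H.V, H.deg w = 2 →
      (∃ a b : G.V, a ≠ b ∧ G.IsHeadVert a ∧ G.IsTailVert b ∧
        ¬ G.toSimple.Reachable a b ∧
        F.vmap a = w ∧ F.vmap b = w ∧ (∀ v : G.V, F.vmap v = w → v = a ∨ v = b) ∧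
        Multiset.count w (intOcc F) = 0) ∨
      ((∀ v : G.V, F.vmap v ≠ w) ∧ Multiset.count w (intOcc F) = 1)) ∧
    (∀ w : H.V, H.deg w = 3 →
      ∃ (e : G.E) (a : G.V),
        Multiset.count w (intOcc F) = 1 ∧ w ∈ (F.epath e).tail.map H.src ∧
        F.vmap a = w ∧ (∀ v : G.V, F.vmap v = w → v = a) ∧ ¬ G.Incid a e) := by
  exact ⟨(aux_main hf hG).deg2, (aux_main hf hG).deg3⟩
end

section
/- Let T : G →(f) H ←(f') G' be a sewing diagram (the canonical extension of a sewing morphism f), and let v_1 and v_2 be end vertices of two distinct edges of G', one a head vertex and the other a tail vertex, such that f'(v_1) and f'(v_2) are distinct vertices of H and either (a) f'(v_1) and f'(v_2) are both end vertices lying in distinct connected components of H, or (b) one of f'(v_1), f'(v_2) is an end vertex and the other is a degree-2 vertex of H of type (II) with respect to f lying in a different connected component of H. Let g'' : H → H'' be the map identifying f'(v_1) and f'(v_2) to a single vertex. Then H'' is a sewing graph and the composition g'' ∘ f : G → H'' is a sewing morphism. -/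
namespace SewingAux

lemma identMove_symm {G H : Digraph'} {F : PreMor G H} {a b : G.V}
    (h : IsIdentMove F a b) : IsIdentMove F b a := by
  obtain ⟨h1, h2, h3, h4, h5, h6⟩ := h
  refine ⟨h1, h2.symm, h3.symm, fun u v huv => (h4 u v huv).imp id ?_, h5, h6⟩
  intro hs; rw [hs, Set.pair_comm]

lemma reach_descend {V W : Type} (vmap : V → W) (a b : V)
    (S : SimpleGraph V) (S'' : SimpleGraph W)
    (hfib : ∀ u v, vmap u = vmap v → u = v ∨ (u = a ∧ v = b) ∨ (u = b ∧ v = a))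
    (hlift : ∀ x y, S''.Adj x y → ∃ u v, vmap u = x ∧ vmap v = y ∧ S.Adj u v)
    (hnab : ¬ S.Reachable a b) :
    ∀ x y, S''.Reachable x y → ∀ u v, vmap u = x → vmap v = y →
      S.Reachable u v ∨ (S.Reachable u a ∧ S.Reachable b v) ∨
        (S.Reachable u b ∧ S.Reachable a v) := by
  have Rfib : ∀ u v, vmap u = vmap v →
      S.Reachable u v ∨ (S.Reachable u a ∧ S.Reachable b v) ∨
        (S.Reachable u b ∧ S.Reachable a v) := by
    intro u v h
    rcases hfib u v h with h' | ⟨h1, h2⟩ | ⟨h1, h2⟩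
    · rw [h']; exact Or.inl (SimpleGraph.Reachable.refl v)
    · rw [h1, h2]
      exact Or.inr (Or.inl ⟨SimpleGraph.Reachable.refl a, SimpleGraph.Reachable.refl b⟩)
    · rw [h1, h2]
      exact Or.inr (Or.inr ⟨SimpleGraph.Reachable.refl b, SimpleGraph.Reachable.refl a⟩)
  have Rtrans : ∀ u v w,
      (S.Reachable u v ∨ (S.Reachable u a ∧ S.Reachable b v) ∨
        (S.Reachable u b ∧ S.Reachable a v)) →
      (S.Reachable v w ∨ (S.Reachable v a ∧ S.Reachable b w) ∨
        (S.Reachable v b ∧ S.Reachable a w)) →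
      S.Reachable u w ∨ (S.Reachable u a ∧ S.Reachable b w) ∨
        (S.Reachable u b ∧ S.Reachable a w) := by
    rintro u v w (h1 | ⟨h1, h1'⟩ | ⟨h1, h1'⟩) (h2 | ⟨h2, h2'⟩ | ⟨h2, h2'⟩)
    · exact Or.inl (h1.trans h2)
    · exact Or.inr (Or.inl ⟨h1.trans h2, h2'⟩)
    · exact Or.inr (Or.inr ⟨h1.trans h2, h2'⟩)
    · exact Or.inr (Or.inl ⟨h1, h1'.trans h2⟩)
    · exact absurd (h1'.trans h2).symm hnab
    · exact Or.inl (h1.trans h2')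
    · exact Or.inr (Or.inr ⟨h1, h1'.trans h2⟩)
    · exact Or.inl (h1.trans h2')
    · exact absurd (h1'.trans h2) hnab
  intro x y hxy
  obtain ⟨p⟩ := hxy
  induction p with
  | nil =>
    intro u v hu hv
    exact Rfib u v (hu.trans hv.symm)
  | cons hadj p ih =>
    intro u v hu hv
    obtain ⟨u₁, v₁, hu₁, hv₁, hA⟩ := hlift _ _ hadj
    exact Rtrans _ _ _ (Rfib u u₁ (hu.trans hu₁.symm))
      (Rtrans _ _ _ (Or.inl hA.reachable) (ih v₁ v hv₁ hv))

end SewingAux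

namespace SewingAux

lemma ident_sewing {H K : Digraph'} {F : PreMor H K} {a b : H.V}
    (hH : H.IsSewingGraph) (hmove : IsIdentMove F a b)
    (hsep : ¬ H.toSimple.Reachable a b)
    (hda : H.deg a = 1) (hdb : H.deg b ≤ 2)
    (hin : 1 ≤ H.indeg a + H.indeg b) (hout : 1 ≤ H.outdeg a + H.outdeg b) :
    K.IsSewingGraph := by
  obtain ⟨⟨hloop, hpar, hacyc⟩, hdeg3, hio⟩ := hH
  obtain ⟨hgm, hne_ab, hvab, hinj2, hsurj, hsingle⟩ := hmove
  choose φ hφ using hsingle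
  -- φ is a bijection
  have hocc : edgeOcc F = Multiset.map φ Finset.univ.val := by
    unfold edgeOcc
    refine (Multiset.bind_congr fun e _ => ?_).trans (Multiset.bind_singleton Finset.univ.val φ)
    rw [hφ e]; rfl
  have hmapφ : Multiset.map φ Finset.univ.val = Finset.univ.val := by
    rw [← hocc]; exact hgm.cover
  have hφinj : Function.Injective φ := by
    intro e1 e2 h
    have hn : (Multiset.map φ Finset.univ.val).Nodup := by
      rw [hmapφ]; exact Finset.univ.nodup
    exact Multiset.inj_on_of_nodup_map hn e1 (by simp) e2 (by simp) h
  have hφsurj : Function.Surjective φ := by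
    intro e''
    have : e'' ∈ Multiset.map φ Finset.univ.val := by rw [hmapφ]; simp
    obtain ⟨e, _, he⟩ := Multiset.mem_map.mp this
    exact ⟨e, he⟩
  have hsrc : ∀ e, K.src (φ e) = F.vmap (H.src e) := fun e =>
    hgm.head_src e (φ e) (by rw [hφ e]; rfl)
  have htgt : ∀ e, K.tgt (φ e) = F.vmap (H.tgt e) := fun e =>
    hgm.last_tgt e (φ e) (by rw [hφ e]; rfl)
  -- fibers of vmap
  have hfib : ∀ u v, F.vmap u = F.vmap v → u = v ∨ (u = a ∧ v = b) ∨ (u = b ∧ v = a) := by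
    intro u v h
    rcases hinj2 u v h with h' | h'
    · exact Or.inl h'
    · have hu : u = a ∨ u = b := by
        have : u ∈ ({a, b} : Set H.V) := h' ▸ (by simp : u ∈ ({u, v} : Set H.V))
        simpa using this
      have hv : v = a ∨ v = b := by
        have : v ∈ ({a, b} : Set H.V) := h' ▸ (by simp : v ∈ ({u, v} : Set H.V))
        simpa using this
      have hbm : b ∈ ({u, v} : Set H.V) := by rw [h']; simp
      have ham : a ∈ ({u, v} : Set H.V) := by rw [h']; simp
      rcases hu with rfl | rfl <;> rcases hv with rfl | rfl
      · simp only [Set.mem_insert_iff, Set.mem_singleton_iff, or_self] at hbm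
        exact absurd hbm.symm hne_ab
      · exact Or.inr (Or.inl ⟨rfl, rfl⟩)
      · exact Or.inr (Or.inr ⟨rfl, rfl⟩)
      · simp only [Set.mem_insert_iff, Set.mem_singleton_iff, or_self] at ham
        exact absurd ham hne_ab
  have hadj_of_edge : ∀ (e : H.E) (u v : H.V), H.src e = u → H.tgt e = v →
      H.toSimple.Adj u v := by
    intro e u v h1 h2
    refine ⟨?_, e, Or.inl ⟨h1, h2⟩⟩
    rintro rfl
    exact hloop e (h1.trans h2.symm)
  -- no loops in K
  have hKloop : ∀ e'' : K.E, K.src e'' ≠ K.tgt e'' := by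
    intro e'' h
    obtain ⟨e, rfl⟩ := hφsurj e''
    rw [hsrc, htgt] at h
    rcases hfib _ _ h with h' | ⟨h1, h2⟩ | ⟨h1, h2⟩
    · exact hloop e h'
    · exact hsep (hadj_of_edge e a b h1 h2).reachable
    · exact hsep ((hadj_of_edge e b a h1 h2).reachable).symm
  -- no parallel edges in K
  have pair_cases : ∀ x y z w : K.V, ({x, y} : Finset K.V) = {z, w} →
      (x = z ∧ y = w) ∨ (x = w ∧ y = z) := by
    intro x y z w h
    have : ({x, y} : Set K.V) = {z, w} := by
      have := congrArg (fun s : Finset K.V => (s : Set K.V)) h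
      simpa using this
    exact Set.pair_eq_pair_iff.mp this
  have hKpar : ∀ e₁'' e₂'' : K.E,
      ({K.src e₁'', K.tgt e₁''} : Finset K.V) = {K.src e₂'', K.tgt e₂''} → e₁'' = e₂'' := by
    intro e₁'' e₂'' h
    obtain ⟨e₁, rfl⟩ := hφsurj e₁''
    obtain ⟨e₂, rfl⟩ := hφsurj e₂''
    rw [hsrc, hsrc, htgt, htgt] at h
    suffices he : e₁ = e₂ by rw [he]
    have reach_st : ∀ e : H.E, H.toSimple.Reachable (H.src e) (H.tgt e) := fun e =>
      (hadj_of_edge e _ _ rfl rfl).reachable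
    rcases pair_cases _ _ _ _ h with ⟨h1, h2⟩ | ⟨h1, h2⟩
    · rcases hfib _ _ h1 with hs | ⟨hs1, hs2⟩ | ⟨hs1, hs2⟩
      · rcases hfib _ _ h2 with ht | ⟨ht1, ht2⟩ | ⟨ht1, ht2⟩
        · exact hpar e₁ e₂ (by rw [hs, ht])
        · exact absurd (by
            rw [← ht1, ← ht2]
            exact (reach_st e₁).symm.trans (by rw [hs]; exact reach_st e₂)) hsep
        · exact absurd (by
            rw [← ht2, ← ht1]
            exact (reach_st e₂).symm.trans (by rw [← hs]; exact reach_st e₁)) hsep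
      · rcases hfib _ _ h2 with ht | ⟨ht1, ht2⟩ | ⟨ht1, ht2⟩
        · exact absurd (by
            rw [← hs1, ← hs2]
            exact (reach_st e₁).trans (by rw [ht]; exact (reach_st e₂).symm)) hsep
        · exact absurd (hs1.trans ht1.symm) (hloop e₁)
        · exact absurd (by
            rw [← hs1, ← ht1]
            exact reach_st e₁) hsep
      · rcases hfib _ _ h2 with ht | ⟨ht1, ht2⟩ | ⟨ht1, ht2⟩
        · exact absurd (by
            rw [← hs2, ← hs1]
            exact (reach_st e₂).trans (by rw [← ht]; exact (reach_st e₁).symm)) hsep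
        · exact absurd (by
            rw [← ht1, ← hs1]
            exact (reach_st e₁).symm) hsep
        · exact absurd (hs1.trans ht1.symm) (hloop e₁)
    · rcases hfib _ _ h1 with hs | ⟨hs1, hs2⟩ | ⟨hs1, hs2⟩
      · rcases hfib _ _ h2 with ht | ⟨ht1, ht2⟩ | ⟨ht1, ht2⟩
        · exact hpar e₁ e₂ (by rw [hs, ht, Finset.pair_comm])
        · exact absurd (by
            rw [← ht1, ← ht2]
            exact (reach_st e₁).symm.trans (by rw [hs]; exact (reach_st e₂).symm)) hsep
        · exact absurd (by
            rw [← ht2, ← ht1]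
            exact (reach_st e₂).trans (by rw [← hs]; exact reach_st e₁)) hsep
      · rcases hfib _ _ h2 with ht | ⟨ht1, ht2⟩ | ⟨ht1, ht2⟩
        · exact absurd (by
            rw [← hs1, ← hs2]
            exact (reach_st e₁).trans (by rw [ht]; exact reach_st e₂)) hsep
        · exact absurd (hs1.trans ht1.symm) (hloop e₁)
        · exact absurd (by
            rw [← hs1, ← ht1]
            exact reach_st e₁) hsep
      · rcases hfib _ _ h2 with ht | ⟨ht1, ht2⟩ | ⟨ht1, ht2⟩
        · exact absurd (by
            rw [← hs2, ← hs1]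
            exact (reach_st e₂).symm.trans (by rw [← ht]; exact (reach_st e₁).symm)) hsep
        · exact absurd (by
            rw [← ht1, ← hs1]
            exact (reach_st e₁).symm) hsep
        · exact absurd (hs1.trans ht1.symm) (hloop e₁)
  -- acyclicity
  have key : ∀ (u0 v0 : H.V) (e : H.E), H.src e = u0 → H.tgt e = v0 →
      ¬ (K.toSimple \ SimpleGraph.fromEdgeSet {s(F.vmap u0, F.vmap v0)}).Reachable
        (F.vmap u0) (F.vmap v0) := by
    intro u0 v0 e h1 h2 hreach
    set S := H.toSimple \ SimpleGraph.fromEdgeSet {s(u0, v0)} with hS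
    have hSle : S ≤ H.toSimple := sdiff_le
    have hnab' : ¬ S.Reachable a b := fun h => hsep (h.mono hSle)
    have hlift : ∀ x y,
        (K.toSimple \ SimpleGraph.fromEdgeSet {s(F.vmap u0, F.vmap v0)}).Adj x y →
        ∃ u v, F.vmap u = x ∧ F.vmap v = y ∧ S.Adj u v := by
      intro x y hxy
      rw [SimpleGraph.sdiff_adj] at hxy
      obtain ⟨⟨hxny, e'', he⟩, hnot⟩ := hxy
      obtain ⟨e₁, rfl⟩ := hφsurj e''
      rw [hsrc, htgt] at he
      have hne01 : s(H.src e₁, H.tgt e₁) ≠ s(u0, v0) := by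
        intro hs
        have hfin : ({H.src e₁, H.tgt e₁} : Finset H.V) = {H.src e, H.tgt e} := by
          rw [h1, h2]
          rcases Sym2.eq_iff.mp hs with ⟨hA, hB⟩ | ⟨hA, hB⟩
          · rw [hA, hB]
          · rw [hA, hB, Finset.pair_comm]
        have he12 : e₁ = e := hpar _ _ hfin
        apply hnot
        rw [SimpleGraph.fromEdgeSet_adj]
        refine ⟨?_, hxny⟩
        have hxy' : s(x, y) = s(F.vmap (H.src e₁), F.vmap (H.tgt e₁)) := by
          rcases he with ⟨hA, hB⟩ | ⟨hA, hB⟩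
          · rw [hA, hB]
          · rw [← hA, ← hB, Sym2.eq_swap]
        rw [Set.mem_singleton_iff, hxy', he12, h1, h2]
      have hnS : ∀ u v : H.V, H.src e₁ = u → H.tgt e₁ = v → S.Adj u v := by
        intro u v hu hv
        rw [hS, SimpleGraph.sdiff_adj]
        refine ⟨hadj_of_edge e₁ u v hu hv, ?_⟩
        rw [SimpleGraph.fromEdgeSet_adj]
        rintro ⟨hmem, -⟩
        rw [Set.mem_singleton_iff, ← hu, ← hv] at hmem
        exact hne01 hmem
      rcases he with ⟨hA, hB⟩ | ⟨hA, hB⟩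
      · exact ⟨H.src e₁, H.tgt e₁, hA, hB, hnS _ _ rfl rfl⟩
      · exact ⟨H.tgt e₁, H.src e₁, hB, hA, (hnS _ _ rfl rfl).symm⟩
    have hdesc := reach_descend F.vmap a b S _ hfib hlift hnab' _ _ hreach u0 v0 rfl rfl
    have hAdj0 : H.toSimple.Adj u0 v0 := hadj_of_edge e u0 v0 h1 h2
    rcases hdesc with hR | ⟨h1', h2'⟩ | ⟨h1', h2'⟩
    · have hbridge := (SimpleGraph.isAcyclic_iff_forall_adj_isBridge.mp hacyc) hAdj0
      rw [SimpleGraph.isBridge_iff] at hbridge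
      exact hbridge hR
    · exact hsep ((h1'.mono hSle).symm.trans
        (hAdj0.reachable.trans (h2'.mono hSle).symm))
    · exact hsep (((h2'.mono hSle)).trans
        (hAdj0.reachable.symm.trans (h1'.mono hSle)))
  have hKacyc : K.toSimple.IsAcyclic := by
    rw [SimpleGraph.isAcyclic_iff_forall_adj_isBridge]
    intro x y hxy
    rw [SimpleGraph.isBridge_iff]
    intro hreach
    obtain ⟨hxny, e'', he⟩ := hxy
    obtain ⟨e, rfl⟩ := hφsurj e''
    rw [hsrc, htgt] at he
    rcases he with ⟨hA, hB⟩ | ⟨hA, hB⟩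
    · rw [← hA, ← hB] at hreach
      exact key _ _ e rfl rfl hreach
    · rw [← hA, ← hB, Sym2.eq_swap] at hreach
      exact key _ _ e rfl rfl hreach.symm
  -- degree computations
  have houtdeg : ∀ w, K.outdeg w =
      (Finset.univ.filter fun e => F.vmap (H.src e) = w).card := by
    intro w
    unfold Digraph'.outdeg
    rw [show (Finset.univ.filter fun e'' : K.E => K.src e'' = w) =
        Finset.image φ (Finset.univ.filter fun e => F.vmap (H.src e) = w) from ?_,
      Finset.card_image_of_injective _ hφinj]
    ext e''
    simp only [Finset.mem_filter, Finset.mem_univ, true_and, Finset.mem_image]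
    constructor
    · intro h
      obtain ⟨e, rfl⟩ := hφsurj e''
      exact ⟨e, by rw [← hsrc]; exact h, rfl⟩
    · rintro ⟨e, he, rfl⟩
      rw [hsrc]; exact he
  have hindeg : ∀ w, K.indeg w =
      (Finset.univ.filter fun e => F.vmap (H.tgt e) = w).card := by
    intro w
    unfold Digraph'.indeg
    rw [show (Finset.univ.filter fun e'' : K.E => K.tgt e'' = w) =
        Finset.image φ (Finset.univ.filter fun e => F.vmap (H.tgt e) = w) from ?_,
      Finset.card_image_of_injective _ hφinj]
    ext e''
    simp only [Finset.mem_filter, Finset.mem_univ, true_and, Finset.mem_image]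
    constructor
    · intro h
      obtain ⟨e, rfl⟩ := hφsurj e''
      exact ⟨e, by rw [← htgt]; exact h, rfl⟩
    · rintro ⟨e, he, rfl⟩
      rw [htgt]; exact he
  have split_c : ∀ sel : H.E → H.V,
      (Finset.univ.filter fun e => F.vmap (sel e) = F.vmap a).card =
      (Finset.univ.filter fun e => sel e = a).card +
      (Finset.univ.filter fun e => sel e = b).card := by
    intro sel
    rw [← Finset.card_union_of_disjoint]
    · congr 1
      ext e
      simp only [Finset.mem_filter, Finset.mem_univ, true_and, Finset.mem_union]
      constructor
      · intro h
        rcases hfib _ _ h with h' | ⟨h', hx⟩ | ⟨h', hx⟩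
        · exact Or.inl h'
        · exact Or.inl h'
        · exact Or.inr h'
      · rintro (h | h)
        · rw [h]
        · rw [h, ← hvab]
    · rw [Finset.disjoint_left]
      intro e h1 h2
      simp only [Finset.mem_filter, Finset.mem_univ, true_and] at h1 h2
      exact hne_ab (h1 ▸ h2 ▸ rfl : a = b)
  have hout_c : K.outdeg (F.vmap a) = H.outdeg a + H.outdeg b := by
    rw [houtdeg]; exact split_c H.src
  have hin_c : K.indeg (F.vmap a) = H.indeg a + H.indeg b := by
    rw [hindeg]; exact split_c H.tgt
  have hother : ∀ u, u ≠ a → u ≠ b →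
      K.outdeg (F.vmap u) = H.outdeg u ∧ K.indeg (F.vmap u) = H.indeg u := by
    intro u hua hub
    have hsel : ∀ sel : H.E → H.V,
        (Finset.univ.filter fun e => F.vmap (sel e) = F.vmap u) =
        (Finset.univ.filter fun e => sel e = u) := by
      intro sel
      ext e
      simp only [Finset.mem_filter, Finset.mem_univ, true_and]
      constructor
      · intro h
        rcases hfib _ _ h with h' | ⟨h', hx⟩ | ⟨h', hx⟩
        · exact h'
        · exact absurd hx hub
        · exact absurd hx hua
      · intro h; rw [h]
    constructor
    · rw [houtdeg, hsel H.src]; rfl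
    · rw [hindeg, hsel H.tgt]; rfl
  -- assemble
  refine ⟨⟨hKloop, hKpar, hKacyc⟩, ?_, ?_⟩
  · intro w
    obtain ⟨u, rfl⟩ := hsurj w
    by_cases hua : u = a
    · subst hua
      unfold Digraph'.deg at *
      rw [hout_c, hin_c]
      omega
    · by_cases hub : u = b
      · subst hub
        rw [← hvab]
        unfold Digraph'.deg at *
        rw [hout_c, hin_c]
        omega
      · obtain ⟨ho, hi⟩ := hother u hua hub
        unfold Digraph'.deg
        rw [ho, hi]
        exact hdeg3 u
  · intro w hw
    obtain ⟨u, rfl⟩ := hsurj w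
    by_cases hua : u = a
    · subst hua
      rw [hin_c, hout_c]
      omega
    · by_cases hub : u = b
      · subst hub
        rw [← hvab, hin_c, hout_c]
        omega
      · obtain ⟨ho, hi⟩ := hother u hua hub
        have hdw : 2 ≤ H.deg u := by
          unfold Digraph'.deg at hw ⊢
          rw [ho, hi] at hw
          exact hw
        obtain ⟨h1', h2'⟩ := hio u hdw
        rw [hi, ho]
        exact ⟨h1', h2'⟩

end SewingAux

/-- Let `T : G →(F) H ←(F') G'` be a sewing diagram, and let
`v₁`, `v₂` be end vertices of two distinct edges of `G'`, one a head vertex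
and the other a tail vertex, such that `F'` maps them to distinct vertices of
`H` and either (a) both images are end vertices lying in distinct connected
components of `H`, or (b) one image is an end vertex and the other is a
degree-2 vertex of type (II) with respect to `F` lying in a different
connected component of `H`.  If `F'' : H → H''` is the map identifying the
two image vertices, then `H''` is a sewing graph and `F'' ∘ F : G → H''` is a
sewing morphism. -/
theorem statement_4 (G H G' H'' : Digraph') (F : PreMor G H) (F' : PreMor G' H)
    (F'' : PreMor H H'')
    (hG : G.IsEdgeUnion) (hH : H.IsSewingGraph) (hf : IsSewingMor G H F)
    (hext : IsCanonicalExt G H G' F F')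
    (v₁ v₂ : G'.V)
    (hdiffedges : ∀ e : G'.E, ¬ (G'.Incid v₁ e ∧ G'.Incid v₂ e))
    (hht : (G'.IsHeadVert v₁ ∧ G'.IsTailVert v₂) ∨ (G'.IsTailVert v₁ ∧ G'.IsHeadVert v₂))
    (hne : F'.vmap v₁ ≠ F'.vmap v₂)
    (hsep : ¬ H.toSimple.Reachable (F'.vmap v₁) (F'.vmap v₂))
    (hcase : (H.IsEndVert (F'.vmap v₁) ∧ H.IsEndVert (F'.vmap v₂)) ∨
      (H.IsEndVert (F'.vmap v₁) ∧ IsTypeIIVert F (F'.vmap v₂)) ∨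
      (H.IsEndVert (F'.vmap v₂) ∧ IsTypeIIVert F (F'.vmap v₁)))
    (hmove : IsIdentMove F'' (F'.vmap v₁) (F'.vmap v₂)) :
    H''.IsSewingGraph ∧ IsSewingMor G H'' (F.comp F'') := by
  classical
  have hF'gm : IsGraphMor F' := hext.1
  have head_ex : ∀ v : G'.V, (∃ e, G'.tgt e = v) → ∃ eH : H.E, H.tgt eH = F'.vmap v := by
    rintro v ⟨e, rfl⟩
    have hnonempty := hF'gm.nonempty e
    exact ⟨(F'.epath e).getLast hnonempty,
      hF'gm.last_tgt e _ (List.getLast?_eq_getLast hnonempty)⟩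
  have tail_ex : ∀ v : G'.V, (∃ e, G'.src e = v) → ∃ eH : H.E, H.src eH = F'.vmap v := by
    rintro v ⟨e, rfl⟩
    have hnonempty := hF'gm.nonempty e
    exact ⟨(F'.epath e).head hnonempty, hF'gm.head_src e _ (List.head?_eq_head hnonempty)⟩
  have one_le_in : ∀ w : H.V, (∃ eH : H.E, H.tgt eH = w) → 1 ≤ H.indeg w := by
    rintro w ⟨eH, h⟩
    exact Finset.card_pos.mpr ⟨eH, Finset.mem_filter.mpr ⟨Finset.mem_univ _, h⟩⟩
  have one_le_out : ∀ w : H.V, (∃ eH : H.E, H.src eH = w) → 1 ≤ H.outdeg w := by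
    rintro w ⟨eH, h⟩
    exact Finset.card_pos.mpr ⟨eH, Finset.mem_filter.mpr ⟨Finset.mem_univ _, h⟩⟩
  rcases hcase with ⟨hEa, hEb⟩ | ⟨hEa, hT2⟩ | ⟨hEb, hT1⟩
  · have hdb2 : H.deg (F'.vmap v₂) ≤ 2 := le_trans (le_of_eq hEb) one_le_two
    rcases hht with ⟨h1, h2⟩ | ⟨h1, h2⟩
    · obtain ⟨eH, heH⟩ := head_ex v₁ h1.2
      obtain ⟨eT, heT⟩ := tail_ex v₂ h2.2
      have hK := SewingAux.ident_sewing hH hmove hsep hEa hdb2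
        (le_trans (one_le_in _ ⟨eH, heH⟩) (Nat.le_add_right _ _))
        (le_trans (one_le_out _ ⟨eT, heT⟩) (Nat.le_add_left _ _))
      exact ⟨hK, IsSewingMor.stepI hf hH _ _ hmove ⟨hEa, eH, heH⟩ ⟨hEb, eT, heT⟩ hsep hK⟩
    · obtain ⟨eT, heT⟩ := tail_ex v₁ h1.2
      obtain ⟨eH, heH⟩ := head_ex v₂ h2.2
      have hK := SewingAux.ident_sewing hH hmove hsep hEa hdb2
        (le_trans (one_le_in _ ⟨eH, heH⟩) (Nat.le_add_left _ _))
        (le_trans (one_le_out _ ⟨eT, heT⟩) (Nat.le_add_right _ _))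
      have hmove' := SewingAux.identMove_symm hmove
      exact ⟨hK, IsSewingMor.stepI hf hH _ _ hmove' ⟨hEb, eH, heH⟩ ⟨hEa, eT, heT⟩
        (fun h => hsep h.symm) hK⟩
  · obtain ⟨hdeg2, hnv, hcount⟩ := hT2
    have hio2 := hH.2.2 _ (le_of_eq hdeg2.symm)
    have hK := SewingAux.ident_sewing hH hmove hsep hEa (le_of_eq hdeg2)
      (le_trans hio2.1 (Nat.le_add_left _ _)) (le_trans hio2.2 (Nat.le_add_left _ _))
    exact ⟨hK, IsSewingMor.stepIII hf hH _ _ hmove hEa hdeg2 ⟨hnv, hcount⟩ hsep hK⟩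
  · obtain ⟨hdeg2, hnv, hcount⟩ := hT1
    have hio2 := hH.2.2 _ (le_of_eq hdeg2.symm)
    have hmove' := SewingAux.identMove_symm hmove
    have hsep' : ¬ H.toSimple.Reachable (F'.vmap v₂) (F'.vmap v₁) := fun h => hsep h.symm
    have hK := SewingAux.ident_sewing hH hmove' hsep' hEb (le_of_eq hdeg2)
      (le_trans hio2.1 (Nat.le_add_left _ _)) (le_trans hio2.2 (Nat.le_add_left _ _))
    exact ⟨hK, IsSewingMor.stepIII hf hH _ _ hmove' hEb hdeg2 ⟨hnv, hcount⟩ hsep' hK⟩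
end

section
/- Let T : G →(f) H ←(f') G' be a sewing diagram (the canonical extension of a sewing morphism f), and let p be an interior point of an edge of G' such that f'(p) is not a vertex of H. Let h'' : H → H'' be the map inserting a new vertex at the interior point f'(p) of an edge of H. Then H'' is a sewing graph and the composition h'' ∘ f : G → H'' is a sewing morphism. -/
private lemma reach_push {V W : Type*} {G : SimpleGraph V} {G' : SimpleGraph W} (f : V → W)
    (h : ∀ x y, G.Adj x y → f x = f y ∨ G'.Adj (f x) (f y)) {x y : V}
    (hr : G.Reachable x y) : G'.Reachable (f x) (f y) := by
  obtain ⟨p⟩ := hr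
  induction p with
  | nil => exact SimpleGraph.Reachable.refl _
  | @cons u v z hadj p ih =>
      rcases h _ _ hadj with he | he
      · rw [he]; exact ih
      · exact (he.reachable).trans ih

private lemma pair_eq_cases {α : Type*} [DecidableEq α] {a b c d : α}
    (h : ({a, b} : Finset α) = {c, d}) : (a = c ∧ b = d) ∨ (a = d ∧ b = c) := by
  rw [Finset.ext_iff] at h
  simp only [Finset.mem_insert, Finset.mem_singleton] at h
  have h1 := (h a).mp (Or.inl rfl)
  have h2 := (h b).mp (Or.inr rfl)
  have h3 := (h c).mpr (Or.inl rfl)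
  have h4 := (h d).mpr (Or.inr rfl)
  by_cases hac : a = c
  · subst hac
    rcases h2 with h2 | h2
    · subst h2
      rcases h4 with h4 | h4 <;> simp [h4]
    · exact Or.inl ⟨rfl, h2⟩
  · rcases h1 with h1 | h1
    · exact absurd h1 hac
    · subst h1
      rcases h3 with h3 | h3
      · exact absurd h3.symm hac
      · exact Or.inr ⟨rfl, h3.symm⟩

private lemma insert_sewing {H H'' : Digraph'} {F'' : PreMor H H''} {a : H.E}
    (hH : H.IsSewingGraph) (hmove : IsInsertMove F'' a) : H''.IsSewingGraph := by
  obtain ⟨hmor, hinj, hlen, hsingle, hsurj, hnotw⟩ := hmove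
  obtain ⟨⟨hloop, hpar, hacyc⟩, hdeg3, hdeg2⟩ := hH
  obtain ⟨a₁, a₂, hpa⟩ := List.length_eq_two.mp hlen
  set w : H''.V := H''.src a₂ with hw
  -- basic facts
  have hsrc1 : H''.src a₁ = F''.vmap (H.src a) := hmor.head_src a a₁ (by rw [hpa]; rfl)
  have htgt2 : H''.tgt a₂ = F''.vmap (H.tgt a) := hmor.last_tgt a a₂ (by rw [hpa]; rfl)
  have htgt1 : H''.tgt a₁ = w := by
    have h := hmor.chain a
    rw [hpa] at h
    exact (List.isChain_cons_cons.mp h).1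
  have hwnot : ∀ v : H.V, F''.vmap v ≠ w := by
    intro v hv
    apply hnotw v
    rw [hpa]
    simp [hv]
    exact hw
  have hvert : ∀ x : H''.V, (∃ v : H.V, F''.vmap v = x) ∨ x = w := by
    intro x
    rcases hsurj x with h | h
    · exact Or.inl h
    · rw [hpa] at h
      simp only [List.tail_cons, List.map_cons, List.map_nil, List.mem_singleton] at h
      exact Or.inr h
  have hNE : Nonempty H''.E := ⟨a₁⟩
  choose! φ hφ using hsingle
  -- counting facts from cover
  have hcount : ∀ x : H''.E,
      ∑ e : H.E, Multiset.count x (F''.epath e : Multiset H''.E) = 1 := by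
    intro x
    have h1 : Multiset.count x (edgeOcc F'') = 1 := by
      rw [hmor.cover]
      exact Multiset.count_eq_one_of_mem Finset.univ.nodup (Finset.mem_univ x)
    unfold edgeOcc at h1
    rw [Multiset.count_bind] at h1
    exact h1
  have hmemB : ∀ {x : H''.E} {e e' : H.E}, x ∈ F''.epath e → x ∈ F''.epath e' → e = e' := by
    intro x e e' h h'
    by_contra hne
    have hsum := hcount x
    have hle : ∑ i ∈ ({e, e'} : Finset H.E), Multiset.count x (F''.epath i : Multiset H''.E)
        ≤ ∑ i : H.E, Multiset.count x (F''.epath i : Multiset H''.E) :=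
      Finset.sum_le_sum_of_subset (Finset.subset_univ _)
    rw [Finset.sum_pair hne] at hle
    have c1 : 0 < Multiset.count x (F''.epath e : Multiset H''.E) :=
      Multiset.count_pos.mpr (Multiset.mem_coe.mpr h)
    have c2 : 0 < Multiset.count x (F''.epath e' : Multiset H''.E) :=
      Multiset.count_pos.mpr (Multiset.mem_coe.mpr h')
    omega
  have ha12 : a₁ ≠ a₂ := by
    intro h
    subst h
    have hsum := hcount a₁
    have hle : Multiset.count a₁ (F''.epath a : Multiset H''.E)
        ≤ ∑ i : H.E, Multiset.count a₁ (F''.epath i : Multiset H''.E) :=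
      Finset.single_le_sum
        (f := fun i => Multiset.count a₁ (F''.epath i : Multiset H''.E))
        (fun i _ => Nat.zero_le _) (Finset.mem_univ a)
    rw [hpa] at hle
    have h2 : Multiset.count a₁ ([a₁, a₁] : Multiset H''.E) = 2 := by
      simp [Multiset.count_cons]
    rw [h2] at hle
    omega
  have hexists : ∀ x : H''.E, ∃ e : H.E, x ∈ F''.epath e := by
    intro x
    by_contra hc
    push_neg at hc
    have h0 : ∑ e : H.E, Multiset.count x (F''.epath e : Multiset H''.E) = 0 :=
      Finset.sum_eq_zero fun e _ =>
        Multiset.count_eq_zero.mpr (fun hm => hc e (Multiset.mem_coe.mp hm))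
    rw [hcount x] at h0
    omega
  have hclass3 : ∀ x : H''.E, x = a₁ ∨ x = a₂ ∨ ∃ e : H.E, e ≠ a ∧ x = φ e := by
    intro x
    obtain ⟨e, he⟩ := hexists x
    by_cases hea : e = a
    · subst hea
      rw [hpa] at he
      simp only [List.mem_cons, List.mem_singleton, List.not_mem_nil, or_false] at he
      tauto
    · rw [hφ e hea] at he
      simp only [List.mem_singleton] at he
      exact Or.inr (Or.inr ⟨e, hea, he⟩)
  have hsrcφ : ∀ e : H.E, e ≠ a → H''.src (φ e) = F''.vmap (H.src e) := by
    intro e he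
    exact hmor.head_src e (φ e) (by rw [hφ e he]; rfl)
  have htgtφ : ∀ e : H.E, e ≠ a → H''.tgt (φ e) = F''.vmap (H.tgt e) := by
    intro e he
    exact hmor.last_tgt e (φ e) (by rw [hφ e he]; rfl)
  have hmemφ : ∀ e : H.E, e ≠ a → φ e ∈ F''.epath e := by
    intro e he; rw [hφ e he]; simp
  have hmema1 : a₁ ∈ F''.epath a := by rw [hpa]; simp
  have hmema2 : a₂ ∈ F''.epath a := by rw [hpa]; simp
  -- the edge maps
  set Φ : H.E → H''.E := fun e => if e = a then a₁ else φ e with hΦdef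
  set Φ' : H.E → H''.E := fun e => if e = a then a₂ else φ e with hΦ'def
  have hmemΦ : ∀ e : H.E, Φ e ∈ F''.epath e := by
    intro e
    by_cases he : e = a
    · subst he; simp only [hΦdef, if_pos rfl]; exact hmema1
    · simp only [hΦdef, if_neg he]; exact hmemφ e he
  have hmemΦ' : ∀ e : H.E, Φ' e ∈ F''.epath e := by
    intro e
    by_cases he : e = a
    · subst he; simp only [hΦ'def, if_pos rfl]; exact hmema2
    · simp only [hΦ'def, if_neg he]; exact hmemφ e he
  have hΦinj : ∀ {e e' : H.E}, Φ e = Φ e' → e = e' := by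
    intro e e' h
    exact hmemB (hmemΦ e) (by rw [h]; exact hmemΦ e')
  have hΦ'inj : ∀ {e e' : H.E}, Φ' e = Φ' e' → e = e' := by
    intro e e' h
    exact hmemB (hmemΦ' e) (by rw [h]; exact hmemΦ' e')
  have hsrcΦ : ∀ e : H.E, H''.src (Φ e) = F''.vmap (H.src e) := by
    intro e
    by_cases he : e = a
    · subst he; simp only [hΦdef, if_pos rfl]; exact hsrc1
    · simp only [hΦdef, if_neg he]; exact hsrcφ e he
  have htgtΦ' : ∀ e : H.E, H''.tgt (Φ' e) = F''.vmap (H.tgt e) := by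
    intro e
    by_cases he : e = a
    · subst he; simp only [hΦ'def, if_pos rfl]; exact htgt2
    · simp only [hΦ'def, if_neg he]; exact htgtφ e he
  have hΦne2 : ∀ e : H.E, Φ e ≠ a₂ := by
    intro e h
    have he : e = a := hmemB (hmemΦ e) (by rw [h]; exact hmema2)
    subst he
    simp only [hΦdef, if_pos rfl] at h
    exact ha12 h
  have hΦ'ne1 : ∀ e : H.E, Φ' e ≠ a₁ := by
    intro e h
    have he : e = a := hmemB (hmemΦ' e) (by rw [h]; exact hmema1)
    subst he
    simp only [hΦ'def, if_pos rfl] at h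
    exact ha12 h.symm
  -- every edge is a₂ or Φ e ; every edge is a₁ or Φ' e
  have hclassΦ : ∀ x : H''.E, x = a₂ ∨ ∃ e : H.E, x = Φ e := by
    intro x
    rcases hclass3 x with rfl | rfl | ⟨e, he, rfl⟩
    · exact Or.inr ⟨a, by simp [hΦdef]⟩
    · exact Or.inl rfl
    · exact Or.inr ⟨e, by simp [hΦdef, if_neg he]⟩
  have hclassΦ' : ∀ x : H''.E, x = a₁ ∨ ∃ e : H.E, x = Φ' e := by
    intro x
    rcases hclass3 x with rfl | rfl | ⟨e, he, rfl⟩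
    · exact Or.inl rfl
    · exact Or.inr ⟨a, by simp [hΦ'def]⟩
    · exact Or.inr ⟨e, by simp [hΦ'def, if_neg he]⟩
  -- degree computations
  have filter_src_w : (Finset.univ.filter fun x : H''.E => H''.src x = w) = {a₂} := by
    ext x
    simp only [Finset.mem_filter, Finset.mem_univ, true_and, Finset.mem_singleton]
    constructor
    · intro hx
      rcases hclassΦ x with rfl | ⟨e, rfl⟩
      · rfl
      · rw [hsrcΦ e] at hx
        exact absurd hx (hwnot _)
    · rintro rfl
      exact hw.symm
  have filter_tgt_w : (Finset.univ.filter fun x : H''.E => H''.tgt x = w) = {a₁} := by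
    ext x
    simp only [Finset.mem_filter, Finset.mem_univ, true_and, Finset.mem_singleton]
    constructor
    · intro hx
      rcases hclassΦ' x with rfl | ⟨e, rfl⟩
      · rfl
      · rw [htgtΦ' e] at hx
        exact absurd hx (hwnot _)
    · rintro rfl; exact htgt1
  have houtw : H''.outdeg w = 1 := by
    rw [Digraph'.outdeg, filter_src_w, Finset.card_singleton]
  have hindw : H''.indeg w = 1 := by
    rw [Digraph'.indeg, filter_tgt_w, Finset.card_singleton]
  have houtv : ∀ v : H.V, H''.outdeg (F''.vmap v) = H.outdeg v := by
    intro v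
    refine (Finset.card_bij (fun e _ => Φ e) ?_ ?_ ?_).symm
    · intro e he
      simp only [Finset.mem_filter, Finset.mem_univ, true_and] at he ⊢
      rw [hsrcΦ, he]
    · intro e₁ _ e₂ _ h
      exact hΦinj h
    · intro x hx
      simp only [Finset.mem_filter, Finset.mem_univ, true_and] at hx
      rcases hclassΦ x with rfl | ⟨e, rfl⟩
      · exact absurd (hx.symm.trans hw.symm) (hwnot v)
      · rw [hsrcΦ e] at hx
        exact ⟨e, by simp only [Finset.mem_filter, Finset.mem_univ, true_and]; exact hinj hx, rfl⟩
  have hindv : ∀ v : H.V, H''.indeg (F''.vmap v) = H.indeg v := by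
    intro v
    refine (Finset.card_bij (fun e _ => Φ' e) ?_ ?_ ?_).symm
    · intro e he
      simp only [Finset.mem_filter, Finset.mem_univ, true_and] at he ⊢
      rw [htgtΦ', he]
    · intro e₁ _ e₂ _ h
      exact hΦ'inj h
    · intro x hx
      simp only [Finset.mem_filter, Finset.mem_univ, true_and] at hx
      rcases hclassΦ' x with rfl | ⟨e, rfl⟩
      · rw [htgt1] at hx
        exact absurd hx.symm (hwnot v)
      · rw [htgtΦ' e] at hx
        exact ⟨e, by simp only [Finset.mem_filter, Finset.mem_univ, true_and]; exact hinj hx, rfl⟩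
  -- no loops
  have hloop'' : ∀ x : H''.E, H''.src x ≠ H''.tgt x := by
    intro x
    rcases hclassΦ x with hxa | ⟨e, rfl⟩
    · rcases hclassΦ' x with h | ⟨e, he⟩
      · rw [hxa] at h
        exact absurd h ha12.symm
      · intro hc
        have h1 : H''.tgt x = F''.vmap (H.tgt e) := by
          rw [he]
          exact htgtΦ' e
        have h2 : H''.src x = w := by rw [hxa]
        exact hwnot (H.tgt e) (by rw [← h1, ← hc]; exact h2)
    · rcases hclassΦ' (Φ e) with h | ⟨e', he'⟩
      · intro hc
        rw [h, hsrc1, htgt1] at hc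
        exact hwnot _ hc
      · have hee : Φ e ∈ F''.epath e' := by rw [he']; exact hmemΦ' e'
        have : e = e' := hmemB (hmemΦ e) hee
        subst this
        rw [hsrcΦ, he', htgtΦ']
        intro hc
        exact hloop e (hinj hc)
  have hsrc2 : H''.src a₂ = w := hw.symm
  -- no parallel edges
  have hpar'' : ∀ x y : H''.E,
      ({H''.src x, H''.tgt x} : Finset H''.V) = {H''.src y, H''.tgt y} → x = y := by
    intro x y hxy
    rcases hclass3 x with rfl | rfl | ⟨e, hea, rfl⟩ <;>
      rcases hclass3 y with rfl | rfl | ⟨e', he'a, rfl⟩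
    · rfl
    · exfalso
      rw [hsrc1, htgt1, hsrc2, htgt2] at hxy
      rcases pair_eq_cases hxy with ⟨h1, -⟩ | ⟨h1, -⟩
      · exact hwnot _ h1
      · exact hloop a (hinj h1)
    · exfalso
      rw [hsrc1, htgt1, hsrcφ e' he'a, htgtφ e' he'a] at hxy
      rcases pair_eq_cases hxy with ⟨-, h2⟩ | ⟨-, h2⟩
      · exact hwnot _ h2.symm
      · exact hwnot _ h2.symm
    · exfalso
      rw [hsrc2, htgt2, hsrc1, htgt1] at hxy
      rcases pair_eq_cases hxy with ⟨h1, -⟩ | ⟨-, h2⟩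
      · exact hwnot _ h1.symm
      · exact hloop a (hinj h2.symm)
    · rfl
    · exfalso
      rw [hsrc2, htgt2, hsrcφ e' he'a, htgtφ e' he'a] at hxy
      rcases pair_eq_cases hxy with ⟨h1, -⟩ | ⟨h1, -⟩
      · exact hwnot _ h1.symm
      · exact hwnot _ h1.symm
    · exfalso
      rw [hsrcφ e hea, htgtφ e hea, hsrc1, htgt1] at hxy
      rcases pair_eq_cases hxy with ⟨-, h2⟩ | ⟨h1, -⟩
      · exact hwnot _ h2
      · exact hwnot _ h1
    · exfalso
      rw [hsrcφ e hea, htgtφ e hea, hsrc2, htgt2] at hxy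
      rcases pair_eq_cases hxy with ⟨h1, -⟩ | ⟨-, h2⟩
      · exact hwnot _ h1
      · exact hwnot _ h2
    · rw [hsrcφ e hea, htgtφ e hea, hsrcφ e' he'a, htgtφ e' he'a] at hxy
      rcases pair_eq_cases hxy with ⟨h1, h2⟩ | ⟨h1, h2⟩
      · have : e = e' := hpar e e' (by rw [hinj h1, hinj h2])
        rw [this]
      · have : e = e' := hpar e e'
          (by rw [hinj h1, hinj h2]; exact Finset.pair_comm _ _)
        rw [this]
  -- acyclicity
  have hAdjH : ∀ e : H.E, H.toSimple.Adj (H.src e) (H.tgt e) :=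
    fun e => ⟨hloop e, e, Or.inl ⟨rfl, rfl⟩⟩
  have hsym2 : ∀ e e' : H.E, s(H.src e, H.tgt e) = s(H.src e', H.tgt e') → e = e' := by
    intro e e' h
    rw [Sym2.eq_iff] at h
    rcases h with ⟨h1, h2⟩ | ⟨h1, h2⟩
    · exact hpar e e' (by rw [h1, h2])
    · exact hpar e e' (by rw [h1, h2]; exact Finset.pair_comm _ _)
  have hdelAdj : ∀ e eb : H.E, e ≠ eb →
      (H.toSimple \ SimpleGraph.fromEdgeSet {s(H.src eb, H.tgt eb)}).Adj (H.src e) (H.tgt e) := by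
    intro e eb hne
    rw [SimpleGraph.sdiff_adj]
    refine ⟨hAdjH e, ?_⟩
    rw [SimpleGraph.fromEdgeSet_adj]
    rintro ⟨h1, -⟩
    rw [Set.mem_singleton_iff] at h1
    exact hne (hsym2 _ _ h1)
  have hπ : ∀ z : H.V, ∃ π : H''.V → H.V, (∀ v, π (F''.vmap v) = v) ∧ π w = z := by
    intro z
    refine ⟨fun x => if h : ∃ v, F''.vmap v = x then h.choose else z, fun v => ?_, ?_⟩
    · have h : ∃ u, F''.vmap u = F''.vmap v := ⟨v, rfl⟩
      simp only [dif_pos h]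
      exact hinj h.choose_spec
    · have hne : ¬ ∃ v, F''.vmap v = w := by
        push_neg
        exact hwnot
      simp only [dif_neg hne]
  have push : ∀ (E : H''.E) (eb : H.E) (π : H''.V → H.V),
      (∀ E' : H''.E, E' ≠ E → π (H''.src E') = π (H''.tgt E') ∨
        (H.toSimple \ SimpleGraph.fromEdgeSet {s(H.src eb, H.tgt eb)}).Adj
          (π (H''.src E')) (π (H''.tgt E'))) →
      (H''.toSimple \ SimpleGraph.fromEdgeSet {s(H''.src E, H''.tgt E)}).Reachable
        (H''.src E) (H''.tgt E) →
      (H.toSimple \ SimpleGraph.fromEdgeSet {s(H.src eb, H.tgt eb)}).Reachable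
        (π (H''.src E)) (π (H''.tgt E)) := by
    intro E eb π hmain hreach
    refine reach_push π ?_ hreach
    intro x y hxy
    rw [SimpleGraph.sdiff_adj, SimpleGraph.fromEdgeSet_adj] at hxy
    obtain ⟨⟨hnexy, E', hE'⟩, hnd⟩ := hxy
    have hsne : s(x, y) ≠ s(H''.src E, H''.tgt E) :=
      fun hc => hnd ⟨Set.mem_singleton_iff.mpr hc, hnexy⟩
    have hE'ne : E' ≠ E := by
      rintro rfl
      rcases hE' with ⟨h1, h2⟩ | ⟨h1, h2⟩
      · exact hsne (by rw [← h1, ← h2])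
      · exact hsne (by rw [← h1, ← h2]; exact Sym2.eq_swap)
    rcases hE' with ⟨h1, h2⟩ | ⟨h1, h2⟩
    · rw [← h1, ← h2]
      exact hmain E' hE'ne
    · rw [← h1, ← h2]
      rcases hmain E' hE'ne with m | m
      · exact Or.inl m.symm
      · exact Or.inr m.symm
  have hbridge := SimpleGraph.isAcyclic_iff_forall_adj_isBridge.mp hacyc
  have hclaim : ∀ E : H''.E, H''.toSimple.IsBridge s(H''.src E, H''.tgt E) := by
    intro E
    rw [SimpleGraph.isBridge_iff]
    intro hreach
    rcases hclass3 E with rfl | rfl | ⟨e, hea, rfl⟩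
    · obtain ⟨π, hπ1, hπ2⟩ := hπ (H.tgt a)
      have hmain : ∀ E' : H''.E, E' ≠ E → π (H''.src E') = π (H''.tgt E') ∨
          (H.toSimple \ SimpleGraph.fromEdgeSet {s(H.src a, H.tgt a)}).Adj
            (π (H''.src E')) (π (H''.tgt E')) := by
        intro E' hne
        rcases hclass3 E' with rfl | rfl | ⟨e', he'a, rfl⟩
        · exact absurd rfl hne
        · left
          rw [hsrc2, hπ2, htgt2, hπ1]
        · right
          rw [hsrcφ e' he'a, htgtφ e' he'a, hπ1, hπ1]
          exact hdelAdj e' a he'a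
      have hc := push E a π hmain hreach
      rw [hsrc1, hπ1, htgt1, hπ2] at hc
      have hbr := hbridge (hAdjH a)
      rw [SimpleGraph.isBridge_iff] at hbr
      exact hbr hc
    · obtain ⟨π, hπ1, hπ2⟩ := hπ (H.src a)
      have hmain : ∀ E' : H''.E, E' ≠ E → π (H''.src E') = π (H''.tgt E') ∨
          (H.toSimple \ SimpleGraph.fromEdgeSet {s(H.src a, H.tgt a)}).Adj
            (π (H''.src E')) (π (H''.tgt E')) := by
        intro E' hne
        rcases hclass3 E' with rfl | rfl | ⟨e', he'a, rfl⟩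
        · left
          rw [hsrc1, hπ1, htgt1, hπ2]
        · exact absurd rfl hne
        · right
          rw [hsrcφ e' he'a, htgtφ e' he'a, hπ1, hπ1]
          exact hdelAdj e' a he'a
      have hc := push E a π hmain hreach
      rw [hsrc2, hπ2, htgt2, hπ1] at hc
      have hbr := hbridge (hAdjH a)
      rw [SimpleGraph.isBridge_iff] at hbr
      exact hbr hc
    · obtain ⟨π, hπ1, hπ2⟩ := hπ (H.src a)
      have hane : a ≠ e := fun h => hea h.symm
      have hmain : ∀ E' : H''.E, E' ≠ φ e → π (H''.src E') = π (H''.tgt E') ∨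
          (H.toSimple \ SimpleGraph.fromEdgeSet {s(H.src e, H.tgt e)}).Adj
            (π (H''.src E')) (π (H''.tgt E')) := by
        intro E' hne
        rcases hclass3 E' with rfl | rfl | ⟨e', he'a, rfl⟩
        · left
          rw [hsrc1, hπ1, htgt1, hπ2]
        · right
          rw [hsrc2, hπ2, htgt2, hπ1]
          exact hdelAdj a e hane
        · right
          have he'e : e' ≠ e := fun h => hne (by rw [h])
          rw [hsrcφ e' he'a, htgtφ e' he'a, hπ1, hπ1]
          exact hdelAdj e' e he'e
      have hc := push (φ e) e π hmain hreach
      rw [hsrcφ e hea, hπ1, htgtφ e hea, hπ1] at hc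
      have hbr := hbridge (hAdjH e)
      rw [SimpleGraph.isBridge_iff] at hbr
      exact hbr hc
  have hacyc'' : H''.toSimple.IsAcyclic := by
    rw [SimpleGraph.isAcyclic_iff_forall_adj_isBridge]
    intro x y hadj
    obtain ⟨hne, E, hE⟩ := hadj
    rcases hE with ⟨h1, h2⟩ | ⟨h1, h2⟩
    · rw [← h1, ← h2]
      exact hclaim E
    · rw [← h1, ← h2, Sym2.eq_swap]
      exact hclaim E
  -- assemble
  refine ⟨⟨hloop'', hpar'', hacyc''⟩, ?_, ?_⟩
  · intro x
    rcases hvert x with ⟨v, rfl⟩ | rfl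
    · show H''.outdeg (F''.vmap v) + H''.indeg (F''.vmap v) ≤ 3
      rw [houtv, hindv]
      exact hdeg3 v
    · show H''.outdeg w + H''.indeg w ≤ 3
      rw [houtw, hindw]
      omega
  · intro x h2
    rcases hvert x with ⟨v, rfl⟩ | rfl
    · have h2' : 2 ≤ H.deg v := by
        have : H''.outdeg (F''.vmap v) + H''.indeg (F''.vmap v) = H.deg v := by
          rw [houtv, hindv]; rfl
        exact this ▸ h2
      obtain ⟨hi, ho⟩ := hdeg2 v h2'
      constructor
      · rw [hindv]; exact hi
      · rw [houtv]; exact ho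
    · rw [hindw, houtw]
      exact ⟨le_refl 1, le_refl 1⟩

/-- Let `T : G →(F) H ←(F') G'` be a sewing diagram and let
`p` be an interior point of an edge `e'` of `G'` whose image `F'(p)` is not a
vertex of `H`, i.e. it is an interior point of one of the edges `a` of `H`
traversed by `e'`.  If `F'' : H → H''` is the map inserting a new vertex at
this interior point of `a`, then `H''` is a sewing graph and
`F'' ∘ F : G → H''` is a sewing morphism. -/
theorem statement_5 (G H G' H'' : Digraph') (F : PreMor G H) (F' : PreMor G' H)
    (F'' : PreMor H H'')
    (hG : G.IsEdgeUnion) (hH : H.IsSewingGraph) (hf : IsSewingMor G H F)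
    (hext : IsCanonicalExt G H G' F F')
    (e' : G'.E) (a : H.E) (ha : a ∈ F'.epath e')
    (hmove : IsInsertMove F'' a) :
    H''.IsSewingGraph ∧ IsSewingMor G H'' (F.comp F'') := by
  have hsg := insert_sewing hH hmove
  exact ⟨hsg, IsSewingMor.stepII hf hH a hmove hsg⟩
end

section
/- Let M be a topological space, let m ≥ 1, and let K_1, ..., K_{2m} ⊆ M be subsets, with the cyclic convention K_{2m+1} = K_1. Let Y = {(t, γ) ∈ [0,1]^m × C([0,1], M)^m : γ_k(0) ∈ K_{2k−1} and γ_k(1) ∈ K_{2k} for all 1 ≤ k ≤ m, and γ_1(t_1) = γ_2(t_2) = ... = γ_m(t_m)}. With the cyclic conventions γ_{m+1} = γ_1 and t_{m+1} = t_1, define J(t, γ) = (η_1, ..., η_m), where η_k(s) = γ_{k+1}(2·t_{k+1}·s) for 0 ≤ s ≤ 1/2 and η_k(s) = γ_k(t_k + (2s − 1)·(1 − t_k)) for 1/2 ≤ s ≤ 1. Then each η_k is a well-defined continuous path, the map J : Y → C([0,1], M)^m is continuous, and J takes values in the product P_{K_3,K_2} × P_{K_5,K_4} × ... × P_{K_{2k+1},K_{2k}}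 × ... × P_{K_1,K_{2m}}. -/
/-- For a topological space `M` and subsets `A B ⊆ M`, the space
`P_{A,B} = {γ ∈ C([0,1], M) : γ(0) ∈ A, γ(1) ∈ B}` with the compact-open
topology. -/
abbrev PathSp (M : Type) [TopologicalSpace M] (A B : Set M) : Type :=
  {γ : C(unitInterval, M) // γ 0 ∈ A ∧ γ 1 ∈ B}

/-- Evaluation of a path at a real time (via the retraction of `ℝ` onto
`[0,1]`; for `r ∈ [0,1]` this is just `γ(r)`). -/
noncomputable def ev {M : Type} [TopologicalSpace M]
    (γ : C(unitInterval, M)) (r : ℝ) : M :=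
  γ (Set.projIcc 0 1 zero_le_one r)

/-- The cyclic successor on `Fin m`. -/
def cSucc {m : ℕ} (k : Fin m) : Fin m := ⟨((k : ℕ) + 1) % m, Nat.mod_lt _ k.pos⟩

/-- The simultaneous saddle recombination: the `k`-th outgoing string
`η_k` traverses `γ_{k+1}` up to time `t_{k+1}` (on `[0,1/2]`) and then `γ_k`
from time `t_k` on (on `[1/2,1]`):
`η_k(s) = γ_{k+1}(2 t_{k+1} s)` for `s ≤ 1/2` and
`η_k(s) = γ_k(t_k + (2s-1)(1-t_k))` for `s ≥ 1/2` (indices cyclic). -/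
noncomputable def saddleMix {M : Type} [TopologicalSpace M] {m : ℕ}
    (t : Fin m → unitInterval) (γ : Fin m → C(unitInterval, M))
    (k : Fin m) (s : unitInterval) : M :=
  if (s : ℝ) ≤ 1 / 2 then ev (γ (cSucc k)) (2 * (t (cSucc k) : ℝ) * (s : ℝ))
  else ev (γ k) ((t k : ℝ) + (2 * (s : ℝ) - 1) * (1 - (t k : ℝ)))

lemma ev_coe {M : Type} [TopologicalSpace M] (γ : C(unitInterval, M))
    (x : unitInterval) : ev γ (x : ℝ) = γ x := by
  simp [ev, Set.projIcc_val]

lemma continuous_ev {M : Type} [TopologicalSpace M] :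
    Continuous fun q : C(unitInterval, M) × ℝ => ev q.1 q.2 :=
 by
  unfold ev
  exact ContinuousEval.continuous_eval.comp
    (continuous_fst.prodMk ((continuous_projIcc (h := zero_le_one)).comp continuous_snd))


/-- For subsets `K_1, …, K_{2m} ⊆ M` (cyclically
`K_{2m+1} = K_1`; here `K_j` is `K ⟨j-1⟩`), on the space
`Y = {(t, γ) : γ_k(0) ∈ K_{2k-1}, γ_k(1) ∈ K_{2k}, γ_1(t_1) = ⋯ = γ_m(t_m)}`
the recombination `J(t, γ) = (η_1, …, η_m)` with
`η_k(s) = γ_{k+1}(2 t_{k+1} s)` for `s ≤ 1/2` and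
`η_k(s) = γ_k(t_k + (2s-1)(1-t_k))` for `s ≥ 1/2` consists of well-defined
continuous paths, is continuous, and takes values in
`P_{K_3,K_2} × P_{K_5,K_4} × ⋯ × P_{K_1,K_{2m}}`. -/
theorem statement_13 (M : Type) [TopologicalSpace M] (m : ℕ) (hm : 1 ≤ m)
    (K : Fin (2 * m) → Set M) :
    ∃ Jmap : {p : (Fin m → unitInterval) × (Fin m → C(unitInterval, M)) //
        (∀ k : Fin m,
          p.2 k 0 ∈ K ⟨2 * (k : ℕ), by have := k.isLt; omega⟩ ∧
          p.2 k 1 ∈ K ⟨2 * (k : ℕ) + 1, by have := k.isLt; omega⟩) ∧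
        ∀ k k' : Fin m, p.2 k (p.1 k) = p.2 k' (p.1 k')} →
      (Fin m → C(unitInterval, M)),
      (∀ y (k : Fin m) (s : unitInterval),
        Jmap y k s = saddleMix y.val.1 y.val.2 k s) ∧
      Continuous Jmap ∧
      (∀ y (k : Fin m),
        Jmap y k 0 ∈ K ⟨(2 * ((k : ℕ) + 1)) % (2 * m), Nat.mod_lt _ (by omega)⟩ ∧
        Jmap y k 1 ∈ K ⟨2 * (k : ℕ) + 1, by have := k.isLt; omega⟩) := by
  set Y := {p : (Fin m → unitInterval) × (Fin m → C(unitInterval, M)) //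
        (∀ k : Fin m,
          p.2 k 0 ∈ K ⟨2 * (k : ℕ), by have := k.isLt; omega⟩ ∧
          p.2 k 1 ∈ K ⟨2 * (k : ℕ) + 1, by have := k.isLt; omega⟩) ∧
        ∀ k k' : Fin m, p.2 k (p.1 k) = p.2 k' (p.1 k')} with hY
  have hF : ∀ k : Fin m, Continuous fun p : Y × unitInterval =>
      saddleMix p.1.val.1 p.1.val.2 k p.2 := by
    intro k
    unfold saddleMix
    apply Continuous.if_le
    · have h : Continuous fun p : Y × unitInterval =>
          (p.1.val.2 (cSucc k), 2 * (p.1.val.1 (cSucc k) : ℝ) * (p.2 : ℝ)) := by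
          have hv : Continuous fun p : Y × unitInterval => p.1.val :=
            continuous_subtype_val.comp continuous_fst
          exact ((continuous_apply (cSucc k)).comp (continuous_snd.comp hv)).prodMk
            ((continuous_const.mul (continuous_subtype_val.comp
              ((continuous_apply (cSucc k)).comp (continuous_fst.comp hv)))).mul
              (continuous_subtype_val.comp continuous_snd))
      exact continuous_ev.comp h
    · have h : Continuous fun p : Y × unitInterval =>
          (p.1.val.2 k, (p.1.val.1 k : ℝ) + (2 * (p.2 : ℝ) - 1) * (1 - (p.1.val.1 k : ℝ))) := by
        have hv : Continuous fun p : Y × unitInterval => p.1.val :=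
          continuous_subtype_val.comp continuous_fst
        have ht : Continuous fun p : Y × unitInterval => (p.1.val.1 k : ℝ) :=
          continuous_subtype_val.comp ((continuous_apply k).comp (continuous_fst.comp hv))
        exact ((continuous_apply k).comp (continuous_snd.comp hv)).prodMk
          (ht.add (((continuous_const.mul (continuous_subtype_val.comp continuous_snd)).sub
            continuous_const).mul (continuous_const.sub ht)))
      exact continuous_ev.comp h
    · fun_prop
    · fun_prop
    · rintro ⟨y, s⟩ hs
      dsimp only at hs ⊢
      rw [hs]
      have h1 : 2 * (y.val.1 (cSucc k) : ℝ) * (1/2 : ℝ) = (y.val.1 (cSucc k) : ℝ) := by ring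
      have h2 : (y.val.1 k : ℝ) + (2 * (1/2 : ℝ) - 1) * (1 - (y.val.1 k : ℝ))
          = (y.val.1 k : ℝ) := by ring
      rw [h1, h2, ev_coe, ev_coe]
      exact y.2.2 (cSucc k) k
  refine ⟨fun y k => (ContinuousMap.mk _ (hF k)).curry y, fun y k s => rfl, ?_, ?_⟩
  · exact continuous_pi fun k => (ContinuousMap.mk _ (hF k)).curry.continuous
  · intro y k
    constructor
    · show saddleMix y.val.1 y.val.2 k 0 ∈ _
      have h0 : ((0 : unitInterval) : ℝ) = 0 := rfl
      rw [saddleMix, if_pos (by rw [h0]; norm_num)]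
      have : 2 * (y.val.1 (cSucc k) : ℝ) * ((0 : unitInterval) : ℝ)
          = ((0 : unitInterval) : ℝ) := by rw [h0]; ring
      rw [this, ev_coe]
      have := (y.2.1 (cSucc k)).1
      convert this using 2
      simp only [cSucc]
      ext
      simp [Nat.mul_mod_mul_left]
    · show saddleMix y.val.1 y.val.2 k 1 ∈ _
      have h1 : ((1 : unitInterval) : ℝ) = 1 := rfl
      rw [saddleMix, if_neg (by rw [h1]; norm_num)]
      have : (y.val.1 k : ℝ) + (2 * ((1 : unitInterval) : ℝ) - 1) * (1 - (y.val.1 k : ℝ))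
          = ((1 : unitInterval) : ℝ) := by rw [h1]; ring
      rw [this, ev_coe]
      exact (y.2.1 k).2
end

section
/- Let M be a topological space, m ≥ 1, and K_1, ..., K_{2m} ⊆ M subsets, with the cyclic convention K_{2m+1} = K_1. Let Y = {(t, γ) ∈ [0,1]^m × C([0,1], M)^m : γ_k(0) ∈ K_{2k−1} and γ_k(1) ∈ K_{2k} for all 1 ≤ k ≤ m, and γ_1(t_1) = ... = γ_m(t_m)}, and let J(t, γ) = (η_1, ..., η_m) be the recombination map, where (with γ_{m+1} = γ_1, t_{m+1} = t_1) η_k(s) = γ_{k+1}(2·t_{k+1}·s) for 0 ≤ s ≤ 1/2 and η_k(s) = γ_k(t_k + (2s − 1)·(1 − t_k)) for 1/2 ≤ s ≤ 1. Let ε = (ε_1, ..., ε_m) ∈ {0,1}^m and 1 ≤ k ≤ m satisfy ε_k = 1 and ε_{k+1} = 0 (with ε_{m+1} = ε_1). Then for every (ε, γ) ∈ Y, the common value x = γ_1(ε_1) = ... = γ_m(ε_m) lies in K_ε := ∩_{j=1}^m K_{2j−1+ε_j}, and the k-th output η_k of J(ε, γ) is the constant path c_x; in particular x ∈ K_{2k}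 ∩ K_{2k+1}. -/
/-- Let `ε ∈ {0,1}^m` and `1 ≤ k ≤ m` with `ε_k = 1` and
`ε_{k+1} = 0` (cyclically).  For every `(ε, γ) ∈ Y` (i.e. with interaction
parameter the corner `t = ε` of the cube), the common interaction value
`x = γ_1(ε_1) = ⋯ = γ_m(ε_m)` lies in `K_ε = ∩_j K_{2j-1+ε_j}`, and the
`k`-th output `η_k` of the recombination `J(ε, γ)` is the constant path
`c_x`; in particular `x ∈ K_{2k} ∩ K_{2k+1}`.  (Here `K_j` is `K ⟨j-1⟩`.) -/
theorem statement_14 (M : Type) [TopologicalSpace M] (m : ℕ) (hm : 1 ≤ m)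
    (K : Fin (2 * m) → Set M)
    (ε : Fin m → ℕ) (hε01 : ∀ j, ε j ≤ 1) (k : Fin m)
    (hεk : ε k = 1) (hεk1 : ε (cSucc k) = 0)
    (y : {p : (Fin m → unitInterval) × (Fin m → C(unitInterval, M)) //
        (∀ k : Fin m,
          p.2 k 0 ∈ K ⟨2 * (k : ℕ), by have := k.isLt; omega⟩ ∧
          p.2 k 1 ∈ K ⟨2 * (k : ℕ) + 1, by have := k.isLt; omega⟩) ∧
        ∀ k k' : Fin m, p.2 k (p.1 k) = p.2 k' (p.1 k')})
    (hy : y.val.1 = fun j => if ε j = 1 then (1 : unitInterval) else 0)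
    (x : M) (hx : x = y.val.2 k (y.val.1 k)) :
    (∀ j : Fin m, y.val.2 j (y.val.1 j) = x) ∧
    (∀ j : Fin m,
      x ∈ K ⟨2 * (j : ℕ) + ε j, by have := j.isLt; have := hε01 j; omega⟩) ∧
    (∀ s : unitInterval, saddleMix y.val.1 y.val.2 k s = x) ∧
    x ∈ K ⟨2 * (k : ℕ) + 1, by have := k.isLt; omega⟩ ∧
    x ∈ K ⟨(2 * ((k : ℕ) + 1)) % (2 * m), Nat.mod_lt _ (by omega)⟩ := by

  obtain ⟨p, hends, hcom⟩ := y
  simp only at hy hx ⊢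
  have hcommon : ∀ j : Fin m, p.2 j (p.1 j) = x := fun j => by
    rw [hx]; exact hcom j k
  refine ⟨hcommon, ?_, ?_, ?_, ?_⟩
  · intro j
    rcases Nat.le_one_iff_eq_zero_or_eq_one.mp (hε01 j) with h0 | h1
    · have ht : p.1 j = 0 := by rw [hy]; simp [h0]
      have := (hends j).1
      rw [← ht, hcommon j] at this
      convert this using 2
      simp [Fin.ext_iff, h0]
    · have ht : p.1 j = 1 := by rw [hy]; simp [h1]
      have := (hends j).2
      rw [← ht, hcommon j] at this
      convert this using 2
      simp [Fin.ext_iff, h1]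
  · intro s
    have htk : p.1 k = 1 := by rw [hy]; simp [hεk]
    have htk1 : p.1 (cSucc k) = 0 := by rw [hy]; simp [hεk1]
    unfold saddleMix ev
    split
    · rw [htk1]
      have : (2 : ℝ) * ((0 : unitInterval) : ℝ) * (s : ℝ) = 0 := by
        simp
      rw [this]
      have : Set.projIcc (0:ℝ) 1 zero_le_one 0 = 0 := by
        simp [Set.projIcc]
      rw [this, ← htk1]
      rw [hcommon (cSucc k)]
    · rw [htk]
      have : ((1 : unitInterval) : ℝ) + (2 * (s : ℝ) - 1) * (1 - ((1 : unitInterval) : ℝ)) = 1 := by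
        simp
      rw [this]
      have : Set.projIcc (0:ℝ) 1 zero_le_one 1 = 1 := by
        simp [Set.projIcc]
      rw [this, ← htk, hcommon k]
  · have ht : p.1 k = 1 := by rw [hy]; simp [hεk]
    have := (hends k).2
    rwa [← ht, hcommon k] at this
  · have ht : p.1 (cSucc k) = 0 := by rw [hy]; simp [hεk1]
    have := (hends (cSucc k)).1
    rw [← ht, hcommon (cSucc k)] at this
    convert this using 2
    simp only [Fin.ext_iff, cSucc]
    exact Nat.mul_mod_mul_left 2 _ m
end

section
/- Let M be a topological space and J, K ⊆ M subsets. Let A = {(γ, η) ∈ C([0,1], M)^2 : γ(0) = γ(1) = η(0), η(0) ∈ J, η(1) ∈ K} and B = {(γ, η) ∈ C([0,1], M)^2 : γ(0) = γ(1) = η(1), η(0) ∈ J, η(1) ∈ K}. Define F_0 : A → P_{J,K} by F_0(γ, η) = γ ∗ η (the concatenation traversing γ on [0,1/2] and η on [1/2,1]) and F_1 : B → P_{J,K} by F_1(γ, η) = η ∗ γ (traversing η on [0,1/2] and γ on [1/2,1]). Define h : A → B by h(γ, η) = (η̄ ∗ γ ∗ η, η), where η̄ ∗ γ ∗ η traverses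 the reverse of η, then γ, then η, each on one third of [0,1] (a loop at η(1)). Then h is continuous, h is a homotopy equivalence with homotopy inverse (λ, η) ↦ (η ∗ λ ∗ η̄, η), and F_1 ∘ h is homotopic to F_0 as maps from A to P_{J,K}. -/
namespace S15
variable {M : Type} [TopologicalSpace M]

lemma ev_le (γ : C(unitInterval,M)) {r : ℝ} (h : r ≤ 0) : ev γ r = γ 0 := by
  unfold ev; rw [Set.projIcc_of_le_left _ h]; rfl

lemma ev_ge (γ : C(unitInterval,M)) {r : ℝ} (h : 1 ≤ r) : ev γ r = γ 1 := by
  unfold ev; rw [Set.projIcc_of_right_le _ h]; rfl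

lemma ev_mem (γ : C(unitInterval,M)) {r : ℝ} (h0 : 0 ≤ r) (h1 : r ≤ 1) :
    ev γ r = γ ⟨r, h0, h1⟩ := by
  unfold ev; rw [Set.projIcc_of_mem _ ⟨h0,h1⟩]

lemma ev_coe (γ : C(unitInterval,M)) (s : unitInterval) : ev γ (s:ℝ) = γ s := by
  rw [ev_mem γ s.2.1 s.2.2]

lemma continuous_ev {X : Type*} [TopologicalSpace X] {f : X → C(unitInterval,M)} {g : X → ℝ}
    (hf : Continuous f) (hg : Continuous g) : Continuous fun x => ev (f x) (g x) := by
  unfold ev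
  exact ContinuousEval.continuous_eval.comp
    (hf.prodMk ((continuous_projIcc).comp hg) :
      Continuous fun x => (f x, Set.projIcc 0 1 zero_le_one (g x)))

/-- master path for `A`-pairs: `η` backwards on `[-1,0]`, `γ` on `[0,1]`, `η` on `[1,2]`. -/
noncomputable def GA (p : C(unitInterval,M) × C(unitInterval,M)) (u : ℝ) : M :=
  if u ≤ 0 then ev p.2 (-u) else if u ≤ 1 then ev p.1 u else ev p.2 (u - 1)

/-- master path for `B`-pairs: `η` on `[-1,0]`, `λ` on `[0,1]`, `η` backwards on `[1,2]`. -/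
noncomputable def GB (q : C(unitInterval,M) × C(unitInterval,M)) (u : ℝ) : M :=
  if u ≤ 0 then ev q.2 (1 + u) else if u ≤ 1 then ev q.1 u else ev q.2 (2 - u)

/-- truncated 5-piece master for the left-inverse homotopy. -/
noncomputable def GAt (p : C(unitInterval,M) × C(unitInterval,M)) (t u : ℝ) : M :=
  if u ≤ -1 then ev p.2 ((u+2)*(1-t))
  else if u ≤ 0 then ev p.2 ((-u)*(1-t))
  else if u ≤ 1 then ev p.1 u
  else if u ≤ 2 then ev p.2 ((u-1)*(1-t))
  else ev p.2 ((3-u)*(1-t))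

/-- truncated 5-piece master for the right-inverse homotopy. -/
noncomputable def GBt (q : C(unitInterval,M) × C(unitInterval,M)) (t u : ℝ) : M :=
  if u ≤ -1 then ev q.2 (1-(u+2)*(1-t))
  else if u ≤ 0 then ev q.2 (1+u*(1-t))
  else if u ≤ 1 then ev q.1 u
  else if u ≤ 2 then ev q.2 (1-(u-1)*(1-t))
  else ev q.2 (1-(3-u)*(1-t))

noncomputable def l2 (s : ℝ) : ℝ := if s ≤ 1/3 then 3*s-2 else if s ≤ 2/3 then 9*s-4 else 3*s
noncomputable def lF (s : ℝ) : ℝ := if s ≤ 1/2 then -2*s else 6*s-4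

lemma continuous_l2 : Continuous l2 := by
  unfold l2
  apply Continuous.if_le _ _ continuous_id continuous_const
  · intro x hx; simp only [id_eq] at hx; subst hx; norm_num
  · fun_prop
  · apply Continuous.if_le (by fun_prop) (by fun_prop) continuous_id continuous_const
    intro x hx; simp only [id_eq] at hx; subst hx; norm_num

lemma continuous_lF : Continuous lF := by
  unfold lF
  apply Continuous.if_le (by fun_prop) (by fun_prop) continuous_id continuous_const
  intro x hx; simp only [id_eq] at hx; subst hx; norm_num

variable {X : Type} [TopologicalSpace X]

lemma continuous_GA {f : X → C(unitInterval,M) × C(unitInterval,M)} {g : X → ℝ}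
    (hf : Continuous f) (hg : Continuous g)
    (e0 : ∀ x, (f x).1 0 = (f x).2 0) (e1 : ∀ x, (f x).1 1 = (f x).2 0) :
    Continuous fun x => GA (f x) (g x) := by
  unfold GA
  apply Continuous.if_le _ _ hg continuous_const
  · intro x hx
    rw [hx, if_pos (by norm_num : (0:ℝ) ≤ 1), neg_zero, ev_le _ le_rfl, ev_le _ le_rfl]
    exact (e0 x).symm
  · exact continuous_ev (continuous_snd.comp hf) hg.neg
  · apply Continuous.if_le _ _ hg continuous_const
    · intro x hx
      rw [hx, ev_ge _ le_rfl, ev_le _ (by norm_num), e1 x]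
    · exact continuous_ev (continuous_fst.comp hf) hg
    · exact continuous_ev (continuous_snd.comp hf) (hg.sub continuous_const)

lemma continuous_GB {f : X → C(unitInterval,M) × C(unitInterval,M)} {g : X → ℝ}
    (hf : Continuous f) (hg : Continuous g)
    (e0 : ∀ x, (f x).1 0 = (f x).2 1) (e1 : ∀ x, (f x).1 1 = (f x).2 1) :
    Continuous fun x => GB (f x) (g x) := by
  unfold GB
  apply Continuous.if_le _ _ hg continuous_const
  · intro x hx
    rw [hx, if_pos (by norm_num : (0:ℝ) ≤ 1), add_zero, ev_ge _ le_rfl, ev_le _ le_rfl]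
    exact (e0 x).symm
  · exact continuous_ev (continuous_snd.comp hf) (continuous_const.add hg)
  · apply Continuous.if_le _ _ hg continuous_const
    · intro x hx
      rw [hx, ev_ge _ le_rfl, ev_ge _ (by norm_num), e1 x]
    · exact continuous_ev (continuous_fst.comp hf) hg
    · exact continuous_ev (continuous_snd.comp hf) (continuous_const.sub hg)

lemma continuous_GAt {f : X → C(unitInterval,M) × C(unitInterval,M)} {gt gu : X → ℝ}
    (hf : Continuous f) (hgt : Continuous gt) (hgu : Continuous gu)
    (e0 : ∀ x, (f x).1 0 = (f x).2 0) (e1 : ∀ x, (f x).1 1 = (f x).2 0) :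
    Continuous fun x => GAt (f x) (gt x) (gu x) := by
  unfold GAt
  apply Continuous.if_le _ _ hgu continuous_const
  · intro x hx
    rw [hx, if_pos (by norm_num : (-1:ℝ) ≤ 0)]
    congr 1; ring
  · exact continuous_ev (continuous_snd.comp hf) (by fun_prop)
  apply Continuous.if_le _ _ hgu continuous_const
  · intro x hx
    rw [hx, if_pos (by norm_num : (0:ℝ) ≤ 1), neg_zero, zero_mul, ev_le _ le_rfl,
      ev_le _ le_rfl]
    exact (e0 x).symm
  · exact continuous_ev (continuous_snd.comp hf) (by fun_prop)
  apply Continuous.if_le _ _ hgu continuous_const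
  · intro x hx
    rw [hx, if_pos (by norm_num : (1:ℝ) ≤ 2), ev_ge _ le_rfl]
    rw [show ((1:ℝ)-1)*(1-gt x) = 0 by ring, ev_le _ le_rfl]
    exact e1 x
  · exact continuous_ev (continuous_fst.comp hf) hgu
  apply Continuous.if_le _ _ hgu continuous_const
  · intro x hx
    rw [hx]; congr 1; ring
  · exact continuous_ev (continuous_snd.comp hf) (by fun_prop)
  · exact continuous_ev (continuous_snd.comp hf) (by fun_prop)

lemma continuous_GBt {f : X → C(unitInterval,M) × C(unitInterval,M)} {gt gu : X → ℝ}
    (hf : Continuous f) (hgt : Continuous gt) (hgu : Continuous gu)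
    (e0 : ∀ x, (f x).1 0 = (f x).2 1) (e1 : ∀ x, (f x).1 1 = (f x).2 1) :
    Continuous fun x => GBt (f x) (gt x) (gu x) := by
  unfold GBt
  apply Continuous.if_le _ _ hgu continuous_const
  · intro x hx
    rw [hx, if_pos (by norm_num : (-1:ℝ) ≤ 0)]
    congr 1; ring
  · exact continuous_ev (continuous_snd.comp hf) (by fun_prop)
  apply Continuous.if_le _ _ hgu continuous_const
  · intro x hx
    rw [hx, if_pos (by norm_num : (0:ℝ) ≤ 1), zero_mul, add_zero, ev_ge _ le_rfl,
      ev_le _ le_rfl]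
    exact (e0 x).symm
  · exact continuous_ev (continuous_snd.comp hf) (by fun_prop)
  apply Continuous.if_le _ _ hgu continuous_const
  · intro x hx
    rw [hx, if_pos (by norm_num : (1:ℝ) ≤ 2), ev_ge _ le_rfl]
    rw [show (1:ℝ)-((1:ℝ)-1)*(1-gt x) = 1 by ring, ev_ge _ le_rfl]
    exact e1 x
  · exact continuous_ev (continuous_fst.comp hf) hgu
  apply Continuous.if_le _ _ hgu continuous_const
  · intro x hx
    rw [hx]; congr 1; ring
  · exact continuous_ev (continuous_snd.comp hf) (by fun_prop)
  · exact continuous_ev (continuous_snd.comp hf) (by fun_prop)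

end S15
namespace S15
variable {M : Type} [TopologicalSpace M]

lemma coeI0 : ((0:unitInterval):ℝ) = 0 := rfl
lemma coeI1 : ((1:unitInterval):ℝ) = 1 := rfl

lemma GA_zero (p : C(unitInterval,M) × C(unitInterval,M)) : GA p 0 = p.2 0 := by
  unfold GA; rw [if_pos le_rfl, neg_zero, ev_le _ le_rfl]
lemma GA_two (p : C(unitInterval,M) × C(unitInterval,M)) : GA p 2 = p.2 1 := by
  unfold GA; rw [if_neg (by norm_num), if_neg (by norm_num), ev_ge _ (by norm_num)]
lemma GA_neg1 (p : C(unitInterval,M) × C(unitInterval,M)) : GA p (-1) = p.2 1 := by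
  unfold GA; rw [if_pos (by norm_num), ev_ge _ (by norm_num)]
lemma GB_neg1 (q : C(unitInterval,M) × C(unitInterval,M)) : GB q (-1) = q.2 0 := by
  unfold GB; rw [if_pos (by norm_num), show (1:ℝ) + (-1) = 0 by ring, ev_le _ le_rfl]
lemma GB_two (q : C(unitInterval,M) × C(unitInterval,M)) : GB q 2 = q.2 0 := by
  unfold GB; rw [if_neg (by norm_num), if_neg (by norm_num), show (2:ℝ) - 2 = 0 by ring,
    ev_le _ le_rfl]
lemma GAt_neg2 (p : C(unitInterval,M) × C(unitInterval,M)) (t : ℝ) : GAt p t (-2) = p.2 0 := by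
  unfold GAt
  rw [if_pos (by norm_num), show ((-2:ℝ)+2)*(1-t) = 0 by ring, ev_le _ le_rfl]
lemma GAt_three (p : C(unitInterval,M) × C(unitInterval,M)) (t : ℝ) : GAt p t 3 = p.2 0 := by
  unfold GAt
  rw [if_neg (by norm_num), if_neg (by norm_num), if_neg (by norm_num), if_neg (by norm_num),
    show ((3:ℝ)-3)*(1-t) = 0 by ring, ev_le _ le_rfl]
lemma GBt_neg2 (q : C(unitInterval,M) × C(unitInterval,M)) (t : ℝ) : GBt q t (-2) = q.2 1 := by
  unfold GBt
  rw [if_pos (by norm_num), show (1:ℝ)-((-2:ℝ)+2)*(1-t) = 1 by ring, ev_ge _ le_rfl]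
lemma GBt_three (q : C(unitInterval,M) × C(unitInterval,M)) (t : ℝ) : GBt q t 3 = q.2 1 := by
  unfold GBt
  rw [if_neg (by norm_num), if_neg (by norm_num), if_neg (by norm_num), if_neg (by norm_num),
    show (1:ℝ)-((3:ℝ)-3)*(1-t) = 1 by ring, ev_ge _ le_rfl]

end S15

namespace S15
variable (M : Type) [TopologicalSpace M] (J K : Set M)

abbrev AT := {p : C(unitInterval, M) × C(unitInterval, M) //
  p.1 0 = p.1 1 ∧ p.1 0 = p.2 0 ∧ p.2 0 ∈ J ∧ p.2 1 ∈ K}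
abbrev BT := {p : C(unitInterval, M) × C(unitInterval, M) //
  p.1 0 = p.1 1 ∧ p.1 0 = p.2 1 ∧ p.2 0 ∈ J ∧ p.2 1 ∈ K}

lemma ATe0 (p : AT M J K) : p.val.1 0 = p.val.2 0 := p.2.2.1
lemma ATe1 (p : AT M J K) : p.val.1 1 = p.val.2 0 := p.2.1.symm.trans p.2.2.1
lemma BTe0 (q : BT M J K) : q.val.1 0 = q.val.2 1 := q.2.2.1
lemma BTe1 (q : BT M J K) : q.val.1 1 = q.val.2 1 := q.2.1.symm.trans q.2.2.1

/-- `F₀(γ,η) = γ ∗ η`, via the master path. -/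
noncomputable def F0 : C(AT M J K, PathSp M J K) := by
  refine ⟨fun p => ⟨⟨fun s => GA p.val (2*(s:ℝ)), ?_⟩, ?_, ?_⟩, ?_⟩
  · exact continuous_GA continuous_const (by fun_prop)
      (fun _ => ATe0 M J K p) (fun _ => ATe1 M J K p)
  · show GA p.val (2*((0:unitInterval):ℝ)) ∈ J
    rw [coeI0, mul_zero, GA_zero]; exact p.2.2.2.1
  · show GA p.val (2*((1:unitInterval):ℝ)) ∈ K
    rw [coeI1, show (2:ℝ)*1 = 2 by ring, GA_two]; exact p.2.2.2.2
  · apply Continuous.subtype_mk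
    apply ContinuousMap.continuous_of_continuous_uncurry
    exact continuous_GA (by fun_prop) (by fun_prop)
      (fun x => ATe0 M J K x.1) (fun x => ATe1 M J K x.1)

/-- `F₁(λ,η) = η ∗ λ`, directly. -/
noncomputable def F1 : C(BT M J K, PathSp M J K) := by
  refine ⟨fun q => ⟨⟨fun s => if (s:ℝ) ≤ 1/2 then ev q.val.2 (2*(s:ℝ))
      else ev q.val.1 (2*(s:ℝ)-1), ?_⟩, ?_, ?_⟩, ?_⟩
  · apply Continuous.if_le _ _ (by fun_prop) continuous_const
    · intro s hs
      rw [hs]; norm_num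
      rw [ev_ge _ le_rfl, ev_le _ le_rfl]
      exact (BTe0 M J K q).symm
    · exact continuous_ev continuous_const (by fun_prop)
    · exact continuous_ev continuous_const (by fun_prop)
  · show (if ((0:unitInterval):ℝ) ≤ 1/2 then _ else _) ∈ J
    rw [if_pos (by rw [coeI0]; norm_num), coeI0, mul_zero, ev_le _ le_rfl]
    exact q.2.2.2.1
  · show (if ((1:unitInterval):ℝ) ≤ 1/2 then _ else _) ∈ K
    rw [if_neg (by rw [coeI1]; norm_num), coeI1, show (2:ℝ)*1-1 = 1 by ring, ev_ge _ le_rfl]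
    rw [BTe1 M J K q]; exact q.2.2.2.2
  · apply Continuous.subtype_mk
    apply ContinuousMap.continuous_of_continuous_uncurry
    apply Continuous.if_le _ _ (by fun_prop) continuous_const
    · intro x hx
      rw [hx]; norm_num
      rw [ev_ge _ le_rfl, ev_le _ le_rfl]
      exact (BTe0 M J K x.1).symm
    · exact continuous_ev (by fun_prop) (by fun_prop)
    · exact continuous_ev (by fun_prop) (by fun_prop)

/-- `h(γ,η) = (η̄ ∗ γ ∗ η, η)`. -/
noncomputable def hmap : C(AT M J K, BT M J K) := by
  refine ⟨fun p => ⟨(⟨fun s => GA p.val (3*(s:ℝ)-1), ?_⟩, p.val.2), ?_, ?_, p.2.2.2.1, p.2.2.2.2⟩, ?_⟩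
  · exact continuous_GA continuous_const (by fun_prop)
      (fun _ => ATe0 M J K p) (fun _ => ATe1 M J K p)
  · show GA p.val (3*((0:unitInterval):ℝ)-1) = GA p.val (3*((1:unitInterval):ℝ)-1)
    rw [coeI0, coeI1, show (3:ℝ)*0-1 = -1 by ring, show (3:ℝ)*1-1 = 2 by ring,
      GA_neg1, GA_two]
  · show GA p.val (3*((0:unitInterval):ℝ)-1) = p.val.2 1
    rw [coeI0, show (3:ℝ)*0-1 = -1 by ring, GA_neg1]
  · apply Continuous.subtype_mk
    apply Continuous.prodMk
    · apply ContinuousMap.continuous_of_continuous_uncurry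
      exact continuous_GA (by fun_prop) (by fun_prop)
        (fun x => ATe0 M J K x.1) (fun x => ATe1 M J K x.1)
    · fun_prop

/-- `h⁻¹(λ,η) = (η ∗ λ ∗ η̄, η)`. -/
noncomputable def hinv : C(BT M J K, AT M J K) := by
  refine ⟨fun q => ⟨(⟨fun s => GB q.val (3*(s:ℝ)-1), ?_⟩, q.val.2), ?_, ?_, q.2.2.2.1, q.2.2.2.2⟩, ?_⟩
  · exact continuous_GB continuous_const (by fun_prop)
      (fun _ => BTe0 M J K q) (fun _ => BTe1 M J K q)
  · show GB q.val (3*((0:unitInterval):ℝ)-1) = GB q.val (3*((1:unitInterval):ℝ)-1)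
    rw [coeI0, coeI1, show (3:ℝ)*0-1 = -1 by ring, show (3:ℝ)*1-1 = 2 by ring,
      GB_neg1, GB_two]
  · show GB q.val (3*((0:unitInterval):ℝ)-1) = q.val.2 0
    rw [coeI0, show (3:ℝ)*0-1 = -1 by ring, GB_neg1]
  · apply Continuous.subtype_mk
    apply Continuous.prodMk
    · apply ContinuousMap.continuous_of_continuous_uncurry
      exact continuous_GB (by fun_prop) (by fun_prop)
        (fun x => BTe0 M J K x.1) (fun x => BTe1 M J K x.1)
    · fun_prop

end S15

namespace S15
variable (M : Type) [TopologicalSpace M] (J K : Set M)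

lemma F0_spec (p : AT M J K) (s : unitInterval) :
    (F0 M J K p).val s =
      if (s : ℝ) ≤ 1 / 2 then ev p.val.1 (2 * (s : ℝ)) else ev p.val.2 (2 * (s : ℝ) - 1) := by
  have hs0 : (0:ℝ) ≤ s := s.2.1
  show GA p.val (2*(s:ℝ)) = _
  unfold GA
  split_ifs <;>
    first
      | rfl
      | (exfalso; linarith)
      | (rw [ev_le _ (by linarith), ev_le _ (by linarith)]; exact (ATe0 M J K p).symm)

lemma hmap_spec (p : AT M J K) (s : unitInterval) :
    (hmap M J K p).val.1 s =
      if (s : ℝ) ≤ 1 / 3 then ev p.val.2 (1 - 3 * (s : ℝ))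
      else if (s : ℝ) ≤ 2 / 3 then ev p.val.1 (3 * (s : ℝ) - 1)
      else ev p.val.2 (3 * (s : ℝ) - 2) := by
  show GA p.val (3*(s:ℝ)-1) = _
  unfold GA
  split_ifs <;> first | rfl | (exfalso; linarith) | (congr 1; ring)

lemma hinv_spec (q : BT M J K) (s : unitInterval) :
    (hinv M J K q).val.1 s =
      if (s : ℝ) ≤ 1 / 3 then ev q.val.2 (3 * (s : ℝ))
      else if (s : ℝ) ≤ 2 / 3 then ev q.val.1 (3 * (s : ℝ) - 1)
      else ev q.val.2 (3 - 3 * (s : ℝ)) := by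
  show GB q.val (3*(s:ℝ)-1) = _
  unfold GB
  split_ifs <;> first | rfl | (exfalso; linarith) | (congr 1; ring)

lemma evW (p : AT M J K) {r : ℝ} (h0 : 0 ≤ r) (h1 : r ≤ 1) :
    ev ((hmap M J K p).val.1) r = GA p.val (3*r-1) := by
  rw [ev_mem _ h0 h1]; rfl

lemma evV (q : BT M J K) {r : ℝ} (h0 : 0 ≤ r) (h1 : r ≤ 1) :
    ev ((hinv M J K q).val.1) r = GB q.val (3*r-1) := by
  rw [ev_mem _ h0 h1]; rfl

end S15

namespace S15
variable (M : Type) [TopologicalSpace M] (J K : Set M)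

/-- The homotopy `F₁ ∘ h ≃ F₀`, by straight-line interpolation of the
reparametrisation inside the master path `GA`. -/
noncomputable def FH : ((F1 M J K).comp (hmap M J K)).Homotopy (F0 M J K) := by
  refine ⟨⟨fun z => ⟨⟨fun s => GA z.2.val ((1-(z.1:ℝ))*lF (s:ℝ) + (z.1:ℝ)*(2*(s:ℝ))), ?_⟩,
      ?_, ?_⟩, ?_⟩, ?_, ?_⟩
  · refine continuous_GA continuous_const ?_ (fun _ => ATe0 M J K z.2) (fun _ => ATe1 M J K z.2)
    apply Continuous.add
    · exact Continuous.mul (by fun_prop) (continuous_lF.comp (by fun_prop))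
    · fun_prop
  · show GA z.2.val ((1-(z.1:ℝ))*lF ((0:unitInterval):ℝ) + (z.1:ℝ)*(2*((0:unitInterval):ℝ))) ∈ J
    rw [coeI0, show (1-(z.1:ℝ))*lF 0 + (z.1:ℝ)*(2*0) = 0 by norm_num [lF], GA_zero]
    exact z.2.2.2.2.1
  · show GA z.2.val ((1-(z.1:ℝ))*lF ((1:unitInterval):ℝ) + (z.1:ℝ)*(2*((1:unitInterval):ℝ))) ∈ K
    rw [coeI1, show (1-(z.1:ℝ))*lF 1 + (z.1:ℝ)*(2*1) = 2 by norm_num [lF]; ring, GA_two]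
    exact z.2.2.2.2.2
  · apply Continuous.subtype_mk
    apply ContinuousMap.continuous_of_continuous_uncurry
    show Continuous fun w : (unitInterval × AT M J K) × unitInterval =>
      GA w.1.2.val ((1-(w.1.1:ℝ))*lF (w.2:ℝ) + (w.1.1:ℝ)*(2*(w.2:ℝ)))
    refine continuous_GA (by fun_prop) ?_ (fun w => ATe0 M J K w.1.2) (fun w => ATe1 M J K w.1.2)
    apply Continuous.add
    · exact Continuous.mul (by fun_prop) (continuous_lF.comp (by fun_prop))
    · fun_prop
  · -- map_zero_left
    intro p
    apply Subtype.ext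
    apply ContinuousMap.ext
    intro s
    have hs0 : (0:ℝ) ≤ s := s.2.1
    have hs1 : (s:ℝ) ≤ 1 := s.2.2
    show GA p.val ((1-((0:unitInterval):ℝ))*lF (s:ℝ) + ((0:unitInterval):ℝ)*(2*(s:ℝ)))
      = ((F1 M J K).comp (hmap M J K) p).val s
    rw [coeI0, show (1-(0:ℝ))*lF (s:ℝ) + (0:ℝ)*(2*(s:ℝ)) = lF (s:ℝ) by ring]
    show GA p.val (lF (s:ℝ)) =
      if (s:ℝ) ≤ 1/2 then ev (hmap M J K p).val.2 (2*(s:ℝ))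
      else ev (hmap M J K p).val.1 (2*(s:ℝ)-1)
    unfold lF
    split_ifs with hd
    · show GA p.val (-2*(s:ℝ)) = ev p.val.2 (2*(s:ℝ))
      unfold GA
      rw [if_pos (by linarith)]
      congr 1; ring
    · rw [evW M J K p (by linarith) (by linarith)]
      unfold GA
      split_ifs <;> first | rfl | (exfalso; linarith) | (congr 1; ring)
  · -- map_one_left
    intro p
    apply Subtype.ext
    apply ContinuousMap.ext
    intro s
    show GA p.val ((1-((1:unitInterval):ℝ))*lF (s:ℝ) + ((1:unitInterval):ℝ)*(2*(s:ℝ)))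
      = (F0 M J K p).val s
    rw [coeI1]
    show _ = GA p.val (2*(s:ℝ))
    congr 1; ring

end S15

namespace S15
variable (M : Type) [TopologicalSpace M] (J K : Set M)

/-- Intermediate map for the left-inverse homotopy: `(γ,η) ↦ (γ reparametrised, η)`. -/
noncomputable def midA : C(AT M J K, AT M J K) := by
  refine ⟨fun p => ⟨(⟨fun s => ev p.val.1 (9*(s:ℝ)-4), ?_⟩, p.val.2), ?_, ?_,
    p.2.2.2.1, p.2.2.2.2⟩, ?_⟩
  · exact continuous_ev continuous_const (by fun_prop)
  · show ev p.val.1 (9*((0:unitInterval):ℝ)-4) = ev p.val.1 (9*((1:unitInterval):ℝ)-4)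
    rw [coeI0, coeI1, ev_le _ (by norm_num), ev_ge _ (by norm_num)]
    exact p.2.1
  · show ev p.val.1 (9*((0:unitInterval):ℝ)-4) = p.val.2 0
    rw [coeI0, ev_le _ (by norm_num)]
    exact ATe0 M J K p
  · apply Continuous.subtype_mk
    apply Continuous.prodMk _ (by fun_prop)
    apply ContinuousMap.continuous_of_continuous_uncurry
    show Continuous fun w : AT M J K × unitInterval => ev w.1.val.1 (9*(w.2:ℝ)-4)
    exact continuous_ev (by fun_prop) (by fun_prop)

/-- Intermediate map for the right-inverse homotopy. -/
noncomputable def midB : C(BT M J K, BT M J K) := by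
  refine ⟨fun q => ⟨(⟨fun s => ev q.val.1 (9*(s:ℝ)-4), ?_⟩, q.val.2), ?_, ?_,
    q.2.2.2.1, q.2.2.2.2⟩, ?_⟩
  · exact continuous_ev continuous_const (by fun_prop)
  · show ev q.val.1 (9*((0:unitInterval):ℝ)-4) = ev q.val.1 (9*((1:unitInterval):ℝ)-4)
    rw [coeI0, coeI1, ev_le _ (by norm_num), ev_ge _ (by norm_num)]
    exact q.2.1
  · show ev q.val.1 (9*((0:unitInterval):ℝ)-4) = q.val.2 1
    rw [coeI0, ev_le _ (by norm_num)]
    exact BTe0 M J K q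
  · apply Continuous.subtype_mk
    apply Continuous.prodMk _ (by fun_prop)
    apply ContinuousMap.continuous_of_continuous_uncurry
    show Continuous fun w : BT M J K × unitInterval => ev w.1.val.1 (9*(w.2:ℝ)-4)
    exact continuous_ev (by fun_prop) (by fun_prop)

/-- First stage of the left-inverse homotopy: shrink the two `η η̄` excursions. -/
noncomputable def LH1 : ((hinv M J K).comp (hmap M J K)).Homotopy (midA M J K) := by
  refine ⟨⟨fun z => ⟨(⟨fun s => GAt z.2.val (z.1:ℝ) (l2 (s:ℝ)), ?_⟩, z.2.val.2), ?_, ?_,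
    z.2.2.2.2.1, z.2.2.2.2.2⟩, ?_⟩, ?_, ?_⟩
  · exact continuous_GAt continuous_const continuous_const (continuous_l2.comp (by fun_prop))
      (fun _ => ATe0 M J K z.2) (fun _ => ATe1 M J K z.2)
  · show GAt z.2.val (z.1:ℝ) (l2 ((0:unitInterval):ℝ)) = GAt z.2.val (z.1:ℝ) (l2 ((1:unitInterval):ℝ))
    rw [coeI0, coeI1, show l2 0 = -2 by norm_num [l2], show l2 1 = 3 by norm_num [l2],
      GAt_neg2, GAt_three]
  · show GAt z.2.val (z.1:ℝ) (l2 ((0:unitInterval):ℝ)) = z.2.val.2 0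
    rw [coeI0, show l2 0 = -2 by norm_num [l2], GAt_neg2]
  · apply Continuous.subtype_mk
    apply Continuous.prodMk _ (by fun_prop)
    apply ContinuousMap.continuous_of_continuous_uncurry
    show Continuous fun w : (unitInterval × AT M J K) × unitInterval =>
      GAt w.1.2.val (w.1.1:ℝ) (l2 (w.2:ℝ))
    exact continuous_GAt (by fun_prop) (by fun_prop) (continuous_l2.comp (by fun_prop))
      (fun w => ATe0 M J K w.1.2) (fun w => ATe1 M J K w.1.2)
  · -- map_zero_left : GAt p 0 (l2 s) = GB (hmap p).val (3 s - 1)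
    intro p
    apply Subtype.ext
    apply Prod.ext
    · apply ContinuousMap.ext
      intro s
      have hs0 : (0:ℝ) ≤ s := s.2.1
      have hs1 : (s:ℝ) ≤ 1 := s.2.2
      show GAt p.val (((0:unitInterval)):ℝ) (l2 (s:ℝ)) = GB (hmap M J K p).val (3*(s:ℝ)-1)
      rw [coeI0]
      unfold l2
      rcases le_or_gt (s:ℝ) (1/3) with h1 | h1
      · rw [if_pos h1]
        unfold GAt GB
        rw [if_pos (by linarith : 3*(s:ℝ)-2 ≤ -1), if_pos (by linarith : 3*(s:ℝ)-1 ≤ 0)]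
        show _ = ev p.val.2 (1+(3*(s:ℝ)-1))
        congr 1; ring
      rcases le_or_gt (s:ℝ) (2/3) with h2 | h2
      · rw [if_neg (by linarith), if_pos h2]
        have hm := evW M J K p (r := 3*(s:ℝ)-1) (by linarith) (by linarith)
        unfold GB
        rw [if_neg (by linarith : ¬(3*(s:ℝ)-1 ≤ 0)), if_pos (by linarith : 3*(s:ℝ)-1 ≤ 1)]
        show GAt p.val 0 (9*(s:ℝ)-4) = ev (hmap M J K p).val.1 (3*(s:ℝ)-1)
        rw [hm]
        unfold GAt GA
        split_ifs <;> first | rfl | (exfalso; linarith) | (congr 1; ring)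
      · rw [if_neg (by linarith), if_neg (by linarith)]
        unfold GAt GB
        rw [if_neg (by linarith : ¬(3*(s:ℝ) ≤ -1)), if_neg (by linarith : ¬(3*(s:ℝ) ≤ 0)),
          if_neg (by linarith : ¬(3*(s:ℝ) ≤ 1)), if_neg (by linarith : ¬(3*(s:ℝ) ≤ 2)),
          if_neg (by linarith : ¬(3*(s:ℝ)-1 ≤ 0)), if_neg (by linarith : ¬(3*(s:ℝ)-1 ≤ 1))]
        show ev p.val.2 ((3-3*(s:ℝ))*(1-0)) = ev p.val.2 (2-(3*(s:ℝ)-1))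
        congr 1; ring
    · rfl
  · -- map_one_left : GAt p 1 (l2 s) = ev p.1 (9 s - 4)
    intro p
    apply Subtype.ext
    apply Prod.ext
    · apply ContinuousMap.ext
      intro s
      have hs0 : (0:ℝ) ≤ s := s.2.1
      have hs1 : (s:ℝ) ≤ 1 := s.2.2
      show GAt p.val (((1:unitInterval)):ℝ) (l2 (s:ℝ)) = ev p.val.1 (9*(s:ℝ)-4)
      rw [coeI1]
      unfold l2 GAt
      split_ifs <;>
        first
          | rfl
          | (exfalso; linarith)
          | (rw [ev_le _ (le_of_eq (by ring)), ev_le _ (by linarith)];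
             exact (ATe0 M J K p).symm)
          | (rw [ev_le _ (le_of_eq (by ring)), ev_ge _ (by linarith)];
             exact (ATe1 M J K p).symm)
    · rfl

/-- Second stage: straight-line reparametrisation homotopy to the identity. -/
noncomputable def LH2 : (midA M J K).Homotopy (ContinuousMap.id (AT M J K)) := by
  refine ⟨⟨fun z => ⟨(⟨fun s => ev z.2.val.1 ((1-(z.1:ℝ))*(9*(s:ℝ)-4)+(z.1:ℝ)*(s:ℝ)), ?_⟩,
      z.2.val.2), ?_, ?_, z.2.2.2.2.1, z.2.2.2.2.2⟩, ?_⟩, ?_, ?_⟩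
  · exact continuous_ev continuous_const (by fun_prop)
  · have ht0 : (0:ℝ) ≤ z.1 := z.1.2.1
    have ht1 : (z.1:ℝ) ≤ 1 := z.1.2.2
    show ev z.2.val.1 ((1-(z.1:ℝ))*(9*((0:unitInterval):ℝ)-4)+(z.1:ℝ)*((0:unitInterval):ℝ))
      = ev z.2.val.1 ((1-(z.1:ℝ))*(9*((1:unitInterval):ℝ)-4)+(z.1:ℝ)*((1:unitInterval):ℝ))
    rw [coeI0, coeI1, ev_le _ (by nlinarith), ev_ge _ (by nlinarith)]
    exact z.2.2.1
  · have ht0 : (0:ℝ) ≤ z.1 := z.1.2.1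
    have ht1 : (z.1:ℝ) ≤ 1 := z.1.2.2
    show ev z.2.val.1 ((1-(z.1:ℝ))*(9*((0:unitInterval):ℝ)-4)+(z.1:ℝ)*((0:unitInterval):ℝ))
      = z.2.val.2 0
    rw [coeI0, ev_le _ (by nlinarith)]
    exact ATe0 M J K z.2
  · apply Continuous.subtype_mk
    apply Continuous.prodMk _ (by fun_prop)
    apply ContinuousMap.continuous_of_continuous_uncurry
    show Continuous fun w : (unitInterval × AT M J K) × unitInterval =>
      ev w.1.2.val.1 ((1-(w.1.1:ℝ))*(9*(w.2:ℝ)-4)+(w.1.1:ℝ)*(w.2:ℝ))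
    exact continuous_ev (by fun_prop) (by fun_prop)
  · intro p
    apply Subtype.ext
    apply Prod.ext
    · apply ContinuousMap.ext
      intro s
      show ev p.val.1 ((1-((0:unitInterval):ℝ))*(9*(s:ℝ)-4)+((0:unitInterval):ℝ)*(s:ℝ))
        = ev p.val.1 (9*(s:ℝ)-4)
      rw [coeI0]; congr 1; ring
    · rfl
  · intro p
    apply Subtype.ext
    apply Prod.ext
    · apply ContinuousMap.ext
      intro s
      show ev p.val.1 ((1-((1:unitInterval):ℝ))*(9*(s:ℝ)-4)+((1:unitInterval):ℝ)*(s:ℝ))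
        = p.val.1 s
      rw [coeI1, show (1-(1:ℝ))*(9*(s:ℝ)-4)+(1:ℝ)*(s:ℝ) = (s:ℝ) by ring, ev_coe]
    · rfl

end S15

namespace S15
variable (M : Type) [TopologicalSpace M] (J K : Set M)

/-- First stage of the right-inverse homotopy. -/
noncomputable def RH1 : ((hmap M J K).comp (hinv M J K)).Homotopy (midB M J K) := by
  refine ⟨⟨fun z => ⟨(⟨fun s => GBt z.2.val (z.1:ℝ) (l2 (s:ℝ)), ?_⟩, z.2.val.2), ?_, ?_,
    z.2.2.2.2.1, z.2.2.2.2.2⟩, ?_⟩, ?_, ?_⟩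
  · exact continuous_GBt continuous_const continuous_const (continuous_l2.comp (by fun_prop))
      (fun _ => BTe0 M J K z.2) (fun _ => BTe1 M J K z.2)
  · show GBt z.2.val (z.1:ℝ) (l2 ((0:unitInterval):ℝ)) = GBt z.2.val (z.1:ℝ) (l2 ((1:unitInterval):ℝ))
    rw [coeI0, coeI1, show l2 0 = -2 by norm_num [l2], show l2 1 = 3 by norm_num [l2],
      GBt_neg2, GBt_three]
  · show GBt z.2.val (z.1:ℝ) (l2 ((0:unitInterval):ℝ)) = z.2.val.2 1
    rw [coeI0, show l2 0 = -2 by norm_num [l2], GBt_neg2]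
  · apply Continuous.subtype_mk
    apply Continuous.prodMk _ (by fun_prop)
    apply ContinuousMap.continuous_of_continuous_uncurry
    show Continuous fun w : (unitInterval × BT M J K) × unitInterval =>
      GBt w.1.2.val (w.1.1:ℝ) (l2 (w.2:ℝ))
    exact continuous_GBt (by fun_prop) (by fun_prop) (continuous_l2.comp (by fun_prop))
      (fun w => BTe0 M J K w.1.2) (fun w => BTe1 M J K w.1.2)
  · -- map_zero_left : GBt q 0 (l2 s) = GA (hinv q).val (3 s - 1)
    intro q
    apply Subtype.ext
    apply Prod.ext
    · apply ContinuousMap.ext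
      intro s
      have hs0 : (0:ℝ) ≤ s := s.2.1
      have hs1 : (s:ℝ) ≤ 1 := s.2.2
      show GBt q.val (((0:unitInterval)):ℝ) (l2 (s:ℝ)) = GA (hinv M J K q).val (3*(s:ℝ)-1)
      rw [coeI0]
      unfold l2
      rcases le_or_gt (s:ℝ) (1/3) with h1 | h1
      · rw [if_pos h1]
        unfold GBt GA
        rw [if_pos (by linarith : 3*(s:ℝ)-2 ≤ -1), if_pos (by linarith : 3*(s:ℝ)-1 ≤ 0)]
        show _ = ev q.val.2 (-(3*(s:ℝ)-1))
        congr 1; ring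
      rcases le_or_gt (s:ℝ) (2/3) with h2 | h2
      · rw [if_neg (by linarith), if_pos h2]
        have hm := evV M J K q (r := 3*(s:ℝ)-1) (by linarith) (by linarith)
        unfold GA
        rw [if_neg (by linarith : ¬(3*(s:ℝ)-1 ≤ 0)), if_pos (by linarith : 3*(s:ℝ)-1 ≤ 1)]
        show GBt q.val 0 (9*(s:ℝ)-4) = ev (hinv M J K q).val.1 (3*(s:ℝ)-1)
        rw [hm]
        unfold GBt GB
        split_ifs <;> first | rfl | (exfalso; linarith) | (congr 1; ring)
      · rw [if_neg (by linarith), if_neg (by linarith)]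
        unfold GBt GA
        rw [if_neg (by linarith : ¬(3*(s:ℝ) ≤ -1)), if_neg (by linarith : ¬(3*(s:ℝ) ≤ 0)),
          if_neg (by linarith : ¬(3*(s:ℝ) ≤ 1)), if_neg (by linarith : ¬(3*(s:ℝ) ≤ 2)),
          if_neg (by linarith : ¬(3*(s:ℝ)-1 ≤ 0)), if_neg (by linarith : ¬(3*(s:ℝ)-1 ≤ 1))]
        show ev q.val.2 (1-(3-3*(s:ℝ))*(1-0)) = ev q.val.2 (3*(s:ℝ)-1-1)
        congr 1; ring
    · rfl
  · -- map_one_left : GBt q 1 (l2 s) = ev q.1 (9 s - 4)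
    intro q
    apply Subtype.ext
    apply Prod.ext
    · apply ContinuousMap.ext
      intro s
      have hs0 : (0:ℝ) ≤ s := s.2.1
      have hs1 : (s:ℝ) ≤ 1 := s.2.2
      show GBt q.val (((1:unitInterval)):ℝ) (l2 (s:ℝ)) = ev q.val.1 (9*(s:ℝ)-4)
      rw [coeI1]
      unfold l2 GBt
      split_ifs <;>
        first
          | rfl
          | (exfalso; linarith)
          | (rw [ev_ge _ (le_of_eq (by ring)), ev_le _ (by linarith)];
             exact (BTe0 M J K q).symm)
          | (rw [ev_ge _ (le_of_eq (by ring)), ev_ge _ (by linarith)];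
             exact (BTe1 M J K q).symm)
    · rfl

/-- Second stage of the right-inverse homotopy. -/
noncomputable def RH2 : (midB M J K).Homotopy (ContinuousMap.id (BT M J K)) := by
  refine ⟨⟨fun z => ⟨(⟨fun s => ev z.2.val.1 ((1-(z.1:ℝ))*(9*(s:ℝ)-4)+(z.1:ℝ)*(s:ℝ)), ?_⟩,
      z.2.val.2), ?_, ?_, z.2.2.2.2.1, z.2.2.2.2.2⟩, ?_⟩, ?_, ?_⟩
  · exact continuous_ev continuous_const (by fun_prop)
  · have ht0 : (0:ℝ) ≤ z.1 := z.1.2.1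
    have ht1 : (z.1:ℝ) ≤ 1 := z.1.2.2
    show ev z.2.val.1 ((1-(z.1:ℝ))*(9*((0:unitInterval):ℝ)-4)+(z.1:ℝ)*((0:unitInterval):ℝ))
      = ev z.2.val.1 ((1-(z.1:ℝ))*(9*((1:unitInterval):ℝ)-4)+(z.1:ℝ)*((1:unitInterval):ℝ))
    rw [coeI0, coeI1, ev_le _ (by nlinarith), ev_ge _ (by nlinarith)]
    exact z.2.2.1
  · have ht0 : (0:ℝ) ≤ z.1 := z.1.2.1
    have ht1 : (z.1:ℝ) ≤ 1 := z.1.2.2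
    show ev z.2.val.1 ((1-(z.1:ℝ))*(9*((0:unitInterval):ℝ)-4)+(z.1:ℝ)*((0:unitInterval):ℝ))
      = z.2.val.2 1
    rw [coeI0, ev_le _ (by nlinarith)]
    exact BTe0 M J K z.2
  · apply Continuous.subtype_mk
    apply Continuous.prodMk _ (by fun_prop)
    apply ContinuousMap.continuous_of_continuous_uncurry
    show Continuous fun w : (unitInterval × BT M J K) × unitInterval =>
      ev w.1.2.val.1 ((1-(w.1.1:ℝ))*(9*(w.2:ℝ)-4)+(w.1.1:ℝ)*(w.2:ℝ))
    exact continuous_ev (by fun_prop) (by fun_prop)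
  · intro q
    apply Subtype.ext
    apply Prod.ext
    · apply ContinuousMap.ext
      intro s
      show ev q.val.1 ((1-((0:unitInterval):ℝ))*(9*(s:ℝ)-4)+((0:unitInterval):ℝ)*(s:ℝ))
        = ev q.val.1 (9*(s:ℝ)-4)
      rw [coeI0]; congr 1; ring
    · rfl
  · intro q
    apply Subtype.ext
    apply Prod.ext
    · apply ContinuousMap.ext
      intro s
      show ev q.val.1 ((1-((1:unitInterval):ℝ))*(9*(s:ℝ)-4)+((1:unitInterval):ℝ)*(s:ℝ))
        = q.val.1 s
      rw [coeI1, show (1-(1:ℝ))*(9*(s:ℝ)-4)+(1:ℝ)*(s:ℝ) = (s:ℝ) by ring, ev_coe]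
    · rfl

/-- The homotopy equivalence `h`. -/
noncomputable def E : ContinuousMap.HomotopyEquiv (AT M J K) (BT M J K) where
  toFun := hmap M J K
  invFun := hinv M J K
  left_inv := ⟨(LH1 M J K).trans (LH2 M J K)⟩
  right_inv := ⟨(RH1 M J K).trans (RH2 M J K)⟩

end S15

/-- Let
`A = {(γ, η) : γ(0) = γ(1) = η(0), η(0) ∈ J, η(1) ∈ K}` and
`B = {(γ, η) : γ(0) = γ(1) = η(1), η(0) ∈ J, η(1) ∈ K}`, and let
`F₀(γ, η) = γ ∗ η : A → P_{J,K}` and `F₁(γ, η) = η ∗ γ : B → P_{J,K}` be the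
concatenations.  The map `h(γ, η) = (η̄ ∗ γ ∗ η, η) : A → B` is continuous,
it is a homotopy equivalence with homotopy inverse `(λ, η) ↦ (η ∗ λ ∗ η̄, η)`,
and `F₁ ∘ h` is homotopic to `F₀`.  (This is the space-level statement that
the left and the right `H_*(LM)`-module structures on `H_*(P_{J,K})`
coincide.) -/
theorem statement_15 (M : Type) [TopologicalSpace M] (J K : Set M) :
    ∃ (F₀ : C({p : C(unitInterval, M) × C(unitInterval, M) //
          p.1 0 = p.1 1 ∧ p.1 0 = p.2 0 ∧ p.2 0 ∈ J ∧ p.2 1 ∈ K}, PathSp M J K))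
      (F₁ : C({p : C(unitInterval, M) × C(unitInterval, M) //
          p.1 0 = p.1 1 ∧ p.1 0 = p.2 1 ∧ p.2 0 ∈ J ∧ p.2 1 ∈ K}, PathSp M J K))
      (E : ContinuousMap.HomotopyEquiv
        {p : C(unitInterval, M) × C(unitInterval, M) //
          p.1 0 = p.1 1 ∧ p.1 0 = p.2 0 ∧ p.2 0 ∈ J ∧ p.2 1 ∈ K}
        {p : C(unitInterval, M) × C(unitInterval, M) //
          p.1 0 = p.1 1 ∧ p.1 0 = p.2 1 ∧ p.2 0 ∈ J ∧ p.2 1 ∈ K}),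
      -- `F₀(γ, η) = γ ∗ η`
      (∀ p (s : unitInterval), (F₀ p).val s =
        if (s : ℝ) ≤ 1 / 2 then ev p.val.1 (2 * (s : ℝ))
        else ev p.val.2 (2 * (s : ℝ) - 1)) ∧
      -- `F₁(λ, η) = η ∗ λ`
      (∀ p (s : unitInterval), (F₁ p).val s =
        if (s : ℝ) ≤ 1 / 2 then ev p.val.2 (2 * (s : ℝ))
        else ev p.val.1 (2 * (s : ℝ) - 1)) ∧
      -- `h = E.toFun` is `(γ, η) ↦ (η̄ ∗ γ ∗ η, η)`
      (∀ p, (E.toFun p).val.2 = p.val.2) ∧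
      (∀ p (s : unitInterval), (E.toFun p).val.1 s =
        if (s : ℝ) ≤ 1 / 3 then ev p.val.2 (1 - 3 * (s : ℝ))
        else if (s : ℝ) ≤ 2 / 3 then ev p.val.1 (3 * (s : ℝ) - 1)
        else ev p.val.2 (3 * (s : ℝ) - 2)) ∧
      -- the homotopy inverse `E.invFun` is `(λ, η) ↦ (η ∗ λ ∗ η̄, η)`
      (∀ q, (E.invFun q).val.2 = q.val.2) ∧
      (∀ q (s : unitInterval), (E.invFun q).val.1 s =
        if (s : ℝ) ≤ 1 / 3 then ev q.val.2 (3 * (s : ℝ))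
        else if (s : ℝ) ≤ 2 / 3 then ev q.val.1 (3 * (s : ℝ) - 1)
        else ev q.val.2 (3 - 3 * (s : ℝ))) ∧
      -- `F₁ ∘ h` is homotopic to `F₀`
      Nonempty ((F₁.comp E.toFun).Homotopy F₀) := by
  refine ⟨S15.F0 M J K, S15.F1 M J K, S15.E M J K,
    S15.F0_spec M J K, fun _ _ => rfl, fun _ => rfl,
    S15.hmap_spec M J K, fun _ => rfl, S15.hinv_spec M J K, ⟨S15.FH M J K⟩⟩
end
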